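/- arXiv:1803.01587 — 7 statements merged into one kernel-verified Lean document; each statement's English description precedes it below -/
import Mathlib

section
/- Interval Newton method with parameter: Let r ≥ 1, let f : ℝ^k × ℝ^m → ℝ^m be of class C^r, let X ⊂ ℝ^k be a nonempty product of compact intervals and Y ⊂ ℝ^m a product of compact intervals with nonempty interior, and let y₀ ∈ int Y. Suppose 𝒜 is a compact convex set of linear maps ℝ^m → ℝ^m such that the partial derivative D_y f(x,y) belongs to 𝒜 for every (x,y) ∈ X × Y and every A ∈ 𝒜 is invertible. If the set N(y₀,X,Y) := { y₀ − A⁻¹ f(x,y₀) : A ∈ 𝒜, x ∈ X } is contained in the interior of Y, then there exists a C^r function q : X → Y such that f(x, q(x)) = 0 for every x ∈ X. -/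
open Set MeasureTheory Filter Topology

/-- Block-triangular continuous linear equivalence: given `L : U × E →L E` whose
restriction to the second factor is the invertible map `T`, the map
`(u, y) ↦ (u, L (u, y))` is a continuous linear equivalence. -/
def blockCLE {U E : Type*} [NormedAddCommGroup U] [NormedSpace ℝ U]
    [NormedAddCommGroup E] [NormedSpace ℝ E]
    (T : E ≃L[ℝ] E) (L : (U × E) →L[ℝ] E) (hT : ∀ v, L (0, v) = T v) :
    (U × E) ≃L[ℝ] (U × E) :=
  ContinuousLinearEquiv.equivOfInverse
    ((ContinuousLinearMap.fst ℝ U E).prod L)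
    ((ContinuousLinearMap.fst ℝ U E).prod
      ((T.symm : E →L[ℝ] E).comp
        ((ContinuousLinearMap.snd ℝ U E) -
          L.comp ((ContinuousLinearMap.fst ℝ U E).prod 0))))
    (fun p => by
      have h1 : L p - L (p.1, 0) = T p.2 := by
        rw [← hT p.2, ← map_sub]
        congr 1
        simp [Prod.ext_iff]
      simp only [ContinuousLinearMap.prod_apply, ContinuousLinearMap.coe_fst',
        ContinuousLinearMap.coe_comp', Function.comp_apply,
        ContinuousLinearMap.coe_sub', Pi.sub_apply, ContinuousLinearMap.coe_snd',
        ContinuousLinearMap.zero_apply]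
      rw [h1]
      simp [Prod.ext_iff])
    (fun p => by
      have h1 : ∀ u z, L (u, z) = L (u, 0) + T z := by
        intro u z
        rw [← hT z, ← map_add]
        congr 1
        simp [Prod.ext_iff]
      simp only [ContinuousLinearMap.prod_apply, ContinuousLinearMap.coe_fst',
        ContinuousLinearMap.coe_comp', Function.comp_apply,
        ContinuousLinearMap.coe_sub', Pi.sub_apply, ContinuousLinearMap.coe_snd',
        ContinuousLinearMap.zero_apply]
      rw [h1]
      simp [Prod.ext_iff])

@[simp] lemma blockCLE_coe {U E : Type*} [NormedAddCommGroup U] [NormedSpace ℝ U]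
    [NormedAddCommGroup E] [NormedSpace ℝ E]
    (T : E ≃L[ℝ] E) (L : (U × E) →L[ℝ] E) (hT : ∀ v, L (0, v) = T v) :
    (blockCLE T L hT : (U × E) →L[ℝ] (U × E)) =
      (ContinuousLinearMap.fst ℝ U E).prod L := rfl

open Set MeasureTheory Filter Topology

lemma mean_value_mem {m : ℕ} {r : ℕ∞} (hr : 1 ≤ r)
    (g : (Fin m → ℝ) → (Fin m → ℝ)) (hg : ContDiff ℝ r g)
    (𝒜 : Set ((Fin m → ℝ) →L[ℝ] (Fin m → ℝ)))
    (h𝒜conv : Convex ℝ 𝒜) (h𝒜cl : IsClosed 𝒜)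
    (Y : Set (Fin m → ℝ)) (hYconv : Convex ℝ Y)
    (hmem : ∀ y ∈ Y, fderiv ℝ g y ∈ 𝒜)
    {y₁ y₂ : Fin m → ℝ} (hy₁ : y₁ ∈ Y) (hy₂ : y₂ ∈ Y) :
    ∃ A ∈ 𝒜, g y₂ - g y₁ = A (y₂ - y₁) := by
  have hr' : (1 : WithTop ℕ∞) ≤ (r : WithTop ℕ∞) := by exact_mod_cast hr
  have hg1 : ContDiff ℝ 1 g := hg.of_le hr'
  have hgd : Differentiable ℝ g := hg1.differentiable one_ne_zero
  set v := y₂ - y₁ with hv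
  set c : ℝ → (Fin m → ℝ) := fun t => y₁ + t • v with hc
  have hcY : ∀ t ∈ Icc (0:ℝ) 1, c t ∈ Y := by
    intro t ht
    have := hYconv hy₁ hy₂ (by linarith [ht.2] : (0:ℝ) ≤ 1 - t) ht.1 (by ring)
    convert this using 1
    simp only [hc, hv]
    module
  have hcont : Continuous fun t => fderiv ℝ g (c t) :=
    (hg1.continuous_fderiv one_ne_zero).comp (by continuity)
  haveI : IsProbabilityMeasure (volume.restrict (Icc (0:ℝ) 1)) := ⟨by simp⟩
  set A : (Fin m → ℝ) →L[ℝ] (Fin m → ℝ) :=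
    ∫ t in Icc (0:ℝ) 1, fderiv ℝ g (c t) with hA
  have hInt : Integrable (fun t => fderiv ℝ g (c t)) (volume.restrict (Icc (0:ℝ) 1)) :=
    hcont.integrableOn_Icc
  have hAmem : A ∈ 𝒜 := by
    refine h𝒜conv.integral_mem h𝒜cl ?_ hInt
    filter_upwards [ae_restrict_mem measurableSet_Icc] with t ht
    exact hmem _ (hcY t ht)
  refine ⟨A, hAmem, ?_⟩
  -- FTC along the segment
  have hderiv : ∀ t ∈ Icc (0:ℝ) 1,
      HasDerivAt (fun s => g (c s)) ((fderiv ℝ g (c t)) v) t := by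
    intro t _
    have hc' : HasDerivAt c v t := by
      simpa [hc] using ((hasDerivAt_id t).smul_const v).const_add y₁
    exact (hgd (c t)).hasFDerivAt.comp_hasDerivAt t hc'
  have hInt2 : IntervalIntegrable (fun t => (fderiv ℝ g (c t)) v) volume 0 1 := by
    exact (hcont.clm_apply continuous_const).intervalIntegrable 0 1
  have hFTC : (∫ t in (0:ℝ)..1, (fderiv ℝ g (c t)) v) = g (c 1) - g (c 0) :=
    intervalIntegral.integral_eq_sub_of_hasDerivAt
      (fun t ht => hderiv t (by rwa [uIcc_of_le zero_le_one] at ht)) hInt2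
  have hc0 : c 0 = y₁ := by simp [hc]
  have hc1 : c 1 = y₂ := by simp [hc, hv]
  have hAv : A v = ∫ t in Icc (0:ℝ) 1, (fderiv ℝ g (c t)) v := by
    rw [hA]
    exact ContinuousLinearMap.integral_apply hInt v
  rw [hAv, ← hc0, ← hc1, ← hFTC, intervalIntegral.integral_of_le zero_le_one,
    integral_Icc_eq_integral_Ioc]

/-- **Interval Newton method with parameter.**
Let `f : ℝ^k × ℝ^m → ℝ^m` be `C^r` (`r ≥ 1`), `X` a nonempty product of compact
intervals, `Y` a product of compact intervals with nonempty interior and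
`y₀ ∈ int Y`.  If `𝒜` is a compact convex set of linear maps containing all the
partial derivatives `D_y f(x,y)` for `(x,y) ∈ X × Y`, every `A ∈ 𝒜` is invertible,
and the interval Newton operator `N(y₀,X,Y) = {y₀ - A⁻¹ f(x,y₀)}` is contained in
the interior of `Y`, then there is a `C^r` map `q : X → Y` with `f(x, q x) = 0`
for all `x ∈ X`. -/
theorem interval_newton_method_with_parameter
    (k m : ℕ) (r : ℕ∞) (hr : 1 ≤ r)
    (f : (Fin k → ℝ) × (Fin m → ℝ) → Fin m → ℝ)
    (hf : ContDiff ℝ r f)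
    (a b : Fin k → ℝ) (c d : Fin m → ℝ)
    (X : Set (Fin k → ℝ)) (Y : Set (Fin m → ℝ))
    (hX : X = univ.pi fun i => Icc (a i) (b i))
    (hY : Y = univ.pi fun j => Icc (c j) (d j))
    (hXne : X.Nonempty) (hYint : (interior Y).Nonempty)
    (y₀ : Fin m → ℝ) (hy₀ : y₀ ∈ interior Y)
    (𝒜 : Set ((Fin m → ℝ) →L[ℝ] (Fin m → ℝ)))
    (h𝒜comp : IsCompact 𝒜) (h𝒜conv : Convex ℝ 𝒜)
    (hmem : ∀ x ∈ X, ∀ y ∈ Y, fderiv ℝ (fun y' => f (x, y')) y ∈ 𝒜)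
    (hinv : ∀ A ∈ 𝒜, ∃ T : (Fin m → ℝ) ≃L[ℝ] (Fin m → ℝ),
      (T : (Fin m → ℝ) →L[ℝ] (Fin m → ℝ)) = A)
    (hN : ∀ x ∈ X, ∀ T : (Fin m → ℝ) ≃L[ℝ] (Fin m → ℝ),
      (T : (Fin m → ℝ) →L[ℝ] (Fin m → ℝ)) ∈ 𝒜 →
      y₀ - T.symm (f (x, y₀)) ∈ interior Y) :
    ∃ q : (Fin k → ℝ) → (Fin m → ℝ),
      ContDiffOn ℝ r q X ∧ ∀ x ∈ X, q x ∈ Y ∧ f (x, q x) = 0 := by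
  classical
  have hr' : (1 : WithTop ℕ∞) ≤ (r : WithTop ℕ∞) := by exact_mod_cast hr
  have h𝒜cl : IsClosed 𝒜 := h𝒜comp.isClosed
  have hYconv : Convex ℝ Y := by
    rw [hY]; exact convex_pi fun i _ => convex_Icc _ _
  have hYcomp : IsCompact Y := by
    rw [hY]; exact isCompact_univ_pi fun i => isCompact_Icc
  have hYicon : Convex ℝ (interior Y) := hYconv.interior
  have hy₀Y : y₀ ∈ Y := interior_subset hy₀
  have hgx : ∀ x : Fin k → ℝ, ContDiff ℝ r fun y => f (x, y) :=
    fun x => hf.comp (contDiff_prodMk_right x)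
  -- mean value principle
  have key : ∀ x ∈ X, ∀ y₁ ∈ Y, ∀ y₂ ∈ Y,
      ∃ A ∈ 𝒜, f (x, y₂) - f (x, y₁) = A (y₂ - y₁) := fun x hx y₁ h1 y₂ h2 =>
    mean_value_mem hr _ (hgx x) 𝒜 h𝒜conv h𝒜cl Y hYconv
      (fun y hy => hmem x hx y hy) h1 h2
  -- uniqueness of zeros
  have huniq : ∀ x ∈ X, ∀ y₁ ∈ Y, ∀ y₂ ∈ Y,
      f (x, y₁) = 0 → f (x, y₂) = 0 → y₁ = y₂ := by
    intro x hx y₁ h1 y₂ h2 hz1 hz2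
    obtain ⟨A, hA, hAe⟩ := key x hx y₁ h1 y₂ h2
    obtain ⟨T, hT⟩ := hinv A hA
    have h0 : T (y₂ - y₁) = 0 := by
      show (T : (Fin m → ℝ) →L[ℝ] (Fin m → ℝ)) (y₂ - y₁) = 0
      rw [hT, ← hAe, hz1, hz2, sub_zero]
    have := congrArg T.symm h0
    simp only [ContinuousLinearEquiv.symm_apply_apply, map_zero] at this
    exact (eq_of_sub_eq_zero this).symm
  -- any partial solution lies in the interior of Y
  have hsol : ∀ x ∈ X, ∀ t ∈ Icc (0:ℝ) 1, ∀ y ∈ Y,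
      f (x, y) = (1 - t) • f (x, y₀) → y ∈ interior Y := by
    intro x hx t ht y hy hfy
    obtain ⟨A, hA, hAe⟩ := key x hx y₀ hy₀Y y hy
    obtain ⟨T, hT⟩ := hinv A hA
    have h1 : T (y - y₀) = (-t) • f (x, y₀) := by
      show (T : (Fin m → ℝ) →L[ℝ] (Fin m → ℝ)) (y - y₀) = (-t) • f (x, y₀)
      rw [hT, ← hAe, hfy]
      module
    have h2 : y - y₀ = (-t) • T.symm (f (x, y₀)) := by
      have := congrArg T.symm h1
      simpa [_root_.map_smul] using this
    have hmemN : y₀ - T.symm (f (x, y₀)) ∈ interior Y := hN x hx T (hT ▸ hA)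
    have hrepr : y = (1 - t) • y₀ + t • (y₀ - T.symm (f (x, y₀))) := by
      have hy' : y = y₀ + (-t) • T.symm (f (x, y₀)) := by
        rw [← h2]; module
      rw [hy']; module
    rw [hrepr]
    exact hYicon hy₀ hmemN (by linarith [ht.2]) ht.1 (by ring)
  -- existence of zeros
  have hex : ∀ x ∈ X, ∃ y, y ∈ interior Y ∧ f (x, y) = 0 := by
    intro x hx
    set f₀ := f (x, y₀) with hf₀def
    set U : Set ℝ := {t | ∃ y, y ∈ interior Y ∧ f (x, y) = (1 - t) • f₀} with hUdef
    set S : Set ℝ := {t | t ∈ Icc (0:ℝ) 1 ∧ ∃ y, y ∈ Y ∧ f (x, y) = (1 - t) • f₀}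
      with hSdef
    have hSU : S = Icc 0 1 ∩ U := by
      ext t
      constructor
      · rintro ⟨ht, y, hy, he⟩
        exact ⟨ht, y, hsol x hx t ht y hy he, he⟩
      · rintro ⟨ht, y, hy, he⟩
        exact ⟨ht, y, interior_subset hy, he⟩
    have hUopen : IsOpen U := by
      rw [isOpen_iff_mem_nhds]
      rintro t₀ ⟨y, hyint, hye⟩
      set A := fderiv ℝ (fun y' => f (x, y')) y with hAdef
      have hA : A ∈ 𝒜 := hmem x hx y (interior_subset hyint)
      obtain ⟨T, hT⟩ := hinv A hA
      set Φ : ℝ × (Fin m → ℝ) → ℝ × (Fin m → ℝ) :=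
        fun p => (p.1, f (x, p.2) - (1 - p.1) • f₀) with hΦdef
      have hstrict_g : HasStrictFDerivAt (fun y' => f (x, y')) A y :=
        (hgx x).contDiffAt.hasStrictFDerivAt (ne_of_gt (lt_of_lt_of_le zero_lt_one hr'))
      have hsnd : HasStrictFDerivAt (fun p : ℝ × (Fin m → ℝ) => f (x, p.2))
          (A.comp (ContinuousLinearMap.snd ℝ ℝ (Fin m → ℝ))) (t₀, y) :=
        hstrict_g.comp (t₀, y) (hasStrictFDerivAt_snd (𝕜 := ℝ) (p := (t₀, y)))
      have hc1 : HasStrictFDerivAt (fun p : ℝ × (Fin m → ℝ) => (1 - p.1))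
          (0 - ContinuousLinearMap.fst ℝ ℝ (Fin m → ℝ)) (t₀, y) :=
        (hasStrictFDerivAt_const _ _).sub hasStrictFDerivAt_fst
      have haff : HasStrictFDerivAt (fun p : ℝ × (Fin m → ℝ) => (1 - p.1) • f₀)
          (((0 : _) - ContinuousLinearMap.fst ℝ ℝ (Fin m → ℝ)).smulRight f₀)
          (t₀, y) := hc1.smul_const f₀
      set L : (ℝ × (Fin m → ℝ)) →L[ℝ] (Fin m → ℝ) :=
        (A.comp (ContinuousLinearMap.snd ℝ ℝ (Fin m → ℝ))) -
          (((0 : _) - ContinuousLinearMap.fst ℝ ℝ (Fin m → ℝ)).smulRight f₀)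
        with hLdef
      have hTL : ∀ v, L (0, v) = T v := by
        intro v
        have : L (0, v) = A v := by
          simp [hLdef]
        rw [this, ← hT]
        rfl
      have hstrictΦ : HasStrictFDerivAt Φ
          ((blockCLE T L hTL : _ ≃L[ℝ] _) : _ →L[ℝ] _) (t₀, y) := by
        rw [blockCLE_coe]
        exact HasStrictFDerivAt.prodMk hasStrictFDerivAt_fst (hsnd.sub haff)
      have hΦval : Φ (t₀, y) = (t₀, 0) := by
        simp [hΦdef, hye]
      set φ := hstrictΦ.localInverse Φ _ _ with hφdef
      have hre : ∀ᶠ p in 𝓝 ((t₀ : ℝ), (0 : Fin m → ℝ)), Φ (φ p) = p := by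
        have := hstrictΦ.eventually_right_inverse
        rwa [hΦval] at this
      have hφcont : ContinuousAt φ (t₀, 0) := by
        have := hstrictΦ.localInverse_continuousAt
        rwa [hΦval] at this
      have hφval : φ (t₀, 0) = (t₀, y) := by
        have := hstrictΦ.localInverse_apply_image
        rwa [hΦval] at this
      have htend : Tendsto (fun t : ℝ => ((t, 0) : ℝ × (Fin m → ℝ)))
          (𝓝 t₀) (𝓝 (t₀, 0)) :=
        (continuous_id.prodMk continuous_const).tendsto t₀
      have hev1 : ∀ᶠ t in 𝓝 t₀, Φ (φ (t, 0)) = (t, 0) := htend.eventually hre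
      have hval2 : (φ (t₀, 0)).2 = y := by rw [hφval]
      have hcomp : Tendsto (fun t : ℝ => (φ (t, 0)).2) (𝓝 t₀) (𝓝 y) := by
        have h1 : Tendsto (fun t : ℝ => φ (t, 0)) (𝓝 t₀) (𝓝 (φ (t₀, 0))) :=
          Filter.Tendsto.comp hφcont htend
        have h2 := (continuous_snd.tendsto (φ (t₀, 0))).comp h1
        rwa [hval2] at h2
      have hev2 : ∀ᶠ t in 𝓝 t₀, (φ (t, 0)).2 ∈ interior Y :=
        hcomp (isOpen_interior.mem_nhds hyint)
      filter_upwards [hev1, hev2] with t h1 h2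
      refine ⟨(φ (t, 0)).2, h2, ?_⟩
      have e1 : (φ (t, 0)).1 = t := congrArg Prod.fst h1
      have e2 : f (x, (φ (t, 0)).2) - (1 - (φ (t, 0)).1) • f₀ = 0 :=
        congrArg Prod.snd h1
      rw [e1] at e2
      exact sub_eq_zero.mp e2
    have hSclosed : IsClosed S := by
      have himg : S = Prod.fst '' {p : ℝ × (Fin m → ℝ) |
          p.1 ∈ Icc (0:ℝ) 1 ∧ p.2 ∈ Y ∧ f (x, p.2) = (1 - p.1) • f₀} := by
        ext t
        constructor
        · rintro ⟨ht, y, hy, he⟩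
          exact ⟨(t, y), ⟨ht, hy, he⟩, rfl⟩
        · rintro ⟨⟨t', y⟩, ⟨ht, hy, he⟩, rfl⟩
          exact ⟨ht, y, hy, he⟩
      rw [himg]
      apply IsCompact.isClosed
      apply IsCompact.image _ continuous_fst
      apply (isCompact_Icc.prod hYcomp).of_isClosed_subset
      · apply IsClosed.inter
        · exact isClosed_Icc.preimage continuous_fst
        · apply IsClosed.inter
          · exact (hYcomp.isClosed).preimage continuous_snd
          · apply isClosed_eq
            · exact hf.continuous.comp (continuous_const.prodMk continuous_snd)
            · exact ((continuous_const.sub continuous_fst).smul continuous_const)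
      · rintro ⟨t, y⟩ ⟨ht, hy, -⟩
        exact ⟨ht, hy⟩
    have h0S : (0:ℝ) ∈ S := ⟨⟨le_rfl, zero_le_one⟩, y₀, hy₀Y, by simp [hf₀def]⟩
    have h1S : (1:ℝ) ∈ S := by
      by_contra h1
      have hsub : Icc (0:ℝ) 1 ⊆ U ∪ Sᶜ := by
        intro t ht
        by_cases hts : t ∈ S
        · exact Or.inl (hSU ▸ hts).2
        · exact Or.inr hts
      have hne1 : (Icc (0:ℝ) 1 ∩ U).Nonempty :=
        ⟨0, ⟨le_rfl, zero_le_one⟩, (hSU ▸ h0S).2⟩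
      have hne2 : (Icc (0:ℝ) 1 ∩ Sᶜ).Nonempty := ⟨1, ⟨zero_le_one, le_rfl⟩, h1⟩
      obtain ⟨t, htI, htU, htS⟩ :=
        isPreconnected_Icc U Sᶜ hUopen hSclosed.isOpen_compl hsub hne1 hne2
      exact htS (hSU ▸ (⟨htI, htU⟩ : t ∈ Icc (0:ℝ) 1 ∩ U))
    obtain ⟨-, y, hy, he⟩ := h1S
    refine ⟨y, hsol x hx 1 ⟨zero_le_one, le_rfl⟩ y hy he, ?_⟩
    simpa using he
  choose! q hq1 hq2 using hex
  refine ⟨q, ?_, fun x hx => ⟨interior_subset (hq1 x hx), hq2 x hx⟩⟩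
  intro x₀ hx₀
  set y₁ := q x₀ with hy₁def
  have hy₁int : y₁ ∈ interior Y := hq1 x₀ hx₀
  have hy₁z : f (x₀, y₁) = 0 := hq2 x₀ hx₀
  set A := fderiv ℝ (fun y' => f (x₀, y')) y₁ with hAdef
  have hA𝒜 : A ∈ 𝒜 := hmem x₀ hx₀ y₁ (interior_subset hy₁int)
  obtain ⟨T, hT⟩ := hinv A hA𝒜
  set Lf := fderiv ℝ f (x₀, y₁) with hLfdef
  have Hfs : HasStrictFDerivAt f Lf (x₀, y₁) := hf.contDiffAt.hasStrictFDerivAt (ne_of_gt (lt_of_lt_of_le zero_lt_one hr'))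
  have hTL : ∀ v, Lf (0, v) = T v := by
    intro v
    have hincl : HasFDerivAt (fun y => ((x₀, y) : (Fin k → ℝ) × (Fin m → ℝ)))
        (ContinuousLinearMap.inr ℝ (Fin k → ℝ) (Fin m → ℝ)) y₁ :=
      hasFDerivAt_prodMk_right x₀ y₁
    have hpart : HasFDerivAt (fun y => f (x₀, y))
        (Lf.comp (ContinuousLinearMap.inr ℝ (Fin k → ℝ) (Fin m → ℝ))) y₁ :=
      Hfs.hasFDerivAt.comp y₁ hincl
    have hAeq := hpart.fderiv
    calc Lf (0, v)
        = (Lf.comp (ContinuousLinearMap.inr ℝ (Fin k → ℝ) (Fin m → ℝ))) v := rfl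
      _ = A v := by rw [hAdef, hAeq]
      _ = T v := by rw [← hT]; rfl
  set Ψ : (Fin k → ℝ) × (Fin m → ℝ) → (Fin k → ℝ) × (Fin m → ℝ) :=
    fun p => (p.1, f p) with hΨdef
  have hΨc : ContDiffAt ℝ r Ψ (x₀, y₁) := (contDiff_fst.prodMk hf).contDiffAt
  have hΨs : HasStrictFDerivAt Ψ
      ((blockCLE T Lf hTL : _ ≃L[ℝ] _) : _ →L[ℝ] _) (x₀, y₁) := by
    rw [blockCLE_coe]
    exact HasStrictFDerivAt.prodMk hasStrictFDerivAt_fst Hfs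
  have hΨd : HasFDerivAt Ψ
      ((blockCLE T Lf hTL : _ ≃L[ℝ] _) : _ →L[ℝ] _) (x₀, y₁) := hΨs.hasFDerivAt
  set φ := hΨs.localInverse Ψ _ _ with hφdef
  have hval : Ψ (x₀, y₁) = (x₀, 0) := by simp [hΨdef, hy₁z]
  have hφCD : ContDiffAt ℝ r φ ((x₀, 0) : (Fin k → ℝ) × (Fin m → ℝ)) := by
    have h := hΨc.to_localInverse (f' := blockCLE T Lf hTL) hΨd (ne_of_gt (lt_of_lt_of_le zero_lt_one hr'))
    rw [hval] at h
    exact h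
  have hre : ∀ᶠ p in 𝓝 ((x₀, 0) : (Fin k → ℝ) × (Fin m → ℝ)), Ψ (φ p) = p := by
    have := hΨs.eventually_right_inverse
    rwa [hval] at this
  have hφcont : ContinuousAt φ (x₀, 0) := by
    have := hΨs.localInverse_continuousAt
    rwa [hval] at this
  have hφval : φ (x₀, 0) = (x₀, y₁) := by
    have := hΨs.localInverse_apply_image
    rwa [hval] at this
  set p : (Fin k → ℝ) → (Fin m → ℝ) := fun x => (φ (x, 0)).2 with hpdef
  have htend : Tendsto (fun x : Fin k → ℝ => ((x, 0) : (Fin k → ℝ) × (Fin m → ℝ)))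
      (𝓝 x₀) (𝓝 (x₀, 0)) := (continuous_id.prodMk continuous_const).tendsto x₀
  have hpCD : ContDiffAt ℝ r p x₀ := by
    have h1 : ContDiffAt ℝ r
        (fun x : Fin k → ℝ => φ ((x, 0) : (Fin k → ℝ) × (Fin m → ℝ))) x₀ :=
      hφCD.comp x₀ (contDiffAt_id.prodMk contDiffAt_const)
    exact contDiffAt_snd.comp x₀ h1
  have hev1 : ∀ᶠ x in 𝓝 x₀, Ψ (φ (x, 0)) = (x, 0) := htend.eventually hre
  have hval2 : p x₀ = y₁ := by rw [hpdef]; simp only []; rw [hφval]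
  have hpc : Tendsto p (𝓝 x₀) (𝓝 y₁) := by
    have h1 : Tendsto (fun x : Fin k → ℝ => φ (x, 0)) (𝓝 x₀) (𝓝 (φ (x₀, 0))) :=
      Filter.Tendsto.comp hφcont htend
    have h2 := (continuous_snd.tendsto (φ (x₀, 0))).comp h1
    rwa [hφval] at h2
  have hev2 : ∀ᶠ x in 𝓝 x₀, p x ∈ interior Y :=
    hpc (isOpen_interior.mem_nhds hy₁int)
  have heqv : ∀ᶠ x in 𝓝[X] x₀, q x = p x := by
    filter_upwards [nhdsWithin_le_nhds hev1, nhdsWithin_le_nhds hev2,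
      self_mem_nhdsWithin] with x h1 h2 hxX
    have e1 : (φ (x, 0)).1 = x := congrArg Prod.fst h1
    have e2 : f (φ (x, 0)) = 0 := congrArg Prod.snd h1
    have e3 : f (x, p x) = 0 := by
      have : ((x, p x) : (Fin k → ℝ) × (Fin m → ℝ)) = φ (x, 0) :=
        Prod.ext e1.symm rfl
      rw [this]
      exact e2
    exact huniq x hxX (q x) (interior_subset (hq1 x hxX)) (p x)
      (interior_subset h2) (hq2 x hxX) e3
  exact (hpCD.contDiffWithinAt).congr_of_eventuallyEq heqv hval2.symm
end

section
/- Existence of zeros under perturbation: Under the quantitative hypotheses (⋆), for every ε ∈ (0, ε₀] there exists x in the open ball B(p,R) such that y(ε, x) = 0. -/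
/-!
Fix `ε ∈ (0, ε₀]` and rescale the second equation: the zeros of `y (ε, ·)` are those of
`f x = ((y (ε, x)).1, ε⁻¹ • (y (ε, x)).2)`. Since `y₂ (0, ·)` vanishes on the ball, so does its
`x`-derivative, and integrating the mixed derivative in `ε` gives
`‖D_x y₂ (ε, x) - ε • A₂₂ ∘ π₂‖ ≤ δ₂ ε`; hence `D f` is `δᵢ`-close to the block-diagonal
isomorphism `A₁₁ × A₂₂`, block by block. The chord map `x ↦ x - (A₁₁⁻¹ f₁ x, A₂₂⁻¹ f₂ x)` is then
a contraction of `B̄(p, R)` (for the max norm) into `B(p, R)`: the two smallness conditions,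
together with `‖f₁ p‖ ≤ ε₀ η₁` and `‖f₂ p‖ ≤ η₂`, control its two components separately. Its fixed
point is the required zero.
-/

open Metric Set

theorem norm_sub_smul_le_of_norm_deriv_sub_le {E : Type*} [NormedAddCommGroup E]
    [NormedSpace ℝ E] {g : ℝ → E} (hg : Differentiable ℝ g) (hg0 : g 0 = 0) (c : E) {ε δ : ℝ}
    (hε : 0 ≤ ε) (hbound : ∀ t ∈ Ico 0 ε, ‖deriv g t - c‖ ≤ δ) :
    ‖g ε - ε • c‖ ≤ δ * ε := by
  have hderiv (t : ℝ) : HasDerivAt (fun s => g s - s • c) (deriv g t - c) t := by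
    have h := (hg t).hasDerivAt.sub ((hasDerivAt_id t).smul_const c)
    rwa [one_smul] at h
  simpa [hg0] using norm_image_sub_le_of_norm_deriv_le_segment'
    (fun t _ => (hderiv t).hasDerivWithinAt) hbound ε (right_mem_Icc.2 hε)

theorem norm_le_mul_of_norm_deriv_le {E : Type*} [NormedAddCommGroup E] [NormedSpace ℝ E]
    {g : ℝ → E} (hg : Differentiable ℝ g) (hg0 : g 0 = 0) {ε η : ℝ} (hε : 0 ≤ ε)
    (hbound : ∀ t ∈ Ico 0 ε, ‖deriv g t‖ ≤ η) :
    ‖g ε‖ ≤ η * ε := by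
  simpa using norm_sub_smul_le_of_norm_deriv_sub_le hg hg0 0 hε (by simpa using hbound)

theorem fderiv_eq_zero_on_closedBall_of_eq_zero {E F : Type*} [NormedAddCommGroup E]
    [NormedSpace ℝ E] [NormedAddCommGroup F] [NormedSpace ℝ F] {f : E → F}
    (hf : Continuous (fderiv ℝ f)) {p : E} {R : ℝ} (hR : R ≠ 0)
    (hzero : ∀ x ∈ closedBall p R, f x = 0) :
    ∀ x ∈ closedBall p R, fderiv ℝ f x = 0 := by
  have hball : ∀ x ∈ ball p R, fderiv ℝ f x = 0 := fun x hx => by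
    have hloc : f =ᶠ[nhds x] fun _ => 0 := Filter.eventuallyEq_of_mem (isOpen_ball.mem_nhds hx)
      fun x' hx' => hzero x' (ball_subset_closedBall hx')
    rw [hloc.fderiv_eq, fderiv_const_apply]
  rw [← closure_ball p hR]
  exact closure_minimal hball (isClosed_eq hf continuous_const)

theorem norm_fderiv_inv_smul_slice_sub_le {E F : Type*} [NormedAddCommGroup E]
    [NormedSpace ℝ E] [NormedAddCommGroup F] [NormedSpace ℝ F] {z : ℝ × E → F}
    (hz : ContDiff ℝ 2 z) {p : E} {R : ℝ} (hR : R ≠ 0)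
    (hz0 : ∀ x ∈ closedBall p R, z (0, x) = 0) (φ : E →L[ℝ] F) {ε δ : ℝ} (hε : 0 < ε)
    (hδ : ∀ t ∈ Ico 0 ε, ∀ x ∈ closedBall p R,
      ‖deriv (fun t' => fderiv ℝ (fun x' => z (t', x')) x) t - φ‖ ≤ δ)
    {x : E} (hx : x ∈ closedBall p R) :
    ‖fderiv ℝ (fun x' => ε⁻¹ • z (ε, x')) x - φ‖ ≤ δ := by
  have hD : ContDiff ℝ 1 fun q : ℝ × E => fderiv ℝ (fun x' => z (q.1, x')) q.2 :=
    ContDiff.fderiv (f := fun q x' => z (q.1, x')) (hz.comp (by fun_prop)) contDiff_snd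
      (by norm_num)
  have hD0 : fderiv ℝ (fun x' => z (0, x')) x = 0 :=
    fderiv_eq_zero_on_closedBall_of_eq_zero (f := fun x' => z (0, x'))
      (hD.continuous.comp (continuous_const.prodMk continuous_id)) hR hz0 x hx
  have hDε : ‖fderiv ℝ (fun x' => z (ε, x')) x - ε • φ‖ ≤ δ * ε :=
    norm_sub_smul_le_of_norm_deriv_sub_le
      ((hD.differentiable one_ne_zero).comp (differentiable_id.prodMk (differentiable_const x)))
      hD0 φ hε.le fun t ht => hδ t ht x hx
  have hslice : DifferentiableAt ℝ (fun x' => z (ε, x')) x :=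
    ((hz.differentiable (by norm_num)).comp (by fun_prop)).differentiableAt
  have hsmul : fderiv ℝ (fun x' => ε⁻¹ • z (ε, x')) x - φ =
      ε⁻¹ • (fderiv ℝ (fun x' => z (ε, x')) x - ε • φ) := by
    rw [fderiv_fun_const_smul hslice, smul_sub, smul_smul, inv_mul_cancel₀ hε.ne', one_smul]
  rw [hsmul, norm_smul, Real.norm_of_nonneg (inv_nonneg.2 hε.le)]
  calc ε⁻¹ * ‖fderiv ℝ (fun x' => z (ε, x')) x - ε • φ‖ ≤ ε⁻¹ * (δ * ε) := by gcongr
    _ = δ := by field_simp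

theorem exists_fixedPoint_mem_ball_prod {α β : Type*} [MetricSpace α] [MetricSpace β]
    [CompleteSpace α] [CompleteSpace β] (G : α × β → α × β) {p : α × β} {R k₁ k₂ : ℝ}
    (hR : 0 ≤ R) (hk₁ : 0 ≤ k₁) (hk₂ : 0 ≤ k₂)
    (hG₁ : ∀ x ∈ closedBall p R, ∀ x' ∈ closedBall p R, dist (G x).1 (G x').1 ≤ k₁ * dist x x')
    (hG₂ : ∀ x ∈ closedBall p R, ∀ x' ∈ closedBall p R, dist (G x).2 (G x').2 ≤ k₂ * dist x x')
    (hp₁ : dist (G p).1 p.1 + k₁ * R < R) (hp₂ : dist (G p).2 p.2 + k₂ * R < R) :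
    ∃ z ∈ ball p R, G z = z := by
  have hpR : p ∈ closedBall p R := mem_closedBall_self hR
  have hmaps : ∀ x ∈ closedBall p R, G x ∈ ball p R := fun x hx => by
    have hxp : dist x p ≤ R := hx
    rw [mem_ball, Prod.dist_eq]
    refine max_lt ?_ ?_
    · calc dist (G x).1 p.1 ≤ dist (G x).1 (G p).1 + dist (G p).1 p.1 := dist_triangle _ _ _
        _ ≤ k₁ * R + dist (G p).1 p.1 := by gcongr; exact (hG₁ x hx p hpR).trans (by gcongr)
        _ < R := by linarith
    · calc dist (G x).2 p.2 ≤ dist (G x).2 (G p).2 + dist (G p).2 p.2 := dist_triangle _ _ _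
        _ ≤ k₂ * R + dist (G p).2 p.2 := by gcongr; exact (hG₂ x hx p hpR).trans (by gcongr)
        _ < R := by linarith
  have hmapsTo : MapsTo G (closedBall p R) (closedBall p R) :=
    fun x hx => ball_subset_closedBall (hmaps x hx)
  have hk : max k₁ k₂ < 1 := by
    have hRpos : 0 < R := by nlinarith [dist_nonneg (x := (G p).1) (y := p.1)]
    refine max_lt ?_ ?_ <;> nlinarith [dist_nonneg (x := (G p).1) (y := p.1),
      dist_nonneg (x := (G p).2) (y := p.2)]
  have hcontr : ContractingWith (max k₁ k₂).toNNReal (hmapsTo.restrict G _ _) := by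
    refine ⟨by simpa using hk, LipschitzWith.of_dist_le_mul fun x x' => ?_⟩
    rw [Real.coe_toNNReal _ (le_max_of_le_left hk₁), Subtype.dist_eq, Subtype.dist_eq,
      Prod.dist_eq]
    refine max_le ((hG₁ x x.2 x' x'.2).trans ?_) ((hG₂ x x.2 x' x'.2).trans ?_) <;> gcongr
    exacts [le_max_left _ _, le_max_right _ _]
  obtain ⟨z, hz, hGz, -⟩ := hcontr.exists_fixedPoint' isClosed_closedBall.isComplete hmapsTo hpR
    (edist_ne_top p (G p))
  exact ⟨z, hGz ▸ hmaps z hz, hGz⟩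

/-- The chord (simplified Newton) map for `f` with fixed linearization `A ∘ π`, updating only
the block `π x`. -/
def newtonStep {E F F' : Type*} [NormedAddCommGroup E] [NormedSpace ℝ E]
    [NormedAddCommGroup F] [NormedSpace ℝ F] [NormedAddCommGroup F'] [NormedSpace ℝ F']
    (π : E →L[ℝ] F') (A : F' ≃L[ℝ] F) (f : E → F) (x : E) : F' :=
  π x - A.symm (f x)

section newtonStep

variable {E F F' : Type*} [NormedAddCommGroup E] [NormedSpace ℝ E]
    [NormedAddCommGroup F] [NormedSpace ℝ F] [NormedAddCommGroup F'] [NormedSpace ℝ F']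
    (π : E →L[ℝ] F') (A : F' ≃L[ℝ] F) (f : E → F)

theorem newtonStep_eq_self_iff {x : E} : newtonStep π A f x = π x ↔ f x = 0 := by
  simp [newtonStep]

theorem dist_newtonStep_self_add_lt {x : E} {b δ R : ℝ} (hR : 0 < R) (hfx : ‖f x‖ ≤ b)
    (h : b + δ * R < ‖(A.symm : F →L[ℝ] F')‖⁻¹ * R) :
    dist (newtonStep π A f x) (π x) + ‖(A.symm : F →L[ℝ] F')‖ * δ * R < R := by
  have hdist : dist (newtonStep π A f x) (π x) ≤ ‖(A.symm : F →L[ℝ] F')‖ * b := by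
    simpa [newtonStep, dist_eq_norm] using
      ((A.symm : F →L[ℝ] F').le_opNorm (f x)).trans (by gcongr)
  refine (add_le_add_left hdist _).trans_lt ?_
  rw [mul_assoc, ← mul_add]
  rcases (norm_nonneg (A.symm : F →L[ℝ] F')).eq_or_lt with h0 | hpos
  · simpa [← h0] using hR
  · exact (lt_inv_mul_iff₀ hpos).1 h

theorem dist_newtonStep_le {s : Set E} (hs : Convex ℝ s) (hf : ∀ x ∈ s, DifferentiableAt ℝ f x)
    {δ : ℝ} (hδ : ∀ x ∈ s, ‖fderiv ℝ f x - (A : F' →L[ℝ] F).comp π‖ ≤ δ)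
    {x x' : E} (hx : x ∈ s) (hx' : x' ∈ s) :
    dist (newtonStep π A f x) (newtonStep π A f x') ≤
      ‖(A.symm : F →L[ℝ] F')‖ * δ * dist x x' := by
  have hsub : newtonStep π A f x - newtonStep π A f x' =
      -A.symm (f x - f x' - A (π (x - x'))) := by
    simp only [newtonStep, map_sub, ContinuousLinearEquiv.symm_apply_apply]
    abel
  rw [dist_eq_norm, hsub, norm_neg, dist_eq_norm, mul_assoc]
  refine ((A.symm : F →L[ℝ] F').le_opNorm _).trans (mul_le_mul_of_nonneg_left ?_ (norm_nonneg _))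
  exact hs.norm_image_sub_le_of_norm_fderiv_le' hf hδ hx' hx

end newtonStep

theorem exists_mem_ball_eq_zero_of_norm_fderiv_sub_le {E₁ E₂ F₁ F₂ : Type*}
    [NormedAddCommGroup E₁] [NormedSpace ℝ E₁] [CompleteSpace E₁]
    [NormedAddCommGroup E₂] [NormedSpace ℝ E₂] [CompleteSpace E₂]
    [NormedAddCommGroup F₁] [NormedSpace ℝ F₁] [NormedAddCommGroup F₂] [NormedSpace ℝ F₂]
    {f₁ : E₁ × E₂ → F₁} {f₂ : E₁ × E₂ → F₂} (A₁ : E₁ ≃L[ℝ] F₁) (A₂ : E₂ ≃L[ℝ] F₂)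
    {p : E₁ × E₂} {R δ₁ δ₂ : ℝ} (hR : 0 < R)
    (hf₁ : ∀ x ∈ closedBall p R, DifferentiableAt ℝ f₁ x)
    (hf₂ : ∀ x ∈ closedBall p R, DifferentiableAt ℝ f₂ x)
    (hδ₁ : ∀ x ∈ closedBall p R,
      ‖fderiv ℝ f₁ x - (A₁ : E₁ →L[ℝ] F₁).comp (ContinuousLinearMap.fst ℝ E₁ E₂)‖ ≤ δ₁)
    (hδ₂ : ∀ x ∈ closedBall p R,
      ‖fderiv ℝ f₂ x - (A₂ : E₂ →L[ℝ] F₂).comp (ContinuousLinearMap.snd ℝ E₁ E₂)‖ ≤ δ₂)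
    (hm₁ : ‖f₁ p‖ + δ₁ * R < ‖(A₁.symm : F₁ →L[ℝ] E₁)‖⁻¹ * R)
    (hm₂ : ‖f₂ p‖ + δ₂ * R < ‖(A₂.symm : F₂ →L[ℝ] E₂)‖⁻¹ * R) :
    ∃ z ∈ ball p R, f₁ z = 0 ∧ f₂ z = 0 := by
  let π₁ := ContinuousLinearMap.fst ℝ E₁ E₂
  let π₂ := ContinuousLinearMap.snd ℝ E₁ E₂
  have hpR : p ∈ closedBall p R := mem_closedBall_self hR.le
  obtain ⟨z, hz, hGz⟩ := exists_fixedPoint_mem_ball_prod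
    (fun x => (newtonStep π₁ A₁ f₁ x, newtonStep π₂ A₂ f₂ x)) hR.le
    (mul_nonneg (norm_nonneg _) ((norm_nonneg _).trans (hδ₁ p hpR)))
    (mul_nonneg (norm_nonneg _) ((norm_nonneg _).trans (hδ₂ p hpR)))
    (fun _ hx _ hx' => dist_newtonStep_le π₁ A₁ f₁ (convex_closedBall p R) hf₁ hδ₁ hx hx')
    (fun _ hx _ hx' => dist_newtonStep_le π₂ A₂ f₂ (convex_closedBall p R) hf₂ hδ₂ hx hx')
    (dist_newtonStep_self_add_lt π₁ A₁ f₁ hR le_rfl hm₁)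
    (dist_newtonStep_self_add_lt π₂ A₂ f₂ hR le_rfl hm₂)
  exact ⟨z, hz, (newtonStep_eq_self_iff π₁ A₁ f₁).1 (congrArg Prod.fst hGz),
    (newtonStep_eq_self_iff π₂ A₂ f₂).1 (congrArg Prod.snd hGz)⟩

theorem existence_of_zeros_under_perturbation_general
    {X₁ X₂ : Type*}
    [NormedAddCommGroup X₁] [NormedSpace ℝ X₁] [FiniteDimensional ℝ X₁]
    [NormedAddCommGroup X₂] [NormedSpace ℝ X₂] [FiniteDimensional ℝ X₂]
    (y : ℝ × (X₁ × X₂) → X₁ × X₂)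
    (ε₀ R : ℝ) (hR : 0 < R)
    (p : X₁ × X₂)
    (hy : ContDiff ℝ 2 y)
    (hyp : y (0, p) = 0)
    (hy₂ : ∀ x ∈ closedBall p R, (y (0, x)).2 = 0)
    (A₁₁ : X₁ ≃L[ℝ] X₁) (A₂₂ : X₂ ≃L[ℝ] X₂)
    (δ₁ δ₂ η₁ η₂ : ℝ)
    (hδ₁ : ∀ ε ∈ Icc (0:ℝ) ε₀, ∀ x ∈ closedBall p R,
      ‖fderiv ℝ (fun x' => (y (ε, x')).1) x
        - (A₁₁ : X₁ →L[ℝ] X₁).comp (ContinuousLinearMap.fst ℝ X₁ X₂)‖ ≤ δ₁)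
    (hδ₂ : ∀ ε ∈ Icc (0:ℝ) ε₀, ∀ x ∈ closedBall p R,
      ‖deriv (fun ε' => fderiv ℝ (fun x' => (y (ε', x')).2) x) ε
        - (A₂₂ : X₂ →L[ℝ] X₂).comp (ContinuousLinearMap.snd ℝ X₁ X₂)‖ ≤ δ₂)
    (hη₁ : ∀ ε ∈ Icc (0:ℝ) ε₀, ‖deriv (fun ε' => (y (ε', p)).1) ε‖ ≤ η₁)
    (hη₂ : ∀ ε ∈ Icc (0:ℝ) ε₀, ‖deriv (fun ε' => (y (ε', p)).2) ε‖ ≤ η₂)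
    (hm₁ : ε₀ * η₁ + δ₁ * R < ‖(A₁₁.symm : X₁ →L[ℝ] X₁)‖⁻¹ * R)
    (hm₂ : η₂ + δ₂ * R < ‖(A₂₂.symm : X₂ →L[ℝ] X₂)‖⁻¹ * R) :
    ∀ ε ∈ Ioc (0:ℝ) ε₀, ∃ x ∈ ball p R, y (ε, x) = 0 := by
  rintro ε ⟨hε, hεε₀⟩
  have hIcc : ∀ t ∈ Ico 0 ε, t ∈ Icc 0 ε₀ := fun t ht => ⟨ht.1, ht.2.le.trans hεε₀⟩
  have hyd : Differentiable ℝ y := hy.differentiable (by norm_num)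
  have hp₁ : ‖(y (ε, p)).1‖ ≤ ε₀ * η₁ := by
    have hη₁0 : 0 ≤ η₁ := (norm_nonneg _).trans (hη₁ 0 (hIcc 0 ⟨le_rfl, hε⟩))
    have := norm_le_mul_of_norm_deriv_le (g := fun t => (y (t, p)).1) (by fun_prop)
      (by simp [hyp]) hε.le fun t ht => hη₁ t (hIcc t ht)
    nlinarith
  have hp₂ : ‖ε⁻¹ • (y (ε, p)).2‖ ≤ η₂ := by
    have := norm_le_mul_of_norm_deriv_le (g := fun t => (y (t, p)).2) (by fun_prop)
      (by simp [hyp]) hε.le fun t ht => hη₂ t (hIcc t ht)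
    rwa [norm_smul, Real.norm_of_nonneg (inv_nonneg.2 hε.le), inv_mul_le_iff₀ hε, mul_comm]
  obtain ⟨z, hz, hz₁, hz₂⟩ := exists_mem_ball_eq_zero_of_norm_fderiv_sub_le
    (f₁ := fun x => (y (ε, x)).1) (f₂ := fun x => ε⁻¹ • (y (ε, x)).2) A₁₁ A₂₂ hR
    (fun _ _ => by fun_prop) (fun _ _ => by fun_prop) (hδ₁ ε ⟨hε.le, hεε₀⟩)
    (fun _ hx => norm_fderiv_inv_smul_slice_sub_le hy.snd hR.ne' hy₂ _ hε
      (fun t ht => hδ₂ t (hIcc t ht)) hx)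
    (by linarith) (by linarith)
  exact ⟨z, hz, Prod.ext hz₁ ((smul_eq_zero.1 hz₂).resolve_left (inv_ne_zero hε.ne'))⟩

/-- **Existence of zeros under perturbation.**
Under the quantitative hypotheses (⋆), for every `ε ∈ (0, ε₀]` there exists `x`
in the open ball `B(p,R)` such that `y (ε, x) = 0`. -/
theorem existence_of_zeros_under_perturbation
    {X₁ X₂ : Type*}
    [NormedAddCommGroup X₁] [NormedSpace ℝ X₁] [FiniteDimensional ℝ X₁]
    [NormedAddCommGroup X₂] [NormedSpace ℝ X₂] [FiniteDimensional ℝ X₂]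
    (y : ℝ × (X₁ × X₂) → X₁ × X₂)
    (ε₀ R : ℝ) (hε₀ : 0 < ε₀) (hR : 0 < R)
    (p : X₁ × X₂)
    (hy : ContDiff ℝ 2 y)
    (hyp : y (0, p) = 0)
    (hy₂ : ∀ x ∈ closedBall p R, (y (0, x)).2 = 0)
    (A₁₁ : X₁ ≃L[ℝ] X₁) (A₂₂ : X₂ ≃L[ℝ] X₂)
    (hA₁₁ : (A₁₁ : X₁ →L[ℝ] X₁) = fderiv ℝ (fun x₁ => (y (0, (x₁, p.2))).1) p.1)
    (hA₂₂ : (A₂₂ : X₂ →L[ℝ] X₂)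
      = deriv (fun ε => fderiv ℝ (fun x₂ => (y (ε, (p.1, x₂))).2) p.2) 0)
    (δ₁ δ₂ η₁ η₂ : ℝ)
    (hδ₁0 : 0 ≤ δ₁) (hδ₂0 : 0 ≤ δ₂) (hη₁0 : 0 ≤ η₁) (hη₂0 : 0 ≤ η₂)
    (hδ₁ : ∀ ε ∈ Icc (0:ℝ) ε₀, ∀ x ∈ closedBall p R,
      ‖fderiv ℝ (fun x' => (y (ε, x')).1) x
        - (A₁₁ : X₁ →L[ℝ] X₁).comp (ContinuousLinearMap.fst ℝ X₁ X₂)‖ ≤ δ₁)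
    (hδ₂ : ∀ ε ∈ Icc (0:ℝ) ε₀, ∀ x ∈ closedBall p R,
      ‖deriv (fun ε' => fderiv ℝ (fun x' => (y (ε', x')).2) x) ε
        - (A₂₂ : X₂ →L[ℝ] X₂).comp (ContinuousLinearMap.snd ℝ X₁ X₂)‖ ≤ δ₂)
    (hη₁ : ∀ ε ∈ Icc (0:ℝ) ε₀, ‖deriv (fun ε' => (y (ε', p)).1) ε‖ ≤ η₁)
    (hη₂ : ∀ ε ∈ Icc (0:ℝ) ε₀, ‖deriv (fun ε' => (y (ε', p)).2) ε‖ ≤ η₂)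
    (hm₁ : ε₀ * η₁ + δ₁ * R < ‖(A₁₁.symm : X₁ →L[ℝ] X₁)‖⁻¹ * R)
    (hm₂ : η₂ + δ₂ * R < ‖(A₂₂.symm : X₂ →L[ℝ] X₂)‖⁻¹ * R) :
    ∀ ε ∈ Ioc (0:ℝ) ε₀, ∃ x ∈ ball p R, y (ε, x) = 0 :=
  existence_of_zeros_under_perturbation_general y ε₀ R hR p hy hyp hy₂ A₁₁ A₂₂ δ₁ δ₂ η₁ η₂ hδ₁ hδ₂
    hη₁ hη₂ hm₁ hm₂
end

section
/- Invertibility of the derivative under perturbation: Under the quantitative hypotheses (⋆), for every ε ∈ (0, ε₀] and every x in the closed ball B̄(p,R), the partial derivative D_x y(ε,x) : X₁ × X₂ → X₁ × X₂ of y with respect to its second argument is a linear isomorphism. -/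
/-!
Split `D_x y(ε,x)` into its rows `π₁ ∘ D_x y` and `π₂ ∘ D_x y`. The first row is within `δ₁` of
`A₁₁ ∘ π₁`. The second row vanishes at `ε = 0` on the closed ball, because `y₂(0,·)` does, so by
the mean value inequality in `ε` its difference quotient `ε⁻¹ (π₂ ∘ D_x y)` is within `δ₂` of
`A₂₂ ∘ π₂`. Since `δᵢ < m(Aᵢᵢ)`, a nonzero kernel vector `v` would satisfy `‖vᵢ‖ < ‖v‖` for both
components, contradicting `‖v‖ = max ‖v₁‖ ‖v₂‖`; an injective endomorphism of a
finite-dimensional space is an isomorphism.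
-/

open Metric Set

section

variable {E E₁ E₂ F F₁ F₂ G : Type*}
  [NormedAddCommGroup E] [NormedSpace ℝ E] [NormedAddCommGroup E₁] [NormedSpace ℝ E₁]
  [NormedAddCommGroup E₂] [NormedSpace ℝ E₂] [NormedAddCommGroup F] [NormedSpace ℝ F]
  [NormedAddCommGroup F₁] [NormedSpace ℝ F₁] [NormedAddCommGroup F₂] [NormedSpace ℝ F₂]
  [NormedAddCommGroup G] [NormedSpace ℝ G]

theorem norm_apply_le_of_map_eq_zero {f : E →L[ℝ] F} {π : E →L[ℝ] G} (A : G ≃L[ℝ] F) {δ : ℝ}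
    (h : ‖f - (A : G →L[ℝ] F) ∘L π‖ ≤ δ) {v : E} (hv : f v = 0) :
    ‖π v‖ ≤ ‖(A.symm : F →L[ℝ] G)‖ * δ * ‖v‖ := by
  have hAπ : A (π v) = -((f - (A : G →L[ℝ] F) ∘L π) v) := by simp [hv]
  calc ‖π v‖ = ‖(A.symm : F →L[ℝ] G) (A (π v))‖ := by simp
    _ ≤ ‖(A.symm : F →L[ℝ] G)‖ * ‖(f - (A : G →L[ℝ] F) ∘L π) v‖ := by
      rw [hAπ, map_neg, norm_neg]
      exact ContinuousLinearMap.le_opNorm _ _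
    _ ≤ ‖(A.symm : F →L[ℝ] G)‖ * (δ * ‖v‖) := by
      gcongr; exact (ContinuousLinearMap.le_opNorm _ _).trans (by gcongr)
    _ = _ := by ring

theorem mul_lt_one_of_lt_inv {a δ : ℝ} (ha : 0 ≤ a) (h : δ < a⁻¹) : a * δ < 1 := by
  rcases ha.eq_or_lt with rfl | ha
  · simp
  · calc a * δ < a * a⁻¹ := mul_lt_mul_of_pos_left h ha
      _ = 1 := mul_inv_cancel₀ ha.ne'

theorem eq_zero_of_rows_eq_zero {f₁ : E₁ × E₂ →L[ℝ] F₁} {f₂ : E₁ × E₂ →L[ℝ] F₂}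
    (A₁ : E₁ ≃L[ℝ] F₁) (A₂ : E₂ ≃L[ℝ] F₂) {δ₁ δ₂ : ℝ}
    (h₁ : ‖f₁ - (A₁ : E₁ →L[ℝ] F₁) ∘L ContinuousLinearMap.fst ℝ E₁ E₂‖ ≤ δ₁)
    (h₂ : ‖f₂ - (A₂ : E₂ →L[ℝ] F₂) ∘L ContinuousLinearMap.snd ℝ E₁ E₂‖ ≤ δ₂)
    (hδ₁ : δ₁ < ‖(A₁.symm : F₁ →L[ℝ] E₁)‖⁻¹) (hδ₂ : δ₂ < ‖(A₂.symm : F₂ →L[ℝ] E₂)‖⁻¹)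
    {v : E₁ × E₂} (hv₁ : f₁ v = 0) (hv₂ : f₂ v = 0) : v = 0 := by
  by_contra hv
  have hpos : 0 < ‖v‖ := norm_pos_iff.mpr hv
  have hlt₁ : ‖v.1‖ < ‖v‖ := (norm_apply_le_of_map_eq_zero A₁ h₁ hv₁).trans_lt <|
    mul_lt_of_lt_one_left hpos (mul_lt_one_of_lt_inv (norm_nonneg _) hδ₁)
  have hlt₂ : ‖v.2‖ < ‖v‖ := (norm_apply_le_of_map_eq_zero A₂ h₂ hv₂).trans_lt <|
    mul_lt_of_lt_one_left hpos (mul_lt_one_of_lt_inv (norm_nonneg _) hδ₂)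
  exact (max_lt hlt₁ hlt₂).ne (Prod.norm_def v).symm

theorem norm_slope_sub_le_of_norm_deriv_sub_le {f : ℝ → F} {c : F} {a b δ : ℝ} (hab : a < b)
    (hf : ∀ s ∈ Icc a b, DifferentiableAt ℝ f s) (hf' : ∀ s ∈ Ico a b, ‖deriv f s - c‖ ≤ δ) :
    ‖slope f a b - c‖ ≤ δ := by
  have hg : ∀ s ∈ Icc a b, HasDerivWithinAt (fun s => f s - s • c) (deriv f s - c) (Icc a b) s :=
    fun s hs => by
      simpa using ((hf s hs).hasDerivAt.fun_sub ((hasDerivAt_id s).smul_const c)).hasDerivWithinAt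
  have hmvt := norm_image_sub_le_of_norm_deriv_le_segment' hg hf' b (right_mem_Icc.mpr hab.le)
  have hba : 0 < b - a := sub_pos.mpr hab
  have hslope : slope f a b - c = (b - a)⁻¹ • ((f b - b • c) - (f a - a • c)) := by
    rw [slope_def_module, sub_sub_sub_comm, ← sub_smul, smul_sub _ (f b - f a), smul_smul,
      inv_mul_cancel₀ hba.ne', one_smul]
  rw [hslope, norm_smul, norm_inv, Real.norm_of_nonneg hba.le, inv_mul_le_iff₀ hba]
  linarith

theorem fderiv_eq_zero_on_closedBall_of_eqOn_ball {g : E → F} {p : E} {R : ℝ}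
    {c : F} (hg : Continuous (fderiv ℝ g)) (hR : R ≠ 0) (hc : ∀ x ∈ ball p R, g x = c) :
    ∀ x ∈ closedBall p R, fderiv ℝ g x = 0 := by
  have hball : EqOn (fderiv ℝ g) 0 (ball p R) := fun x hx => by
    have hconst : g =ᶠ[nhds x] fun _ => c :=
      Filter.eventually_of_mem (isOpen_ball.mem_nhds hx) hc
    simp [hconst.fderiv_eq]
  rw [← closure_ball p hR]
  exact hball.closure hg continuous_const

end

theorem derivative_is_isomorphism_under_perturbation_general
    {X₁ X₂ : Type*}
    [NormedAddCommGroup X₁] [NormedSpace ℝ X₁] [FiniteDimensional ℝ X₁]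
    [NormedAddCommGroup X₂] [NormedSpace ℝ X₂] [FiniteDimensional ℝ X₂]
    (y : ℝ × (X₁ × X₂) → X₁ × X₂)
    (ε₀ R : ℝ) (hR : 0 < R)
    (p : X₁ × X₂)
    (hy : ContDiff ℝ 2 y)
    (hy₂ : ∀ x ∈ closedBall p R, (y (0, x)).2 = 0)
    (A₁₁ : X₁ ≃L[ℝ] X₁) (A₂₂ : X₂ ≃L[ℝ] X₂)
    (δ₁ δ₂ η₁ η₂ : ℝ)
    (hη₁0 : 0 ≤ η₁) (hη₂0 : 0 ≤ η₂)
    (hδ₁ : ∀ ε ∈ Icc (0:ℝ) ε₀, ∀ x ∈ closedBall p R,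
      ‖fderiv ℝ (fun x' => (y (ε, x')).1) x
        - (A₁₁ : X₁ →L[ℝ] X₁).comp (ContinuousLinearMap.fst ℝ X₁ X₂)‖ ≤ δ₁)
    (hδ₂ : ∀ ε ∈ Icc (0:ℝ) ε₀, ∀ x ∈ closedBall p R,
      ‖deriv (fun ε' => fderiv ℝ (fun x' => (y (ε', x')).2) x) ε
        - (A₂₂ : X₂ →L[ℝ] X₂).comp (ContinuousLinearMap.snd ℝ X₁ X₂)‖ ≤ δ₂)
    (hm₁ : ε₀ * η₁ + δ₁ * R < ‖(A₁₁.symm : X₁ →L[ℝ] X₁)‖⁻¹ * R)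
    (hm₂ : η₂ + δ₂ * R < ‖(A₂₂.symm : X₂ →L[ℝ] X₂)‖⁻¹ * R) :
    ∀ ε ∈ Ioc (0:ℝ) ε₀, ∀ x ∈ closedBall p R,
      ∃ M : (X₁ × X₂) ≃L[ℝ] (X₁ × X₂),
        (M : (X₁ × X₂) →L[ℝ] X₁ × X₂) = fderiv ℝ (fun x' => y (ε, x')) x := by
  intro ε hε x hx
  set L := fderiv ℝ (fun x' => y (ε, x')) x
  have hL : HasFDerivAt (fun x' => y (ε, x')) L x :=
    (((hy.differentiable (by norm_num)).comp
      ((differentiable_const ε).prodMk differentiable_id)).differentiableAt).hasFDerivAt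
  have hrow₁ : ‖ContinuousLinearMap.fst ℝ X₁ X₂ ∘L L
      - (A₁₁ : X₁ →L[ℝ] X₁) ∘L ContinuousLinearMap.fst ℝ X₁ X₂‖ ≤ δ₁ := by
    rw [← hL.fst.fderiv]
    exact hδ₁ ε (Ioc_subset_Icc_self hε) x hx
  set D₂ : ℝ → (X₁ × X₂ →L[ℝ] X₂) := fun s => fderiv ℝ (fun x' => (y (s, x')).2) x
  have hD₂ : ContDiff ℝ 1 D₂ :=
    ContDiff.fderiv (f := fun s x' => (y (s, x')).2) (by fun_prop) contDiff_const (by norm_num)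
  have hD₂0 : D₂ 0 = 0 :=
    fderiv_eq_zero_on_closedBall_of_eqOn_ball
      ((hy.comp (contDiff_const.prodMk contDiff_id)).snd.continuous_fderiv (by norm_num))
      hR.ne' (fun x' hx' => hy₂ x' (ball_subset_closedBall hx')) x hx
  have hrow₂ : ‖ε⁻¹ • (ContinuousLinearMap.snd ℝ X₁ X₂ ∘L L)
      - (A₂₂ : X₂ →L[ℝ] X₂) ∘L ContinuousLinearMap.snd ℝ X₁ X₂‖ ≤ δ₂ := by
    have hslope := norm_slope_sub_le_of_norm_deriv_sub_le hε.1
      (fun s _ => hD₂.differentiable one_ne_zero s)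
      (fun s hs => hδ₂ s ⟨hs.1, hs.2.le.trans hε.2⟩ x hx)
    have hD₂ε : D₂ ε = ContinuousLinearMap.snd ℝ X₁ X₂ ∘L L := hL.snd.fderiv
    rwa [slope_def_module, hD₂0, hD₂ε, sub_zero, sub_zero] at hslope
  have hδ₁_lt : δ₁ < ‖(A₁₁.symm : X₁ →L[ℝ] X₁)‖⁻¹ :=
    lt_of_mul_lt_mul_right (by nlinarith [mul_nonneg (hε.1.le.trans hε.2) hη₁0]) hR.le
  have hδ₂_lt : δ₂ < ‖(A₂₂.symm : X₂ →L[ℝ] X₂)‖⁻¹ :=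
    lt_of_mul_lt_mul_right (by linarith) hR.le
  have hinj : Function.Injective L := (injective_iff_map_eq_zero L).mpr fun v hv =>
    eq_zero_of_rows_eq_zero A₁₁ A₂₂ hrow₁ hrow₂ hδ₁_lt hδ₂_lt (by simp [hv]) (by simp [hv])
  exact ⟨(LinearEquiv.ofInjectiveEndo (L : X₁ × X₂ →ₗ[ℝ] X₁ × X₂) hinj).toContinuousLinearEquiv,
    rfl⟩

/-- **Invertibility of the derivative under perturbation.**
Under the quantitative hypotheses (⋆), for every `ε ∈ (0, ε₀]` and every
`x` in the closed ball, the partial derivative `D_x y(ε,x)` is a linear isomorphism. -/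
theorem derivative_is_isomorphism_under_perturbation
    {X₁ X₂ : Type*}
    [NormedAddCommGroup X₁] [NormedSpace ℝ X₁] [FiniteDimensional ℝ X₁]
    [NormedAddCommGroup X₂] [NormedSpace ℝ X₂] [FiniteDimensional ℝ X₂]
    (y : ℝ × (X₁ × X₂) → X₁ × X₂)
    (ε₀ R : ℝ) (hε₀ : 0 < ε₀) (hR : 0 < R)
    (p : X₁ × X₂)
    (hy : ContDiff ℝ 2 y)
    (hyp : y (0, p) = 0)
    (hy₂ : ∀ x ∈ closedBall p R, (y (0, x)).2 = 0)
    (A₁₁ : X₁ ≃L[ℝ] X₁) (A₂₂ : X₂ ≃L[ℝ] X₂)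
    (hA₁₁ : (A₁₁ : X₁ →L[ℝ] X₁) = fderiv ℝ (fun x₁ => (y (0, (x₁, p.2))).1) p.1)
    (hA₂₂ : (A₂₂ : X₂ →L[ℝ] X₂)
      = deriv (fun ε => fderiv ℝ (fun x₂ => (y (ε, (p.1, x₂))).2) p.2) 0)
    (δ₁ δ₂ η₁ η₂ : ℝ)
    (hδ₁0 : 0 ≤ δ₁) (hδ₂0 : 0 ≤ δ₂) (hη₁0 : 0 ≤ η₁) (hη₂0 : 0 ≤ η₂)
    (hδ₁ : ∀ ε ∈ Icc (0:ℝ) ε₀, ∀ x ∈ closedBall p R,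
      ‖fderiv ℝ (fun x' => (y (ε, x')).1) x
        - (A₁₁ : X₁ →L[ℝ] X₁).comp (ContinuousLinearMap.fst ℝ X₁ X₂)‖ ≤ δ₁)
    (hδ₂ : ∀ ε ∈ Icc (0:ℝ) ε₀, ∀ x ∈ closedBall p R,
      ‖deriv (fun ε' => fderiv ℝ (fun x' => (y (ε', x')).2) x) ε
        - (A₂₂ : X₂ →L[ℝ] X₂).comp (ContinuousLinearMap.snd ℝ X₁ X₂)‖ ≤ δ₂)
    (hη₁ : ∀ ε ∈ Icc (0:ℝ) ε₀, ‖deriv (fun ε' => (y (ε', p)).1) ε‖ ≤ η₁)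
    (hη₂ : ∀ ε ∈ Icc (0:ℝ) ε₀, ‖deriv (fun ε' => (y (ε', p)).2) ε‖ ≤ η₂)
    (hm₁ : ε₀ * η₁ + δ₁ * R < ‖(A₁₁.symm : X₁ →L[ℝ] X₁)‖⁻¹ * R)
    (hm₂ : η₂ + δ₂ * R < ‖(A₂₂.symm : X₂ →L[ℝ] X₂)‖⁻¹ * R) :
    ∀ ε ∈ Ioc (0:ℝ) ε₀, ∀ x ∈ closedBall p R,
      ∃ M : (X₁ × X₂) ≃L[ℝ] (X₁ × X₂),
        (M : (X₁ × X₂) →L[ℝ] X₁ × X₂) = fderiv ℝ (fun x' => y (ε, x')) x :=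
  derivative_is_isomorphism_under_perturbation_general y ε₀ R hR p hy hy₂ A₁₁ A₂₂ δ₁ δ₂ η₁ η₂ hη₁0
    hη₂0 hδ₁ hδ₂ hm₁ hm₂
end

section
/- Unique transversal intersection of perturbed graphs: Suppose w, v : ℝ × X → X₁ × X₂ are C² and the function y(ε,x) := w(ε,x) − v(ε,x) satisfies the quantitative hypotheses (⋆). For ε ∈ [0,ε₀] let W_ε := {(x, w(ε,x)) : x ∈ B(p,R)} and V_ε := {(x, v(ε,x)) : x ∈ B(p,R)} be the graphs of w(ε,·) and v(ε,·) over the open ball B(p,R). Then for every ε ∈ (0, ε₀] there is exactly one x* ∈ B(p,R) with w(ε,x*) = v(ε,x*); moreover at the intersection point q = (x*, w(ε,x*)) the tangent spaces T_q W_ε = {(z, D_x w(ε,x*) z) : z ∈ X} and T_q V_ε = {(z, D_x v(ε,x*) z) : z ∈ X} satisfy T_q W_ε + T_q V_ε = X × X, i.e. W_ε and V_ε intersect transversally at a unique point. -/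
set_option maxHeartbeats 1000000

open Metric Set ContinuousLinearMap

section Aux
variable {E F : Type*} [NormedAddCommGroup E] [NormedSpace ℝ E]
  [NormedAddCommGroup F] [NormedSpace ℝ F]

/-- fderiv of the slice `x' ↦ f (c, x')`. -/
lemma hasFDerivAt_sliceX {f : ℝ × E → F} (hf : Differentiable ℝ f) (c : ℝ) (x : E) :
    HasFDerivAt (fun x' => f (c, x')) ((fderiv ℝ f (c, x)).comp (inr ℝ ℝ E)) x :=
  (hf (c, x)).hasFDerivAt.comp x (hasFDerivAt_prodMk_right c x)

/-- deriv of the line `t ↦ f (t, x)`. -/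
lemma hasDerivAt_lineT {f : ℝ × E → F} (hf : Differentiable ℝ f) (t : ℝ) (x : E) :
    HasDerivAt (fun s => f (s, x)) ((fderiv ℝ f (t, x)) (1, 0)) t :=
  (hf (t, x)).hasFDerivAt.comp_hasDerivAt t ((hasDerivAt_id t).prodMk (hasDerivAt_const t x))

/-- deriv of `t ↦ (fderiv of slice at x)` for a C² function. -/
lemma hasDerivAt_fderiv_sliceX {f : ℝ × E → F} (hf : ContDiff ℝ 2 f) (t : ℝ) (x : E) :
    HasDerivAt (fun s => (fderiv ℝ f (s, x)).comp (inr ℝ ℝ E))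
      (((fderiv ℝ (fderiv ℝ f) (t, x)) (1, 0)).comp (inr ℝ ℝ E)) t := by
  have hdf : Differentiable ℝ (fderiv ℝ f) :=
    (hf.fderiv_right (m := 1) (by norm_num)).differentiable (by norm_num)
  have h1 : HasDerivAt (fun s => fderiv ℝ f (s, x))
      ((fderiv ℝ (fderiv ℝ f) (t, x)) (1, 0)) t := hasDerivAt_lineT hdf t x
  simpa using h1.clm_comp (hasDerivAt_const t (inr ℝ ℝ E))

end Aux

/-- **Unique transversal intersection of perturbed graphs.**
If `y(ε,x) = w(ε,x) - v(ε,x)` satisfies the quantitative hypotheses (⋆), then for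
every `ε ∈ (0,ε₀]` the graphs of `w(ε,·)` and `v(ε,·)` over the open ball `B(p,R)`
intersect at exactly one point, and at that point the sum of their tangent spaces
is the whole space `X × X` (transversal intersection). -/
theorem unique_transversal_intersection_of_perturbed_graphs
    {X₁ X₂ : Type*}
    [NormedAddCommGroup X₁] [NormedSpace ℝ X₁] [FiniteDimensional ℝ X₁]
    [NormedAddCommGroup X₂] [NormedSpace ℝ X₂] [FiniteDimensional ℝ X₂]
    (y : ℝ × (X₁ × X₂) → X₁ × X₂)
    (w v : ℝ × (X₁ × X₂) → X₁ × X₂)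
    (hw : ContDiff ℝ 2 w) (hv : ContDiff ℝ 2 v)
    (hydef : ∀ q : ℝ × (X₁ × X₂), y q = w q - v q)
    (ε₀ R : ℝ) (hε₀ : 0 < ε₀) (hR : 0 < R)
    (p : X₁ × X₂)
    (hy : ContDiff ℝ 2 y)
    (hyp : y (0, p) = 0)
    (hy₂ : ∀ x ∈ closedBall p R, (y (0, x)).2 = 0)
    (A₁₁ : X₁ ≃L[ℝ] X₁) (A₂₂ : X₂ ≃L[ℝ] X₂)
    (hA₁₁ : (A₁₁ : X₁ →L[ℝ] X₁) = fderiv ℝ (fun x₁ => (y (0, (x₁, p.2))).1) p.1)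
    (hA₂₂ : (A₂₂ : X₂ →L[ℝ] X₂)
      = deriv (fun ε => fderiv ℝ (fun x₂ => (y (ε, (p.1, x₂))).2) p.2) 0)
    (δ₁ δ₂ η₁ η₂ : ℝ)
    (hδ₁0 : 0 ≤ δ₁) (hδ₂0 : 0 ≤ δ₂) (hη₁0 : 0 ≤ η₁) (hη₂0 : 0 ≤ η₂)
    (hδ₁ : ∀ ε ∈ Icc (0:ℝ) ε₀, ∀ x ∈ closedBall p R,
      ‖fderiv ℝ (fun x' => (y (ε, x')).1) x
        - (A₁₁ : X₁ →L[ℝ] X₁).comp (ContinuousLinearMap.fst ℝ X₁ X₂)‖ ≤ δ₁)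
    (hδ₂ : ∀ ε ∈ Icc (0:ℝ) ε₀, ∀ x ∈ closedBall p R,
      ‖deriv (fun ε' => fderiv ℝ (fun x' => (y (ε', x')).2) x) ε
        - (A₂₂ : X₂ →L[ℝ] X₂).comp (ContinuousLinearMap.snd ℝ X₁ X₂)‖ ≤ δ₂)
    (hη₁ : ∀ ε ∈ Icc (0:ℝ) ε₀, ‖deriv (fun ε' => (y (ε', p)).1) ε‖ ≤ η₁)
    (hη₂ : ∀ ε ∈ Icc (0:ℝ) ε₀, ‖deriv (fun ε' => (y (ε', p)).2) ε‖ ≤ η₂)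
    (hm₁ : ε₀ * η₁ + δ₁ * R < ‖(A₁₁.symm : X₁ →L[ℝ] X₁)‖⁻¹ * R)
    (hm₂ : η₂ + δ₂ * R < ‖(A₂₂.symm : X₂ →L[ℝ] X₂)‖⁻¹ * R) :
    ∀ ε ∈ Ioc (0:ℝ) ε₀, ∃ xs ∈ ball p R,
      w (ε, xs) = v (ε, xs) ∧
      (∀ x' ∈ ball p R, w (ε, x') = v (ε, x') → x' = xs) ∧
      ∀ ab : (X₁ × X₂) × (X₁ × X₂), ∃ z₁ z₂ : X₁ × X₂,
        z₁ + z₂ = ab.1 ∧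
        fderiv ℝ (fun x => w (ε, x)) xs z₁ + fderiv ℝ (fun x => v (ε, x)) xs z₂ = ab.2 := by
  intro ε hε
  obtain ⟨hε0, hεε₀⟩ := hε
  have hεne : ε ≠ 0 := ne_of_gt hε0
  have hεIcc : ε ∈ Icc (0:ℝ) ε₀ := ⟨hε0.le, hεε₀⟩
  have hsubIcc : Icc (0:ℝ) ε ⊆ Icc (0:ℝ) ε₀ := Icc_subset_Icc le_rfl hεε₀
  have hydiff : Differentiable ℝ y := hy.differentiable (by norm_num)
  set a := ‖(A₁₁.symm : X₁ →L[ℝ] X₁)‖ with ha_def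
  set b := ‖(A₂₂.symm : X₂ →L[ℝ] X₂)‖ with hb_def
  have ha0 : 0 ≤ a := norm_nonneg _
  have hb0 : 0 ≤ b := norm_nonneg _
  -- positivity of a, b
  have hainv : 0 < a⁻¹ := by
    have h1 : 0 < a⁻¹ * R := lt_of_le_of_lt (by positivity) hm₁
    nlinarith [hR]
  have ha : 0 < a := inv_pos.mp hainv
  have hbinv : 0 < b⁻¹ := by
    have h1 : 0 < b⁻¹ * R := lt_of_le_of_lt (by positivity) hm₂
    nlinarith [hR]
  have hb : 0 < b := inv_pos.mp hbinv
  set k₁ := a * δ₁ with hk₁_def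
  set k₂ := b * δ₂ with hk₂_def
  have hk₁0 : 0 ≤ k₁ := mul_nonneg ha0 hδ₁0
  have hk₂0 : 0 ≤ k₂ := mul_nonneg hb0 hδ₂0
  -- scaled smallness inequalities
  have hgap₁ : a * (ε₀ * η₁) < R - k₁ * R := by
    have h2 : a * (ε₀ * η₁ + δ₁ * R) < a * (a⁻¹ * R) := mul_lt_mul_of_pos_left hm₁ ha
    rw [← mul_assoc, mul_inv_cancel₀ ha.ne', one_mul] at h2
    nlinarith
  have hgap₂ : b * η₂ < R - k₂ * R := by
    have h2 : b * (η₂ + δ₂ * R) < b * (b⁻¹ * R) := mul_lt_mul_of_pos_left hm₂ hb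
    rw [← mul_assoc, mul_inv_cancel₀ hb.ne', one_mul] at h2
    nlinarith
  have hk₁1 : k₁ < 1 := by nlinarith [mul_nonneg (mul_nonneg ha0 hε₀.le) hη₁0]
  have hk₂1 : k₂ < 1 := by nlinarith [mul_nonneg hb0 hη₂0]
  -- the x-derivative of y(ε,·)
  set T : (X₁ × X₂) → ((X₁ × X₂) →L[ℝ] (X₁ × X₂)) :=
    fun x => (fderiv ℝ y (ε, x)).comp (inr ℝ ℝ (X₁ × X₂)) with hT_def
  have hTy : ∀ x : X₁ × X₂, HasFDerivAt (fun x' => y (ε, x')) (T x) x :=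
    fun x => hasFDerivAt_sliceX hydiff ε x
  -- component estimate 1
  have hE₁ : ∀ x ∈ closedBall p R,
      ‖(fst ℝ X₁ X₂).comp (T x) - (A₁₁ : X₁ →L[ℝ] X₁).comp (fst ℝ X₁ X₂)‖ ≤ δ₁ := by
    intro x hx
    have h1 : fderiv ℝ (fun x' => (y (ε, x')).1) x = (fst ℝ X₁ X₂).comp (T x) :=
      ((hTy x).fst).fderiv
    rw [← h1]
    exact hδ₁ ε hεIcc x hx
  -- component estimate 2
  have hE₂ : ∀ x ∈ closedBall p R,
      ‖(snd ℝ X₁ X₂).comp (T x)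
        - ε • ((A₂₂ : X₂ →L[ℝ] X₂).comp (snd ℝ X₁ X₂))‖ ≤ ε * δ₂ := by
    intro x hx
    set g : ℝ → ((X₁ × X₂) →L[ℝ] X₂) :=
      fun s => (snd ℝ X₁ X₂).comp ((fderiv ℝ y (s, x)).comp (inr ℝ ℝ (X₁ × X₂))) with hg_def
    have hg : ∀ s : ℝ, HasDerivAt g
        ((snd ℝ X₁ X₂).comp
          (((fderiv ℝ (fderiv ℝ y) (s, x)) (1, 0)).comp (inr ℝ ℝ (X₁ × X₂)))) s := by
      intro s
      simpa using (hasDerivAt_const s (snd ℝ X₁ X₂)).clm_comp (hasDerivAt_fderiv_sliceX hy s x)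
    -- rewrite the hypothesis as a bound on the derivative of g
    have hfun : (fun ε' => fderiv ℝ (fun x' => (y (ε', x')).2) x) = g :=
      funext fun s => ((hasFDerivAt_sliceX hydiff s x).snd).fderiv
    have hbound : ∀ s ∈ Icc (0:ℝ) ε,
        ‖(snd ℝ X₁ X₂).comp
          (((fderiv ℝ (fderiv ℝ y) (s, x)) (1, 0)).comp (inr ℝ ℝ (X₁ × X₂)))
          - (A₂₂ : X₂ →L[ℝ] X₂).comp (snd ℝ X₁ X₂)‖ ≤ δ₂ := by
      intro s hs
      have := hδ₂ s (hsubIcc hs) x hx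
      rwa [hfun, (hg s).deriv] at this
    -- MVT applied to h(t) = g t - t • (A₂₂ ∘ π₂)
    set c : (X₁ × X₂) →L[ℝ] X₂ := (A₂₂ : X₂ →L[ℝ] X₂).comp (snd ℝ X₁ X₂) with hc_def
    have hh : ∀ s ∈ Icc (0:ℝ) ε, HasDerivWithinAt (fun t => g t - t • c)
        ((snd ℝ X₁ X₂).comp
          (((fderiv ℝ (fderiv ℝ y) (s, x)) (1, 0)).comp (inr ℝ ℝ (X₁ × X₂))) - c)
        (Icc (0:ℝ) ε) s := by
      intro s _
      have := (hg s).sub ((hasDerivAt_id s).smul_const c)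
      rw [one_smul] at this
      exact this.hasDerivWithinAt
    have hmvt := Convex.norm_image_sub_le_of_norm_hasDerivWithin_le
      hh hbound (convex_Icc 0 ε) (left_mem_Icc.mpr hε0.le) (right_mem_Icc.mpr hε0.le)
    -- h ε - h 0 = g ε - ε • c - g 0, and g 0 = 0
    have hg0 : g 0 = 0 := by
      have hcont : Continuous (fun x' : X₁ × X₂ =>
          (snd ℝ X₁ X₂).comp ((fderiv ℝ y (0, x')).comp (inr ℝ ℝ (X₁ × X₂)))) := by
        have c1 : Continuous fun x' : X₁ × X₂ => fderiv ℝ y (0, x') :=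
          ((hy.fderiv_right (m := 1) (by norm_num)).continuous).comp
            (continuous_const.prodMk continuous_id)
        exact continuous_const.clm_comp (c1.clm_comp continuous_const)
      have hball : EqOn (fun x' : X₁ × X₂ =>
          (snd ℝ X₁ X₂).comp ((fderiv ℝ y (0, x')).comp (inr ℝ ℝ (X₁ × X₂))))
          (fun _ => (0 : (X₁ × X₂) →L[ℝ] X₂)) (ball p R) := by
        intro x' hx'
        have hev : (fun x'' => (y (0, x'')).2) =ᶠ[nhds x'] (fun _ => (0 : X₂)) := by
          filter_upwards [isOpen_ball.mem_nhds hx'] with z hz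
          exact hy₂ z (ball_subset_closedBall hz)
        have h2 : fderiv ℝ (fun x'' => (y (0, x'')).2) x' = 0 := by
          rw [hev.fderiv_eq]; exact fderiv_const_apply 0
        have h3 : fderiv ℝ (fun x'' => (y (0, x'')).2) x'
            = (snd ℝ X₁ X₂).comp ((fderiv ℝ y (0, x')).comp (inr ℝ ℝ (X₁ × X₂))) :=
          ((hasFDerivAt_sliceX hydiff 0 x').snd).fderiv
        show (snd ℝ X₁ X₂).comp ((fderiv ℝ y (0, x')).comp (inr ℝ ℝ (X₁ × X₂))) = 0
        rw [← h3]; exact h2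
      have := hball.closure hcont continuous_const
      rw [closure_ball p hR.ne'] at this
      exact this hx
    have : ‖g ε - ε • c - (g 0 - (0:ℝ) • c)‖ ≤ δ₂ * ‖ε - 0‖ := hmvt
    simp only [hg0, zero_smul, sub_zero, Real.norm_eq_abs, abs_of_pos hε0] at this
    calc ‖(snd ℝ X₁ X₂).comp (T x) - ε • c‖ = ‖g ε - ε • c‖ := rfl
      _ ≤ δ₂ * ε := this
      _ = ε * δ₂ := mul_comm _ _
  -- η estimates at p
  have hY₁ : ‖(y (ε, p)).1‖ ≤ ε * η₁ := by
    have hline : ∀ s : ℝ, HasDerivAt (fun t => (y (t, p)).1)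
        (((fderiv ℝ y (s, p)) (1, 0)).1) s := by
      intro s
      exact (ContinuousLinearMap.fst ℝ X₁ X₂).hasFDerivAt.comp_hasDerivAt s
        (hasDerivAt_lineT hydiff s p)
    have hbound : ∀ s ∈ Icc (0:ℝ) ε, ‖((fderiv ℝ y (s, p)) (1, 0)).1‖ ≤ η₁ := by
      intro s hs
      have := hη₁ s (hsubIcc hs)
      rwa [(hline s).deriv] at this
    have hmvt := Convex.norm_image_sub_le_of_norm_hasDerivWithin_le
      (fun s _ => (hline s).hasDerivWithinAt) hbound (convex_Icc 0 ε)
      (left_mem_Icc.mpr hε0.le) (right_mem_Icc.mpr hε0.le)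
    have h0 : (y ((0:ℝ), p)).1 = 0 := by rw [hyp]; rfl
    simp only [h0, sub_zero, Real.norm_eq_abs, abs_of_pos hε0] at hmvt
    rw [mul_comm] at hmvt
    exact hmvt
  have hY₂ : ‖(y (ε, p)).2‖ ≤ ε * η₂ := by
    have hline : ∀ s : ℝ, HasDerivAt (fun t => (y (t, p)).2)
        (((fderiv ℝ y (s, p)) (1, 0)).2) s := by
      intro s
      exact (ContinuousLinearMap.snd ℝ X₁ X₂).hasFDerivAt.comp_hasDerivAt s
        (hasDerivAt_lineT hydiff s p)
    have hbound : ∀ s ∈ Icc (0:ℝ) ε, ‖((fderiv ℝ y (s, p)) (1, 0)).2‖ ≤ η₂ := by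
      intro s hs
      have := hη₂ s (hsubIcc hs)
      rwa [(hline s).deriv] at this
    have hmvt := Convex.norm_image_sub_le_of_norm_hasDerivWithin_le
      (fun s _ => (hline s).hasDerivWithinAt) hbound (convex_Icc 0 ε)
      (left_mem_Icc.mpr hε0.le) (right_mem_Icc.mpr hε0.le)
    have h0 : (y ((0:ℝ), p)).2 = 0 := by rw [hyp]; rfl
    simp only [h0, sub_zero, Real.norm_eq_abs, abs_of_pos hε0] at hmvt
    rw [mul_comm] at hmvt
    exact hmvt
  -- the Newton-type map G
  set G : (X₁ × X₂) → (X₁ × X₂) := fun x =>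
    (x.1 - A₁₁.symm ((y (ε, x)).1), x.2 - ε⁻¹ • A₂₂.symm ((y (ε, x)).2)) with hG_def
  set G₁' : (X₁ × X₂) → ((X₁ × X₂) →L[ℝ] X₁) := fun x =>
    fst ℝ X₁ X₂ - (A₁₁.symm : X₁ →L[ℝ] X₁).comp ((fst ℝ X₁ X₂).comp (T x)) with hG₁'_def
  set G₂' : (X₁ × X₂) → ((X₁ × X₂) →L[ℝ] X₂) := fun x =>
    snd ℝ X₁ X₂ - ε⁻¹ • ((A₂₂.symm : X₂ →L[ℝ] X₂).comp ((snd ℝ X₁ X₂).comp (T x))) with hG₂'_def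
  have hG₁ : ∀ x : X₁ × X₂, HasFDerivAt (fun x' => (G x').1) (G₁' x) x := by
    intro x
    exact hasFDerivAt_fst.sub
      (((A₁₁.symm : X₁ →L[ℝ] X₁).hasFDerivAt).comp x ((hTy x).fst))
  have hG₂ : ∀ x : X₁ × X₂, HasFDerivAt (fun x' => (G x').2) (G₂' x) x := by
    intro x
    exact hasFDerivAt_snd.sub
      ((((A₂₂.symm : X₂ →L[ℝ] X₂).hasFDerivAt).comp x ((hTy x).snd)).const_smul ε⁻¹)
  have hB₁ : ∀ x ∈ closedBall p R, ‖G₁' x‖ ≤ k₁ := by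
    intro x hx
    have hrw : G₁' x = (A₁₁.symm : X₁ →L[ℝ] X₁).comp
        ((A₁₁ : X₁ →L[ℝ] X₁).comp (fst ℝ X₁ X₂) - (fst ℝ X₁ X₂).comp (T x)) := by
      refine ContinuousLinearMap.ext fun z => ?_
      simp [hG₁'_def]
    calc ‖G₁' x‖ = ‖(A₁₁.symm : X₁ →L[ℝ] X₁).comp
          ((A₁₁ : X₁ →L[ℝ] X₁).comp (fst ℝ X₁ X₂) - (fst ℝ X₁ X₂).comp (T x))‖ := by rw [hrw]
      _ ≤ a * ‖(A₁₁ : X₁ →L[ℝ] X₁).comp (fst ℝ X₁ X₂) - (fst ℝ X₁ X₂).comp (T x)‖ :=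
          opNorm_comp_le _ _
      _ = a * ‖(fst ℝ X₁ X₂).comp (T x) - (A₁₁ : X₁ →L[ℝ] X₁).comp (fst ℝ X₁ X₂)‖ := by
          rw [norm_sub_rev]
      _ ≤ a * δ₁ := mul_le_mul_of_nonneg_left (hE₁ x hx) ha0
  have hB₂ : ∀ x ∈ closedBall p R, ‖G₂' x‖ ≤ k₂ := by
    intro x hx
    have hrw : G₂' x = ε⁻¹ • ((A₂₂.symm : X₂ →L[ℝ] X₂).comp
        (ε • ((A₂₂ : X₂ →L[ℝ] X₂).comp (snd ℝ X₁ X₂)) - (snd ℝ X₁ X₂).comp (T x))) := by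
      refine ContinuousLinearMap.ext fun z => ?_
      simp [hG₂'_def, smul_sub, smul_smul, inv_mul_cancel₀ hεne]
    calc ‖G₂' x‖ = ‖ε⁻¹ • ((A₂₂.symm : X₂ →L[ℝ] X₂).comp
          (ε • ((A₂₂ : X₂ →L[ℝ] X₂).comp (snd ℝ X₁ X₂)) - (snd ℝ X₁ X₂).comp (T x)))‖ := by
          rw [hrw]
      _ = ε⁻¹ * ‖(A₂₂.symm : X₂ →L[ℝ] X₂).comp
          (ε • ((A₂₂ : X₂ →L[ℝ] X₂).comp (snd ℝ X₁ X₂)) - (snd ℝ X₁ X₂).comp (T x))‖ := by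
          have hns := norm_smul ε⁻¹ ((A₂₂.symm : X₂ →L[ℝ] X₂).comp
            (ε • ((A₂₂ : X₂ →L[ℝ] X₂).comp (snd ℝ X₁ X₂)) - (snd ℝ X₁ X₂).comp (T x)))
          rw [Real.norm_eq_abs, abs_of_pos (inv_pos.mpr hε0)] at hns
          exact hns
      _ ≤ ε⁻¹ * (b * ‖ε • ((A₂₂ : X₂ →L[ℝ] X₂).comp (snd ℝ X₁ X₂)) - (snd ℝ X₁ X₂).comp (T x)‖)
          := by
          exact mul_le_mul_of_nonneg_left (opNorm_comp_le _ _) (inv_pos.mpr hε0).le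
      _ = ε⁻¹ * (b * ‖(snd ℝ X₁ X₂).comp (T x) - ε • ((A₂₂ : X₂ →L[ℝ] X₂).comp (snd ℝ X₁ X₂))‖)
          := by rw [norm_sub_rev]
      _ ≤ ε⁻¹ * (b * (ε * δ₂)) := by
          exact mul_le_mul_of_nonneg_left
            (mul_le_mul_of_nonneg_left (hE₂ x hx) hb0) (inv_pos.mpr hε0).le
      _ = k₂ := by field_simp [hk₂_def]; ring
  -- componentwise Lipschitz estimates on the closed ball
  have hL₁ : ∀ x' ∈ closedBall p R, ∀ x'' ∈ closedBall p R,
      ‖(G x'').1 - (G x').1‖ ≤ k₁ * ‖x'' - x'‖ := by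
    intro x' hx' x'' hx''
    exact Convex.norm_image_sub_le_of_norm_hasFDerivWithin_le
      (fun z hz => (hG₁ z).hasFDerivWithinAt) hB₁ (convex_closedBall p R) hx' hx''
  have hL₂ : ∀ x' ∈ closedBall p R, ∀ x'' ∈ closedBall p R,
      ‖(G x'').2 - (G x').2‖ ≤ k₂ * ‖x'' - x'‖ := by
    intro x' hx' x'' hx''
    exact Convex.norm_image_sub_le_of_norm_hasFDerivWithin_le
      (fun z hz => (hG₂ z).hasFDerivWithinAt) hB₂ (convex_closedBall p R) hx' hx''
  have hGdist : ∀ x' ∈ closedBall p R, ∀ x'' ∈ closedBall p R,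
      ‖G x'' - G x'‖ ≤ max k₁ k₂ * ‖x'' - x'‖ := by
    intro x' hx' x'' hx''
    rw [Prod.norm_def]
    apply max_le
    · exact le_trans (hL₁ x' hx' x'' hx'')
        (mul_le_mul_of_nonneg_right (le_max_left _ _) (norm_nonneg _))
    · exact le_trans (hL₂ x' hx' x'' hx'')
        (mul_le_mul_of_nonneg_right (le_max_right _ _) (norm_nonneg _))
  -- displacement at p
  have hGp₁ : ‖(G p).1 - p.1‖ ≤ a * (ε₀ * η₁) := by
    have : (G p).1 - p.1 = -(A₁₁.symm ((y (ε, p)).1)) := by simp [hG_def]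
    rw [this, norm_neg]
    calc ‖A₁₁.symm ((y (ε, p)).1)‖ ≤ a * ‖(y (ε, p)).1‖ :=
          (A₁₁.symm : X₁ →L[ℝ] X₁).le_opNorm _
      _ ≤ a * (ε * η₁) := mul_le_mul_of_nonneg_left hY₁ ha0
      _ ≤ a * (ε₀ * η₁) :=
          mul_le_mul_of_nonneg_left (mul_le_mul_of_nonneg_right hεε₀ hη₁0) ha0
  have hGp₂ : ‖(G p).2 - p.2‖ ≤ b * η₂ := by
    have : (G p).2 - p.2 = -(ε⁻¹ • A₂₂.symm ((y (ε, p)).2)) := by simp [hG_def]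
    rw [this, norm_neg, norm_smul, Real.norm_eq_abs, abs_of_pos (inv_pos.mpr hε0)]
    calc ε⁻¹ * ‖A₂₂.symm ((y (ε, p)).2)‖ ≤ ε⁻¹ * (b * ‖(y (ε, p)).2‖) :=
          mul_le_mul_of_nonneg_left ((A₂₂.symm : X₂ →L[ℝ] X₂).le_opNorm _) (inv_pos.mpr hε0).le
      _ ≤ ε⁻¹ * (b * (ε * η₂)) := by
          exact mul_le_mul_of_nonneg_left
            (mul_le_mul_of_nonneg_left hY₂ hb0) (inv_pos.mpr hε0).le
      _ = b * η₂ := by field_simp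
  -- G maps the closed ball into itself
  have hpcb : p ∈ closedBall p R := mem_closedBall_self hR.le
  have hmaps : MapsTo G (closedBall p R) (closedBall p R) := by
    intro x hx
    have hxp : ‖x - p‖ ≤ R := by rwa [mem_closedBall, dist_eq_norm] at hx
    rw [mem_closedBall, dist_eq_norm, Prod.norm_def]
    apply max_le
    · have h1 : ‖(G x).1 - p.1‖ ≤ ‖(G x).1 - (G p).1‖ + ‖(G p).1 - p.1‖ := by
        have := norm_sub_le_norm_sub_add_norm_sub ((G x).1) ((G p).1) p.1
        exact this
      have h2 := hL₁ p hpcb x hx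
      have h3 : k₁ * ‖x - p‖ ≤ k₁ * R := mul_le_mul_of_nonneg_left hxp hk₁0
      show ‖((G x) - p).1‖ ≤ R
      rw [Prod.fst_sub]
      linarith
    · have h1 : ‖(G x).2 - p.2‖ ≤ ‖(G x).2 - (G p).2‖ + ‖(G p).2 - p.2‖ :=
        norm_sub_le_norm_sub_add_norm_sub _ _ _
      have h2 := hL₂ p hpcb x hx
      have h3 : k₂ * ‖x - p‖ ≤ k₂ * R := mul_le_mul_of_nonneg_left hxp hk₂0
      show ‖((G x) - p).2‖ ≤ R
      rw [Prod.snd_sub]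
      linarith
  -- Banach fixed point
  have hcomplete : IsComplete (closedBall p R) := IsClosed.isComplete Metric.isClosed_closedBall
  set K : NNReal := ⟨max k₁ k₂, le_trans hk₁0 (le_max_left _ _)⟩ with hK_def
  have hKc : (K : ℝ) = max k₁ k₂ := rfl
  have hKlt : max k₁ k₂ < 1 := max_lt hk₁1 hk₂1
  have hK1 : K < 1 := by
    rw [← NNReal.coe_lt_coe, hKc, NNReal.coe_one]
    exact hKlt
  have hlips : LipschitzOnWith K G (closedBall p R) := by
    rw [lipschitzOnWith_iff_dist_le_mul]
    intro x hx x' hx'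
    rw [dist_eq_norm, dist_eq_norm, hKc]
    exact hGdist x' hx' x hx
  have hcontr : ContractingWith K (hmaps.restrict G _ _) :=
    ⟨hK1, hlips.mapsToRestrict hmaps⟩
  obtain ⟨xs, hxscb, hfix, -, -⟩ :=
    ContractingWith.exists_fixedPoint' hcomplete hmaps hcontr hpcb (edist_ne_top _ _)
  have hfix' : G xs = xs := hfix
  have hxsp : ‖xs - p‖ ≤ R := by rwa [mem_closedBall, dist_eq_norm] at hxscb
  -- xs lies in the open ball
  have hcomp₁ : ‖xs.1 - p.1‖ < R := by
    have h1 : ‖(G xs).1 - p.1‖ ≤ ‖(G xs).1 - (G p).1‖ + ‖(G p).1 - p.1‖ :=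
      norm_sub_le_norm_sub_add_norm_sub _ _ _
    have h2 := hL₁ p hpcb xs hxscb
    have h3 : k₁ * ‖xs - p‖ ≤ k₁ * R := mul_le_mul_of_nonneg_left hxsp hk₁0
    rw [hfix'] at h1 h2
    linarith
  have hcomp₂ : ‖xs.2 - p.2‖ < R := by
    have h1 : ‖(G xs).2 - p.2‖ ≤ ‖(G xs).2 - (G p).2‖ + ‖(G p).2 - p.2‖ :=
      norm_sub_le_norm_sub_add_norm_sub _ _ _
    have h2 := hL₂ p hpcb xs hxscb
    have h3 : k₂ * ‖xs - p‖ ≤ k₂ * R := mul_le_mul_of_nonneg_left hxsp hk₂0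
    rw [hfix'] at h1 h2
    linarith
  have hxsball : xs ∈ ball p R := by
    rw [mem_ball, dist_eq_norm, Prod.norm_def]
    simp only [Prod.fst_sub, Prod.snd_sub]
    exact max_lt hcomp₁ hcomp₂
  -- the fixed point is a zero of y(ε,·)
  have hyz : y (ε, xs) = 0 := by
    have h1 : (G xs).1 = xs.1 := by rw [hfix']
    have h2 : (G xs).2 = xs.2 := by rw [hfix']
    simp only [hG_def] at h1 h2
    have hy1 : A₁₁.symm ((y (ε, xs)).1) = 0 := sub_eq_self.mp h1
    have hy1' : (y (ε, xs)).1 = 0 := by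
      have := congrArg A₁₁ hy1
      simpa using this
    have hy2 : ε⁻¹ • A₂₂.symm ((y (ε, xs)).2) = 0 := sub_eq_self.mp h2
    have hy2' : (y (ε, xs)).2 = 0 := by
      rcases smul_eq_zero.mp hy2 with h | h
      · exact absurd h (inv_ne_zero hεne)
      · have := congrArg A₂₂ h
        simpa using this
    rw [Prod.ext_iff]
    constructor <;> simp [hy1', hy2']
  have hwv : w (ε, xs) = v (ε, xs) := by
    have h := hydef (ε, xs)
    rw [hyz] at h
    exact sub_eq_zero.mp h.symm
  -- uniqueness
  have huniq : ∀ x' ∈ ball p R, w (ε, x') = v (ε, x') → x' = xs := by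
    intro x' hx' hwv'
    have hx'cb : x' ∈ closedBall p R := ball_subset_closedBall hx'
    have hyz' : y (ε, x') = 0 := by
      rw [hydef (ε, x'), sub_eq_zero]
      exact hwv'
    have hGx' : G x' = x' := by
      simp only [hG_def, hyz']
      simp
    have hd := hGdist xs hxscb x' hx'cb
    rw [hGx', hfix'] at hd
    by_contra hne
    have h0 : 0 < ‖x' - xs‖ := by
      rw [norm_pos_iff, sub_ne_zero]
      exact hne
    have hlt : max k₁ k₂ * ‖x' - xs‖ < 1 * ‖x' - xs‖ := mul_lt_mul_of_pos_right hKlt h0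
    rw [one_mul] at hlt
    linarith
  -- transversality
  have hwdiff : Differentiable ℝ w := hw.differentiable (by norm_num)
  have hvdiff : Differentiable ℝ v := hv.differentiable (by norm_num)
  set Wd : (X₁ × X₂) →L[ℝ] (X₁ × X₂) := (fderiv ℝ w (ε, xs)).comp (inr ℝ ℝ (X₁ × X₂)) with hWd
  set Vd : (X₁ × X₂) →L[ℝ] (X₁ × X₂) := (fderiv ℝ v (ε, xs)).comp (inr ℝ ℝ (X₁ × X₂)) with hVd
  have hW : HasFDerivAt (fun x => w (ε, x)) Wd xs := hasFDerivAt_sliceX hwdiff ε xs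
  have hV : HasFDerivAt (fun x => v (ε, x)) Vd xs := hasFDerivAt_sliceX hvdiff ε xs
  have hTsub : T xs = Wd - Vd := by
    have heq : (fun x => y (ε, x)) = fun x => w (ε, x) - v (ε, x) :=
      funext fun x => hydef (ε, x)
    have h1 : HasFDerivAt (fun x => y (ε, x)) (Wd - Vd) xs := by
      rw [heq]
      exact hW.sub hV
    exact (hTy xs).unique h1
  set M : (X₁ × X₂) →L[ℝ] (X₁ × X₂) :=
    ((A₁₁.symm : X₁ →L[ℝ] X₁).prodMap (ε⁻¹ • (A₂₂.symm : X₂ →L[ℝ] X₂))).comp (T xs) with hM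
  have hMz : ∀ z : X₁ × X₂, ‖z - M z‖ ≤ max k₁ k₂ * ‖z‖ := by
    intro z
    have h1 : (z - M z).1 = G₁' xs z := by simp [hM, hG₁'_def]
    have h2 : (z - M z).2 = G₂' xs z := by simp [hM, hG₂'_def]
    rw [Prod.norm_def, h1, h2]
    apply max_le
    · exact le_trans ((G₁' xs).le_opNorm z) (mul_le_mul_of_nonneg_right
        (le_trans (hB₁ xs hxscb) (le_max_left _ _)) (norm_nonneg _))
    · exact le_trans ((G₂' xs).le_opNorm z) (mul_le_mul_of_nonneg_right
        (le_trans (hB₂ xs hxscb) (le_max_right _ _)) (norm_nonneg _))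
  have hMinj : Function.Injective M := by
    intro z z' hzz
    have h0 : M (z - z') = 0 := by rw [map_sub, hzz, sub_self]
    have hb := hMz (z - z')
    rw [h0, sub_zero] at hb
    by_contra hne
    have hnpos : 0 < ‖z - z'‖ := by
      rw [norm_pos_iff, sub_ne_zero]
      exact hne
    have hlt : max k₁ k₂ * ‖z - z'‖ < 1 * ‖z - z'‖ := mul_lt_mul_of_pos_right hKlt hnpos
    rw [one_mul] at hlt
    linarith
  have hMsurj : Function.Surjective M := by
    have h := LinearMap.injective_iff_surjective
      (f := ((M : (X₁ × X₂) →L[ℝ] (X₁ × X₂)) : (X₁ × X₂) →ₗ[ℝ] (X₁ × X₂)))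
    exact h.mp hMinj
  have hTsurj : ∀ c : X₁ × X₂, ∃ z, T xs z = c := by
    intro c
    obtain ⟨z, hz⟩ := hMsurj (A₁₁.symm c.1, ε⁻¹ • A₂₂.symm c.2)
    refine ⟨z, ?_⟩
    have hz1 : A₁₁.symm ((T xs z).1) = A₁₁.symm c.1 := by
      have := congrArg Prod.fst hz
      simpa [hM] using this
    have hz2 : ε⁻¹ • A₂₂.symm ((T xs z).2) = ε⁻¹ • A₂₂.symm c.2 := by
      have := congrArg Prod.snd hz
      simpa [hM] using this
    have e1 : (T xs z).1 = c.1 := A₁₁.symm.injective hz1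
    have e2 : (T xs z).2 = c.2 := by
      have := smul_right_injective X₂ (inv_ne_zero hεne) hz2
      exact A₂₂.symm.injective this
    rw [Prod.ext_iff]
    exact ⟨e1, e2⟩
  refine ⟨xs, hxsball, hwv, huniq, ?_⟩
  intro ab
  obtain ⟨z₁, hz₁⟩ := hTsurj (ab.2 - Vd ab.1)
  refine ⟨z₁, ab.1 - z₁, by abel, ?_⟩
  rw [hW.fderiv, hV.fderiv]
  rw [hTsub] at hz₁
  have hz₁' : Wd z₁ - Vd z₁ = ab.2 - Vd ab.1 := by
    simpa [ContinuousLinearMap.sub_apply] using hz₁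
  calc Wd z₁ + Vd (ab.1 - z₁) = (Wd z₁ - Vd z₁) + Vd ab.1 := by rw [map_sub]; abel
    _ = ab.2 := by rw [hz₁']; abel
end

section
/- Transversality of graphs over a center coordinate: Let Ω ⊂ ℝ^k × ℝ^c be open, let f, g : Ω → ℝ^k be differentiable at (x₀,z₀) ∈ Ω with f(x₀,z₀) = g(x₀,z₀), and suppose that the partial derivative in the x-direction of f − g at (x₀,z₀), i.e. the linear map ξ ↦ D(f−g)(x₀,z₀)(ξ,0) on ℝ^k, is invertible. Consider the graphs W = {(x, f(x,z), z) : (x,z) ∈ Ω} and V = {(x, g(x,z), z) : (x,z) ∈ Ω} in ℝ^k × ℝ^k × ℝ^c, and the tangent spaces at p = (x₀, f(x₀,z₀), z₀): T_p W = {(ξ, Df(x₀,z₀)(ξ,ζ), ζ) : (ξ,ζ) ∈ ℝ^k × ℝ^c} and T_p V = {(ξ, Dg(x₀,z₀)(ξ,ζ), ζ) : (ξ,ζ) ∈ ℝ^k × ℝ^c}. Then T_p W + T_p V = ℝ^k × ℝ^k × ℝ^c. -/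
/-! Put the whole centre component `d` into the tangent vector of `W`; what remains is a
linear equation in the `x`-component alone, whose operator is the `x`-partial derivative of
`f - g`, and it is solvable because that operator is onto. -/

theorem LinearMap.exists_add_eq_of_surjective_sub_inl {R E F G : Type*} [Ring R]
    [AddCommGroup E] [Module R E] [AddCommGroup F] [Module R F] [AddCommGroup G] [Module R G]
    (A B : E × F →ₗ[R] G) (hAB : Function.Surjective fun ξ : E => A (ξ, 0) - B (ξ, 0))
    (a : E) (b : G) (d : F) :
    ∃ (ξ₁ ξ₂ : E) (ζ₁ ζ₂ : F), ξ₁ + ξ₂ = a ∧ A (ξ₁, ζ₁) + B (ξ₂, ζ₂) = b ∧ ζ₁ + ζ₂ = d := by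
  obtain ⟨ξ, hξ⟩ : ∃ ξ, A (ξ, 0) - B (ξ, 0) = b - A (0, d) - B (a, 0) :=
    hAB (b - A (0, d) - B (a, 0))
  refine ⟨ξ, a - ξ, d, 0, add_sub_cancel ξ a, ?_, add_zero d⟩
  have hsplit_A : A (ξ, d) = A (ξ, 0) + A (0, d) := by
    rw [← map_add, Prod.mk_add_mk, add_zero, zero_add]
  have hsplit_B : B (a - ξ, 0) = B (a, 0) - B (ξ, 0) := by
    rw [← map_sub, Prod.mk_sub_mk, sub_zero]
  rw [eq_sub_iff_add_eq, eq_sub_iff_add_eq] at hξ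
  rw [hsplit_A, hsplit_B, ← hξ]
  abel

theorem transversality_of_graphs_over_center_coordinate_general
    (k c : ℕ)
    (f g : (Fin k → ℝ) × (Fin c → ℝ) → Fin k → ℝ)
    (p₀ : (Fin k → ℝ) × (Fin c → ℝ))
    (hf : DifferentiableAt ℝ f p₀) (hg : DifferentiableAt ℝ g p₀)
    (hinv : Function.Bijective
      (fun ξ : Fin k → ℝ => fderiv ℝ (fun q => f q - g q) p₀ (ξ, 0))) :
    ∀ (a b : Fin k → ℝ) (d : Fin c → ℝ),
      ∃ (ξ₁ ξ₂ : Fin k → ℝ) (ζ₁ ζ₂ : Fin c → ℝ),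
        ξ₁ + ξ₂ = a ∧
        fderiv ℝ f p₀ (ξ₁, ζ₁) + fderiv ℝ g p₀ (ξ₂, ζ₂) = b ∧
        ζ₁ + ζ₂ = d := by
  rw [fderiv_fun_sub hf hg] at hinv
  exact LinearMap.exists_add_eq_of_surjective_sub_inl
    (fderiv ℝ f p₀).toLinearMap (fderiv ℝ g p₀).toLinearMap hinv.surjective

/-- **Transversality of graphs over a center coordinate.**
If `f, g : Ω → ℝ^k` are differentiable at `p₀ = (x₀,z₀)` with `f p₀ = g p₀` and the
`x`-partial derivative of `f - g` at `p₀` is invertible, then the tangent spaces at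
`p = (x₀, f p₀, z₀)` of the graphs `W = {(x, f(x,z), z)}` and `V = {(x, g(x,z), z)}`
together span `ℝ^k × ℝ^k × ℝ^c`. -/
theorem transversality_of_graphs_over_center_coordinate
    (k c : ℕ)
    (Ω : Set ((Fin k → ℝ) × (Fin c → ℝ))) (hΩ : IsOpen Ω)
    (f g : (Fin k → ℝ) × (Fin c → ℝ) → Fin k → ℝ)
    (p₀ : (Fin k → ℝ) × (Fin c → ℝ)) (hp₀ : p₀ ∈ Ω)
    (hf : DifferentiableAt ℝ f p₀) (hg : DifferentiableAt ℝ g p₀)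
    (hfg : f p₀ = g p₀)
    (hinv : Function.Bijective
      (fun ξ : Fin k → ℝ => fderiv ℝ (fun q => f q - g q) p₀ (ξ, 0))) :
    ∀ (a b : Fin k → ℝ) (d : Fin c → ℝ),
      ∃ (ξ₁ ξ₂ : Fin k → ℝ) (ζ₁ ζ₂ : Fin c → ℝ),
        ξ₁ + ξ₂ = a ∧
        fderiv ℝ f p₀ (ξ₁, ζ₁) + fderiv ℝ g p₀ (ξ₂, ζ₂) = b ∧
        ζ₁ + ζ₂ = d :=
  transversality_of_graphs_over_center_coordinate_general k c f g p₀ hf hg hinv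
end

section
/- Transversal intersection of stable and unstable manifolds of a perturbed hyperbolic fixed point: In the fixed-point setting, suppose that for some identification ℝ^k = X₁ × X₂ and some point p and radius R > 0 with the closed ball B̄(p,R) contained in U, the distance function y satisfies the quantitative hypotheses (⋆). Then for every ε ∈ (0, ε₀] there is a unique x* ∈ B(p,R) such that w^u(ε, u(ε, x*)) = w^s(ε, s(ε, x*)); moreover, writing f^u(ε,x) := π_y w^u(ε, u(ε,x)) and f^s(ε,x) := π_y w^s(ε, s(ε,x)), the subspaces {(z, D_x f^u(ε, x*) z) : z ∈ ℝ^k} and {(z, D_x f^s(ε, x*) z) : z ∈ ℝ^k} of ℝ^k × ℝ^k together span ℝ^k × ℝ^k, i.e. the unstable and stable manifolds intersect transversally. -/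
open Metric Set

lemma mvt_from_zero {E : Type*} [NormedAddCommGroup E] [NormedSpace ℝ E]
    {f : ℝ → E} {b C : ℝ} (hb : 0 ≤ b)
    (hf : ∀ t ∈ Icc (0:ℝ) b, DifferentiableAt ℝ f t)
    (h0 : f 0 = 0)
    (hC : ∀ t ∈ Icc (0:ℝ) b, ‖deriv f t‖ ≤ C) :
    ‖f b‖ ≤ C * b := by
  have := norm_image_sub_le_of_norm_deriv_le_segment'
    (f := f) (f' := deriv f) (a := 0) (b := b)
    (fun t ht => ((hf t ht).hasDerivAt).hasDerivWithinAt)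
    (fun t ht => hC t (Ico_subset_Icc_self ht)) b (right_mem_Icc.2 hb)
  simpa [h0] using this

lemma exists_fixedPoint_ball {X : Type*} [NormedAddCommGroup X] [NormedSpace ℝ X]
    [CompleteSpace X] (Φ : X → X) (p : X) (R q : ℝ) (hR : 0 < R)
    (hq0 : 0 ≤ q) (hq : q < 1)
    (hlip : ∀ x ∈ closedBall p R, ∀ x' ∈ closedBall p R, ‖Φ x - Φ x'‖ ≤ q * ‖x - x'‖)
    (hmaps : ∀ x ∈ closedBall p R, Φ x ∈ ball p R) :
    ∃ xs ∈ ball p R, Φ xs = xs ∧ ∀ x' ∈ closedBall p R, Φ x' = x' → x' = xs := by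
  have hcl : IsClosed (closedBall p R) := isClosed_closedBall
  haveI : CompleteSpace (closedBall p R) := hcl.completeSpace_coe
  haveI : Nonempty (closedBall p R) := ⟨⟨p, mem_closedBall_self hR.le⟩⟩
  set f : closedBall p R → closedBall p R :=
    fun x => ⟨Φ x, ball_subset_closedBall (hmaps x x.2)⟩ with hf
  have hcontr : ContractingWith ⟨q, hq0⟩ f := by
    constructor
    · exact_mod_cast hq
    · refine LipschitzWith.of_dist_le_mul fun x x' => ?_
      have := hlip x x.2 x' x'.2
      simp only [hf, Subtype.dist_eq, dist_eq_norm]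
      exact this
  set xf := ContractingWith.fixedPoint f hcontr with hxfdef
  have hfix : f xf = xf := hcontr.fixedPoint_isFixedPt
  have hΦfix : Φ (xf : X) = (xf : X) := congrArg Subtype.val hfix
  refine ⟨xf, ?_, hΦfix, ?_⟩
  · rw [← hΦfix]; exact hmaps _ xf.2
  · intro x' hx' hfx'
    have h := hlip x' hx' xf xf.2
    rw [hfx', hΦfix] at h
    have : (1 - q) * ‖x' - (xf : X)‖ ≤ 0 := by nlinarith [norm_nonneg (x' - (xf:X))]
    have hn : ‖x' - (xf : X)‖ = 0 := by nlinarith [norm_nonneg (x' - (xf:X))]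
    have := norm_sub_eq_zero_iff.mp hn
    exact this

section PartialFDeriv
variable {X F₁ F₂ : Type*} [NormedAddCommGroup X] [NormedSpace ℝ X]
  [NormedAddCommGroup F₁] [NormedSpace ℝ F₁] [NormedAddCommGroup F₂] [NormedSpace ℝ F₂]

noncomputable def Jmap (X : Type*) [NormedAddCommGroup X] [NormedSpace ℝ X] : X →L[ℝ] ℝ × X :=
  (0 : X →L[ℝ] ℝ).prod (ContinuousLinearMap.id ℝ X)

lemma hasFDerivAt_slice (y : ℝ × X → F₁ × F₂) (hy : ContDiff ℝ 2 y) (t : ℝ) (x : X) :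
    HasFDerivAt (fun x' => y (t, x')) ((fderiv ℝ y (t, x)).comp (Jmap X)) x := by
  have h1 : HasFDerivAt y (fderiv ℝ y (t, x)) (t, x) :=
    ((hy.differentiable (by norm_num)) (t, x)).hasFDerivAt
  have h2 : HasFDerivAt (fun x' : X => ((t, x') : ℝ × X)) (Jmap X) x :=
    (hasFDerivAt_const t x).prodMk (hasFDerivAt_id x)
  exact h1.comp x h2

lemma param_fderiv_fst (y : ℝ × X → F₁ × F₂) (hy : ContDiff ℝ 2 y) (t : ℝ) (x : X) :
    fderiv ℝ (fun x' => (y (t, x')).1) x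
      = (ContinuousLinearMap.fst ℝ F₁ F₂).comp ((fderiv ℝ y (t, x)).comp (Jmap X)) :=
  ((hasFDerivAt_slice y hy t x).fst).fderiv

lemma param_fderiv_snd (y : ℝ × X → F₁ × F₂) (hy : ContDiff ℝ 2 y) (t : ℝ) (x : X) :
    fderiv ℝ (fun x' => (y (t, x')).2) x
      = (ContinuousLinearMap.snd ℝ F₁ F₂).comp ((fderiv ℝ y (t, x)).comp (Jmap X)) :=
  ((hasFDerivAt_slice y hy t x).snd).fderiv

lemma diff_param_fderiv_snd (y : ℝ × X → F₁ × F₂) (hy : ContDiff ℝ 2 y) (x : X) :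
    Differentiable ℝ (fun t => fderiv ℝ (fun x' => (y (t, x')).2) x) := by
  have hkey : (fun t => fderiv ℝ (fun x' => (y (t, x')).2) x)
      = fun t => (ContinuousLinearMap.compL ℝ X (F₁ × F₂) F₂ (ContinuousLinearMap.snd ℝ F₁ F₂))
          (((ContinuousLinearMap.compL ℝ X (ℝ × X) (F₁ × F₂)).flip (Jmap X)) (fderiv ℝ y (t, x))) := by
    funext t
    rw [param_fderiv_snd y hy t x]
    rfl
  rw [hkey]
  have hY : Differentiable ℝ (fun t => fderiv ℝ y (t, x)) :=
    ((hy.fderiv_right (m := 1) (by norm_num)).differentiable (by norm_num)).comp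
      (differentiable_id.prodMk (differentiable_const x))
  exact (ContinuousLinearMap.differentiable _).comp
    ((ContinuousLinearMap.differentiable _).comp hY)

lemma cont_param_fderiv (y : ℝ × X → F₁ × F₂) (hy : ContDiff ℝ 2 y) :
    Continuous (fun q : ℝ × X => fderiv ℝ y q) :=
  ((hy.fderiv_right (m := 1) (by norm_num)).differentiable (by norm_num)).continuous

end PartialFDeriv


set_option maxHeartbeats 1000000 in
lemma KE_lemma
    {X₁ X₂ : Type*}
    [NormedAddCommGroup X₁] [NormedSpace ℝ X₁] [FiniteDimensional ℝ X₁]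
    [NormedAddCommGroup X₂] [NormedSpace ℝ X₂] [FiniteDimensional ℝ X₂]
    (ε₀ R : ℝ) (hε₀ : 0 < ε₀) (hR : 0 < R)
    (y : ℝ × (X₁ × X₂) → X₁ × X₂)
    (p : X₁ × X₂)
    (hy : ContDiff ℝ 2 y)
    (hyp : y (0, p) = 0)
    (hy₂ : ∀ x ∈ closedBall p R, (y (0, x)).2 = 0)
    (A₁₁ : X₁ ≃L[ℝ] X₁) (A₂₂ : X₂ ≃L[ℝ] X₂)
    (δ₁ δ₂ η₁ η₂ : ℝ)
    (hδ₁0 : 0 ≤ δ₁) (hδ₂0 : 0 ≤ δ₂) (hη₁0 : 0 ≤ η₁) (hη₂0 : 0 ≤ η₂)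
    (hδ₁ : ∀ ε ∈ Icc (0:ℝ) ε₀, ∀ x ∈ closedBall p R,
      ‖fderiv ℝ (fun x' => (y (ε, x')).1) x
        - (A₁₁ : X₁ →L[ℝ] X₁).comp (ContinuousLinearMap.fst ℝ X₁ X₂)‖ ≤ δ₁)
    (hδ₂ : ∀ ε ∈ Icc (0:ℝ) ε₀, ∀ x ∈ closedBall p R,
      ‖deriv (fun ε' => fderiv ℝ (fun x' => (y (ε', x')).2) x) ε
        - (A₂₂ : X₂ →L[ℝ] X₂).comp (ContinuousLinearMap.snd ℝ X₁ X₂)‖ ≤ δ₂)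
    (hη₁ : ∀ ε ∈ Icc (0:ℝ) ε₀, ‖deriv (fun ε' => (y (ε', p)).1) ε‖ ≤ η₁)
    (hη₂ : ∀ ε ∈ Icc (0:ℝ) ε₀, ‖deriv (fun ε' => (y (ε', p)).2) ε‖ ≤ η₂)
    (hm₁ : ε₀ * η₁ + δ₁ * R < ‖(A₁₁.symm : X₁ →L[ℝ] X₁)‖⁻¹ * R)
    (hm₂ : η₂ + δ₂ * R < ‖(A₂₂.symm : X₂ →L[ℝ] X₂)‖⁻¹ * R)
    (ε : ℝ) (hε0 : 0 < ε) (hεε₀ : ε ≤ ε₀)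
 :
    ∀ x ∈ closedBall p R,
      ‖fderiv ℝ (fun x' => (y (ε, x')).2) x
        - ε • ((A₂₂ : X₂ →L[ℝ] X₂).comp (ContinuousLinearMap.snd ℝ X₁ X₂))‖ ≤ δ₂ * ε := by
  set π₂ := ContinuousLinearMap.snd ℝ X₁ X₂ with hπ₂def
  set B₂ : (X₁ × X₂) → ((X₁ × X₂) →L[ℝ] X₂) :=
    fun x => fderiv ℝ (fun x' => (y (ε, x')).2) x with hB₂def
  -- key estimate : ‖B₂ x - ε • (A₂₂ ∘ π₂)‖ ≤ δ₂ * ε on the closed ball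
  have KE : ∀ x ∈ closedBall p R,
      ‖B₂ x - ε • ((A₂₂ : X₂ →L[ℝ] X₂).comp π₂)‖ ≤ δ₂ * ε := by
    intro x hx
    set C₂ := (A₂₂ : X₂ →L[ℝ] X₂).comp π₂ with hC₂def
    set h : ℝ → ((X₁ × X₂) →L[ℝ] X₂) :=
      fun t => fderiv ℝ (fun x' => (y (t, x')).2) x with hhdef
    have hdiff : Differentiable ℝ h := diff_param_fderiv_snd y hy x
    -- h 0 = 0 on the closed ball, by continuity from the open ball
    have h0 : h 0 = 0 := by
      set g₀ : (X₁ × X₂) → ((X₁ × X₂) →L[ℝ] X₂) := fun z =>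
        (ContinuousLinearMap.compL ℝ (X₁ × X₂) (X₁ × X₂) X₂ π₂)
          (((ContinuousLinearMap.compL ℝ (X₁ × X₂) (ℝ × (X₁ × X₂)) (X₁ × X₂)).flip
            (Jmap (X₁ × X₂))) (fderiv ℝ y (0, z))) with hg₀def
      have hg₀eq : ∀ z, g₀ z = fderiv ℝ (fun x' => (y (0, x')).2) z := by
        intro z
        rw [param_fderiv_snd y hy 0 z]
        rfl
      have hg₀cont : Continuous g₀ := by
        refine (ContinuousLinearMap.continuous _).comp ?_
        refine (ContinuousLinearMap.continuous _).comp ?_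
        exact (cont_param_fderiv y hy).comp (continuous_const.prodMk continuous_id)
      have hEq : EqOn g₀ (fun _ => (0 : (X₁ × X₂) →L[ℝ] X₂)) (ball p R) := by
        intro z hz
        have hz' : (fun x' => (y (0, x')).2) =ᶠ[nhds z] (fun _ => (0 : X₂)) := by
          filter_upwards [isOpen_ball.mem_nhds hz] with w hw
          exact hy₂ w (ball_subset_closedBall hw)
        rw [hg₀eq z, hz'.fderiv_eq, fderiv_fun_const]
        rfl
      have hclose : EqOn g₀ (fun _ => (0 : (X₁ × X₂) →L[ℝ] X₂)) (closure (ball p R)) :=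
        hEq.closure hg₀cont continuous_const
      have hxc : x ∈ closure (ball p R) := by
        rwa [closure_ball p hR.ne']
      have hgx : g₀ x = 0 := hclose hxc
      rw [hhdef]
      simp only []
      rw [← hg₀eq x]
      exact hgx
    -- mean value on [0, ε]
    have hf : ∀ t ∈ Icc (0:ℝ) ε, DifferentiableAt ℝ (fun t' => h t' - t' • C₂) t :=
      fun t _ => (hdiff t).sub ((hasDerivAt_id t).smul_const C₂).differentiableAt
    have hd : ∀ t, deriv (fun t' => h t' - t' • C₂) t = deriv h t - C₂ := by
      intro t
      have h1 : HasDerivAt (fun t' => h t' - t' • C₂) (deriv h t - (1:ℝ) • C₂) t :=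
        ((hdiff t).hasDerivAt).sub ((hasDerivAt_id t).smul_const C₂)
      rw [one_smul] at h1
      exact h1.deriv
    have hbd : ∀ t ∈ Icc (0:ℝ) ε, ‖deriv (fun t' => h t' - t' • C₂) t‖ ≤ δ₂ := by
      intro t ht
      rw [hd t]
      exact hδ₂ t ⟨ht.1, le_trans ht.2 hεε₀⟩ x hx
    have := mvt_from_zero (f := fun t' => h t' - t' • C₂) hε0.le hf (by simp [h0]) hbd
    simpa using this
  exact KE

set_option maxHeartbeats 4000000 in
lemma zero_lemma
    {X₁ X₂ : Type*}
    [NormedAddCommGroup X₁] [NormedSpace ℝ X₁] [FiniteDimensional ℝ X₁]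
    [NormedAddCommGroup X₂] [NormedSpace ℝ X₂] [FiniteDimensional ℝ X₂]
    (ε₀ R : ℝ) (hε₀ : 0 < ε₀) (hR : 0 < R)
    (y : ℝ × (X₁ × X₂) → X₁ × X₂)
    (p : X₁ × X₂)
    (hy : ContDiff ℝ 2 y)
    (hyp : y (0, p) = 0)
    (hy₂ : ∀ x ∈ closedBall p R, (y (0, x)).2 = 0)
    (A₁₁ : X₁ ≃L[ℝ] X₁) (A₂₂ : X₂ ≃L[ℝ] X₂)
    (δ₁ δ₂ η₁ η₂ : ℝ)
    (hδ₁0 : 0 ≤ δ₁) (hδ₂0 : 0 ≤ δ₂) (hη₁0 : 0 ≤ η₁) (hη₂0 : 0 ≤ η₂)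
    (hδ₁ : ∀ ε ∈ Icc (0:ℝ) ε₀, ∀ x ∈ closedBall p R,
      ‖fderiv ℝ (fun x' => (y (ε, x')).1) x
        - (A₁₁ : X₁ →L[ℝ] X₁).comp (ContinuousLinearMap.fst ℝ X₁ X₂)‖ ≤ δ₁)
    (hδ₂ : ∀ ε ∈ Icc (0:ℝ) ε₀, ∀ x ∈ closedBall p R,
      ‖deriv (fun ε' => fderiv ℝ (fun x' => (y (ε', x')).2) x) ε
        - (A₂₂ : X₂ →L[ℝ] X₂).comp (ContinuousLinearMap.snd ℝ X₁ X₂)‖ ≤ δ₂)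
    (hη₁ : ∀ ε ∈ Icc (0:ℝ) ε₀, ‖deriv (fun ε' => (y (ε', p)).1) ε‖ ≤ η₁)
    (hη₂ : ∀ ε ∈ Icc (0:ℝ) ε₀, ‖deriv (fun ε' => (y (ε', p)).2) ε‖ ≤ η₂)
    (hm₁ : ε₀ * η₁ + δ₁ * R < ‖(A₁₁.symm : X₁ →L[ℝ] X₁)‖⁻¹ * R)
    (hm₂ : η₂ + δ₂ * R < ‖(A₂₂.symm : X₂ →L[ℝ] X₂)‖⁻¹ * R)
    (ε : ℝ) (hε0 : 0 < ε) (hεε₀ : ε ≤ ε₀)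
 :
    ∃ xs ∈ ball p R, y (ε, xs) = 0 ∧
      (∀ x' ∈ ball p R, y (ε, x') = 0 → x' = xs) := by
  have hεIcc : ε ∈ Icc (0:ℝ) ε₀ := ⟨hε0.le, hεε₀⟩
  set N₁ := ‖(A₁₁.symm : X₁ →L[ℝ] X₁)‖ with hN₁def
  set N₂ := ‖(A₂₂.symm : X₂ →L[ℝ] X₂)‖ with hN₂def
  have hN₁nn : 0 ≤ N₁ := norm_nonneg _
  have hN₂nn : 0 ≤ N₂ := norm_nonneg _
  have hN₁pos : 0 < N₁ := by
    rcases hN₁nn.lt_or_eq with h | h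
    · exact h
    · exfalso
      rw [← h] at hm₁
      simp only [inv_zero, zero_mul] at hm₁
      nlinarith [mul_nonneg hε₀.le hη₁0, mul_nonneg hδ₁0 hR.le]
  have hN₂pos : 0 < N₂ := by
    rcases hN₂nn.lt_or_eq with h | h
    · exact h
    · exfalso
      rw [← h] at hm₂
      simp only [inv_zero, zero_mul] at hm₂
      nlinarith [mul_nonneg hδ₂0 hR.le]
  have c₁ : N₁ * (ε₀ * η₁) + N₁ * δ₁ * R < R := by
    have h := mul_lt_mul_of_pos_left hm₁ hN₁pos
    have e : N₁ * N₁⁻¹ = 1 := mul_inv_cancel₀ hN₁pos.ne'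
    nlinarith
  have c₂ : N₂ * η₂ + N₂ * δ₂ * R < R := by
    have h := mul_lt_mul_of_pos_left hm₂ hN₂pos
    have e : N₂ * N₂⁻¹ = 1 := mul_inv_cancel₀ hN₂pos.ne'
    nlinarith
  set k₁ := N₁ * δ₁ with hk₁def
  set k₂ := N₂ * δ₂ with hk₂def
  have hk₁nn : 0 ≤ k₁ := mul_nonneg hN₁nn hδ₁0
  have hk₂nn : 0 ≤ k₂ := mul_nonneg hN₂nn hδ₂0
  have hk₁lt : k₁ < 1 := by nlinarith [mul_nonneg (mul_nonneg hN₁nn hε₀.le) hη₁0]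
  have hk₂lt : k₂ < 1 := by nlinarith [mul_nonneg hN₂nn hη₂0]
  set q := max k₁ k₂ with hqdef
  have hqnn : 0 ≤ q := le_trans hk₁nn (le_max_left _ _)
  have hqlt : q < 1 := max_lt hk₁lt hk₂lt
  -- abbreviations
  set π₁ := ContinuousLinearMap.fst ℝ X₁ X₂ with hπ₁def
  set π₂ := ContinuousLinearMap.snd ℝ X₁ X₂ with hπ₂def
  set S₁ := (A₁₁.symm : X₁ →L[ℝ] X₁) with hS₁def
  set S₂ := (A₂₂.symm : X₂ →L[ℝ] X₂) with hS₂def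
  have ydiff : Differentiable ℝ y := hy.differentiable (by norm_num)
  -- estimates at p
  have e₁ : ‖(y (ε, p)).1‖ ≤ η₁ * ε := by
    refine mvt_from_zero (f := fun t => (y (t, p)).1) hε0.le (fun t _ => ?_) (by simp [hyp]) ?_
    · exact (ydiff.comp (differentiable_id.prodMk (differentiable_const p)) t).fst
    · intro t ht
      exact hη₁ t ⟨ht.1, le_trans ht.2 hεε₀⟩
  have e₂ : ‖(y (ε, p)).2‖ ≤ η₂ * ε := by
    refine mvt_from_zero (f := fun t => (y (t, p)).2) hε0.le (fun t _ => ?_) (by simp [hyp]) ?_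
    · exact (ydiff.comp (differentiable_id.prodMk (differentiable_const p)) t).snd
    · intro t ht
      exact hη₂ t ⟨ht.1, le_trans ht.2 hεε₀⟩
  set B₁ : (X₁ × X₂) → ((X₁ × X₂) →L[ℝ] X₁) :=
    fun x => fderiv ℝ (fun x' => (y (ε, x')).1) x with hB₁def
  set B₂ : (X₁ × X₂) → ((X₁ × X₂) →L[ℝ] X₂) :=
    fun x => fderiv ℝ (fun x' => (y (ε, x')).2) x with hB₂def
  have KE : ∀ x ∈ closedBall p R,
      ‖B₂ x - ε • ((A₂₂ : X₂ →L[ℝ] X₂).comp π₂)‖ ≤ δ₂ * ε :=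
    KE_lemma ε₀ R hε₀ hR y p hy hyp hy₂ A₁₁ A₂₂ δ₁ δ₂ η₁ η₂ hδ₁0 hδ₂0 hη₁0 hη₂0
      hδ₁ hδ₂ hη₁ hη₂ hm₁ hm₂ ε hε0 hεε₀
  -- operator norm bounds for the modified Newton map
  have hB₁at : ∀ x : X₁ × X₂, HasFDerivAt (fun x' => (y (ε, x')).1) (B₁ x) x := by
    intro x
    have e : B₁ x = (ContinuousLinearMap.fst ℝ X₁ X₂).comp
        ((fderiv ℝ y (ε, x)).comp (Jmap (X₁ × X₂))) := param_fderiv_fst y hy ε x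
    rw [e]
    exact (hasFDerivAt_slice y hy ε x).fst
  have hB₂at : ∀ x : X₁ × X₂, HasFDerivAt (fun x' => (y (ε, x')).2) (B₂ x) x := by
    intro x
    have e : B₂ x = (ContinuousLinearMap.snd ℝ X₁ X₂).comp
        ((fderiv ℝ y (ε, x)).comp (Jmap (X₁ × X₂))) := param_fderiv_snd y hy ε x
    rw [e]
    exact (hasFDerivAt_slice y hy ε x).snd
  have nb₁ : ∀ x ∈ closedBall p R, ‖π₁ - S₁.comp (B₁ x)‖ ≤ k₁ := by
    intro x hx
    have hid : π₁ - S₁.comp (B₁ x) = S₁.comp ((A₁₁ : X₁ →L[ℝ] X₁).comp π₁ - B₁ x) := by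
      refine ContinuousLinearMap.ext fun v => ?_
      simp [hS₁def, hπ₁def, map_sub]
    rw [hid]
    calc ‖S₁.comp ((A₁₁ : X₁ →L[ℝ] X₁).comp π₁ - B₁ x)‖
        ≤ ‖S₁‖ * ‖(A₁₁ : X₁ →L[ℝ] X₁).comp π₁ - B₁ x‖ := ContinuousLinearMap.opNorm_comp_le _ _
      _ ≤ N₁ * δ₁ := by
          refine mul_le_mul_of_nonneg_left ?_ hN₁nn
          rw [norm_sub_rev]
          exact hδ₁ ε hεIcc x hx
  have nb₂ : ∀ x ∈ closedBall p R, ‖π₂ - ε⁻¹ • S₂.comp (B₂ x)‖ ≤ k₂ := by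
    intro x hx
    have hid : π₂ - ε⁻¹ • S₂.comp (B₂ x)
        = ε⁻¹ • (S₂.comp (ε • ((A₂₂ : X₂ →L[ℝ] X₂).comp π₂) - B₂ x)) := by
      refine ContinuousLinearMap.ext fun v => ?_
      simp [hS₂def, hπ₂def, smul_smul, inv_mul_cancel₀ hε0.ne', smul_sub, map_sub]
    rw [hid]
    rw [norm_smul ε⁻¹ (S₂.comp (ε • ((A₂₂ : X₂ →L[ℝ] X₂).comp π₂) - B₂ x)), Real.norm_eq_abs, abs_of_pos (inv_pos.mpr hε0)]
    calc ε⁻¹ * ‖S₂.comp (ε • ((A₂₂ : X₂ →L[ℝ] X₂).comp π₂) - B₂ x)‖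
        ≤ ε⁻¹ * (‖S₂‖ * ‖ε • ((A₂₂ : X₂ →L[ℝ] X₂).comp π₂) - B₂ x‖) := by
          exact mul_le_mul_of_nonneg_left (ContinuousLinearMap.opNorm_comp_le _ _)
            (inv_pos.mpr hε0).le
      _ ≤ ε⁻¹ * (N₂ * (δ₂ * ε)) := by
          refine mul_le_mul_of_nonneg_left ?_ (inv_pos.mpr hε0).le
          refine mul_le_mul_of_nonneg_left ?_ hN₂nn
          rw [norm_sub_rev]
          exact KE x hx
      _ = k₂ := by field_simp [hk₂def]; ring
  -- the Newton-type map
  set Φ : (X₁ × X₂) → (X₁ × X₂) :=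
    fun x => (x.1 - S₁ ((y (ε, x)).1), x.2 - ε⁻¹ • S₂ ((y (ε, x)).2)) with hΦdef
  have hψ₁ : ∀ x : X₁ × X₂, HasFDerivAt (fun x' : X₁ × X₂ => x'.1 - S₁ ((y (ε, x')).1))
      (π₁ - S₁.comp (B₁ x)) x := by
    intro x
    exact (hasFDerivAt_fst).sub ((S₁.hasFDerivAt).comp x (hB₁at x))
  have hψ₂ : ∀ x : X₁ × X₂, HasFDerivAt (fun x' : X₁ × X₂ => x'.2 - ε⁻¹ • S₂ ((y (ε, x')).2))
      (π₂ - ε⁻¹ • S₂.comp (B₂ x)) x := by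
    intro x
    exact (hasFDerivAt_snd).sub (((S₂.hasFDerivAt).comp x (hB₂at x)).const_smul ε⁻¹)
  have lip₁ : ∀ x ∈ closedBall p R, ∀ x' ∈ closedBall p R,
      ‖(x.1 - S₁ ((y (ε, x)).1)) - (x'.1 - S₁ ((y (ε, x')).1))‖ ≤ k₁ * ‖x - x'‖ := by
    intro x hx x' hx'
    exact (convex_closedBall p R).norm_image_sub_le_of_norm_hasFDerivWithin_le
      (fun z hz => (hψ₁ z).hasFDerivWithinAt) nb₁ hx' hx
  have lip₂ : ∀ x ∈ closedBall p R, ∀ x' ∈ closedBall p R,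
      ‖(x.2 - ε⁻¹ • S₂ ((y (ε, x)).2)) - (x'.2 - ε⁻¹ • S₂ ((y (ε, x')).2))‖ ≤ k₂ * ‖x - x'‖ := by
    intro x hx x' hx'
    exact (convex_closedBall p R).norm_image_sub_le_of_norm_hasFDerivWithin_le
      (fun z hz => (hψ₂ z).hasFDerivWithinAt) nb₂ hx' hx
  have hlip : ∀ x ∈ closedBall p R, ∀ x' ∈ closedBall p R, ‖Φ x - Φ x'‖ ≤ q * ‖x - x'‖ := by
    intro x hx x' hx'
    have hsplit : Φ x - Φ x'
        = ((x.1 - S₁ ((y (ε, x)).1)) - (x'.1 - S₁ ((y (ε, x')).1)),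
           (x.2 - ε⁻¹ • S₂ ((y (ε, x)).2)) - (x'.2 - ε⁻¹ • S₂ ((y (ε, x')).2))) := rfl
    rw [hsplit, Prod.norm_def]
    refine max_le ?_ ?_
    · exact le_trans (lip₁ x hx x' hx')
        (mul_le_mul_of_nonneg_right (le_max_left _ _) (norm_nonneg _))
    · exact le_trans (lip₂ x hx x' hx')
        (mul_le_mul_of_nonneg_right (le_max_right _ _) (norm_nonneg _))
  have hmaps : ∀ x ∈ closedBall p R, Φ x ∈ ball p R := by
    intro x hx
    have hxR : ‖x - p‖ ≤ R := by rwa [mem_closedBall, dist_eq_norm] at hx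
    have hc1 : ‖(x.1 - S₁ ((y (ε, x)).1)) - p.1‖ < R := by
      have t1 : ‖(x.1 - S₁ ((y (ε, x)).1)) - (p.1 - S₁ ((y (ε, p)).1))‖ ≤ k₁ * ‖x - p‖ :=
        lip₁ x hx p (mem_closedBall_self hR.le)
      have t2 : ‖S₁ ((y (ε, p)).1)‖ ≤ N₁ * (η₁ * ε) :=
        le_trans (S₁.le_opNorm _) (mul_le_mul_of_nonneg_left e₁ hN₁nn)
      have t3 : ‖(x.1 - S₁ ((y (ε, x)).1)) - p.1‖
          ≤ ‖(x.1 - S₁ ((y (ε, x)).1)) - (p.1 - S₁ ((y (ε, p)).1))‖ + ‖S₁ ((y (ε, p)).1)‖ := by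
        have : (x.1 - S₁ ((y (ε, x)).1)) - p.1
            = ((x.1 - S₁ ((y (ε, x)).1)) - (p.1 - S₁ ((y (ε, p)).1))) + (- S₁ ((y (ε, p)).1)) := by
          abel
        rw [this]
        exact le_trans (norm_add_le _ _) (by rw [norm_neg])
      have hk₁x : k₁ * ‖x - p‖ ≤ k₁ * R := mul_le_mul_of_nonneg_left hxR hk₁nn
      have hεη : N₁ * (η₁ * ε) ≤ N₁ * (ε₀ * η₁) := by
        nlinarith [mul_nonneg hN₁nn hη₁0]
      calc ‖(x.1 - S₁ ((y (ε, x)).1)) - p.1‖ ≤ k₁ * ‖x - p‖ + N₁ * (η₁ * ε) := by linarith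
        _ < R := by nlinarith
    have hc2 : ‖(x.2 - ε⁻¹ • S₂ ((y (ε, x)).2)) - p.2‖ < R := by
      have t1 : ‖(x.2 - ε⁻¹ • S₂ ((y (ε, x)).2)) - (p.2 - ε⁻¹ • S₂ ((y (ε, p)).2))‖
          ≤ k₂ * ‖x - p‖ := lip₂ x hx p (mem_closedBall_self hR.le)
      have t2 : ‖ε⁻¹ • S₂ ((y (ε, p)).2)‖ ≤ N₂ * η₂ := by
        rw [norm_smul ε⁻¹ (S₂ ((y (ε, p)).2)), Real.norm_eq_abs, abs_of_pos (inv_pos.mpr hε0)]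
        have := le_trans (S₂.le_opNorm ((y (ε, p)).2)) (mul_le_mul_of_nonneg_left e₂ hN₂nn)
        calc ε⁻¹ * ‖S₂ ((y (ε, p)).2)‖ ≤ ε⁻¹ * (N₂ * (η₂ * ε)) :=
              mul_le_mul_of_nonneg_left this (inv_pos.mpr hε0).le
          _ = N₂ * η₂ := by field_simp
      have t3 : ‖(x.2 - ε⁻¹ • S₂ ((y (ε, x)).2)) - p.2‖
          ≤ ‖(x.2 - ε⁻¹ • S₂ ((y (ε, x)).2)) - (p.2 - ε⁻¹ • S₂ ((y (ε, p)).2))‖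
            + ‖ε⁻¹ • S₂ ((y (ε, p)).2)‖ := by
        have : (x.2 - ε⁻¹ • S₂ ((y (ε, x)).2)) - p.2
            = ((x.2 - ε⁻¹ • S₂ ((y (ε, x)).2)) - (p.2 - ε⁻¹ • S₂ ((y (ε, p)).2)))
              + (- (ε⁻¹ • S₂ ((y (ε, p)).2))) := by abel
        rw [this]
        exact le_trans (norm_add_le _ _) (by rw [norm_neg])
      have hk₂x : k₂ * ‖x - p‖ ≤ k₂ * R := mul_le_mul_of_nonneg_left hxR hk₂nn
      calc ‖(x.2 - ε⁻¹ • S₂ ((y (ε, x)).2)) - p.2‖ ≤ k₂ * ‖x - p‖ + N₂ * η₂ := by linarith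
        _ < R := by nlinarith
    rw [mem_ball, dist_eq_norm]
    have hsplit : Φ x - p = ((x.1 - S₁ ((y (ε, x)).1)) - p.1,
        (x.2 - ε⁻¹ • S₂ ((y (ε, x)).2)) - p.2) := rfl
    rw [hsplit, Prod.norm_def]
    exact max_lt hc1 hc2
  obtain ⟨xs, hxs, hfix, huniq⟩ := exists_fixedPoint_ball Φ p R q hR hqnn hqlt hlip hmaps
  refine ⟨xs, hxs, ?_, ?_⟩
  · have h1 := congrArg Prod.fst hfix
    have h2 := congrArg Prod.snd hfix
    simp only [hΦdef] at h1 h2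
    have hz1 : (y (ε, xs)).1 = 0 := by
      have hs1 : S₁ ((y (ε, xs)).1) = 0 := sub_eq_self.mp h1
      calc (y (ε, xs)).1 = A₁₁ (S₁ ((y (ε, xs)).1)) := by
            rw [hS₁def]; exact (A₁₁.apply_symm_apply _).symm
        _ = A₁₁ 0 := by rw [hs1]
        _ = 0 := map_zero _
    have hz2 : (y (ε, xs)).2 = 0 := by
      have hs0 : ε⁻¹ • S₂ ((y (ε, xs)).2) = 0 := sub_eq_self.mp h2
      have hs2 : S₂ ((y (ε, xs)).2) = 0 :=
        (smul_eq_zero.mp hs0).resolve_left (inv_ne_zero hε0.ne')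
      calc (y (ε, xs)).2 = A₂₂ (S₂ ((y (ε, xs)).2)) := by
            rw [hS₂def]; exact (A₂₂.apply_symm_apply _).symm
        _ = A₂₂ 0 := by rw [hs2]
        _ = 0 := map_zero _
    have : y (ε, xs) = ((y (ε, xs)).1, (y (ε, xs)).2) := rfl
    rw [this, hz1, hz2]
    rfl
  · intro x' hx' hy0
    have hΦx : Φ x' = x' := by
      simp only [hΦdef, hy0]
      simp
    exact huniq x' (ball_subset_closedBall hx') hΦx

set_option maxHeartbeats 1000000 in
lemma surj_lemma
    {X₁ X₂ : Type*}
    [NormedAddCommGroup X₁] [NormedSpace ℝ X₁] [FiniteDimensional ℝ X₁]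
    [NormedAddCommGroup X₂] [NormedSpace ℝ X₂] [FiniteDimensional ℝ X₂]
    (ε₀ R : ℝ) (hε₀ : 0 < ε₀) (hR : 0 < R)
    (y : ℝ × (X₁ × X₂) → X₁ × X₂)
    (p : X₁ × X₂)
    (hy : ContDiff ℝ 2 y)
    (hyp : y (0, p) = 0)
    (hy₂ : ∀ x ∈ closedBall p R, (y (0, x)).2 = 0)
    (A₁₁ : X₁ ≃L[ℝ] X₁) (A₂₂ : X₂ ≃L[ℝ] X₂)
    (δ₁ δ₂ η₁ η₂ : ℝ)
    (hδ₁0 : 0 ≤ δ₁) (hδ₂0 : 0 ≤ δ₂) (hη₁0 : 0 ≤ η₁) (hη₂0 : 0 ≤ η₂)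
    (hδ₁ : ∀ ε ∈ Icc (0:ℝ) ε₀, ∀ x ∈ closedBall p R,
      ‖fderiv ℝ (fun x' => (y (ε, x')).1) x
        - (A₁₁ : X₁ →L[ℝ] X₁).comp (ContinuousLinearMap.fst ℝ X₁ X₂)‖ ≤ δ₁)
    (hδ₂ : ∀ ε ∈ Icc (0:ℝ) ε₀, ∀ x ∈ closedBall p R,
      ‖deriv (fun ε' => fderiv ℝ (fun x' => (y (ε', x')).2) x) ε
        - (A₂₂ : X₂ →L[ℝ] X₂).comp (ContinuousLinearMap.snd ℝ X₁ X₂)‖ ≤ δ₂)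
    (hη₁ : ∀ ε ∈ Icc (0:ℝ) ε₀, ‖deriv (fun ε' => (y (ε', p)).1) ε‖ ≤ η₁)
    (hη₂ : ∀ ε ∈ Icc (0:ℝ) ε₀, ‖deriv (fun ε' => (y (ε', p)).2) ε‖ ≤ η₂)
    (hm₁ : ε₀ * η₁ + δ₁ * R < ‖(A₁₁.symm : X₁ →L[ℝ] X₁)‖⁻¹ * R)
    (hm₂ : η₂ + δ₂ * R < ‖(A₂₂.symm : X₂ →L[ℝ] X₂)‖⁻¹ * R)
    (ε : ℝ) (hε0 : 0 < ε) (hεε₀ : ε ≤ ε₀)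
 (x : X₁ × X₂) (hx : x ∈ closedBall p R) :
    ∀ c : X₁ × X₂, ∃ v : X₁ × X₂,
      fderiv ℝ (fun x' => (y (ε, x')).1) x v = c.1 ∧
      fderiv ℝ (fun x' => (y (ε, x')).2) x v = c.2 := by
  have hεIcc : ε ∈ Icc (0:ℝ) ε₀ := ⟨hε0.le, hεε₀⟩
  set N₁ := ‖(A₁₁.symm : X₁ →L[ℝ] X₁)‖ with hN₁def
  set N₂ := ‖(A₂₂.symm : X₂ →L[ℝ] X₂)‖ with hN₂def
  have hN₁nn : 0 ≤ N₁ := norm_nonneg _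
  have hN₂nn : 0 ≤ N₂ := norm_nonneg _
  have hN₁pos : 0 < N₁ := by
    rcases hN₁nn.lt_or_eq with h | h
    · exact h
    · exfalso
      rw [← h] at hm₁
      simp only [inv_zero, zero_mul] at hm₁
      nlinarith [mul_nonneg hε₀.le hη₁0, mul_nonneg hδ₁0 hR.le]
  have hN₂pos : 0 < N₂ := by
    rcases hN₂nn.lt_or_eq with h | h
    · exact h
    · exfalso
      rw [← h] at hm₂
      simp only [inv_zero, zero_mul] at hm₂
      nlinarith [mul_nonneg hδ₂0 hR.le]
  have c₁ : N₁ * (ε₀ * η₁) + N₁ * δ₁ * R < R := by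
    have h := mul_lt_mul_of_pos_left hm₁ hN₁pos
    have e : N₁ * N₁⁻¹ = 1 := mul_inv_cancel₀ hN₁pos.ne'
    nlinarith
  have c₂ : N₂ * η₂ + N₂ * δ₂ * R < R := by
    have h := mul_lt_mul_of_pos_left hm₂ hN₂pos
    have e : N₂ * N₂⁻¹ = 1 := mul_inv_cancel₀ hN₂pos.ne'
    nlinarith
  set k₁ := N₁ * δ₁ with hk₁def
  set k₂ := N₂ * δ₂ with hk₂def
  have hk₁nn : 0 ≤ k₁ := mul_nonneg hN₁nn hδ₁0
  have hk₂nn : 0 ≤ k₂ := mul_nonneg hN₂nn hδ₂0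
  have hk₁lt : k₁ < 1 := by nlinarith [mul_nonneg (mul_nonneg hN₁nn hε₀.le) hη₁0]
  have hk₂lt : k₂ < 1 := by nlinarith [mul_nonneg hN₂nn hη₂0]
  set q := max k₁ k₂ with hqdef
  have hqnn : 0 ≤ q := le_trans hk₁nn (le_max_left _ _)
  have hqlt : q < 1 := max_lt hk₁lt hk₂lt
  set π₁ := ContinuousLinearMap.fst ℝ X₁ X₂ with hπ₁def
  set π₂ := ContinuousLinearMap.snd ℝ X₁ X₂ with hπ₂def
  set S₁ := (A₁₁.symm : X₁ →L[ℝ] X₁) with hS₁def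
  set S₂ := (A₂₂.symm : X₂ →L[ℝ] X₂) with hS₂def
  set B₁ : (X₁ × X₂) →L[ℝ] X₁ := fderiv ℝ (fun x' => (y (ε, x')).1) x with hB₁def
  set B₂ : (X₁ × X₂) →L[ℝ] X₂ := fderiv ℝ (fun x' => (y (ε, x')).2) x with hB₂def
  have KE : ‖B₂ - ε • ((A₂₂ : X₂ →L[ℝ] X₂).comp π₂)‖ ≤ δ₂ * ε :=
    KE_lemma ε₀ R hε₀ hR y p hy hyp hy₂ A₁₁ A₂₂ δ₁ δ₂ η₁ η₂ hδ₁0 hδ₂0 hη₁0 hη₂0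
      hδ₁ hδ₂ hη₁ hη₂ hm₁ hm₂ ε hε0 hεε₀ x hx
  have nb₁ : ‖π₁ - S₁.comp B₁‖ ≤ k₁ := by
    have hid : π₁ - S₁.comp B₁ = S₁.comp ((A₁₁ : X₁ →L[ℝ] X₁).comp π₁ - B₁) := by
      refine ContinuousLinearMap.ext fun v => ?_
      simp [hS₁def, hπ₁def, map_sub]
    rw [hid]
    calc ‖S₁.comp ((A₁₁ : X₁ →L[ℝ] X₁).comp π₁ - B₁)‖
        ≤ ‖S₁‖ * ‖(A₁₁ : X₁ →L[ℝ] X₁).comp π₁ - B₁‖ := ContinuousLinearMap.opNorm_comp_le _ _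
      _ ≤ N₁ * δ₁ := by
          refine mul_le_mul_of_nonneg_left ?_ hN₁nn
          rw [norm_sub_rev]
          exact hδ₁ ε hεIcc x hx
  have nb₂ : ‖π₂ - ε⁻¹ • S₂.comp B₂‖ ≤ k₂ := by
    have hid : π₂ - ε⁻¹ • S₂.comp B₂
        = ε⁻¹ • (S₂.comp (ε • ((A₂₂ : X₂ →L[ℝ] X₂).comp π₂) - B₂)) := by
      refine ContinuousLinearMap.ext fun v => ?_
      simp [hS₂def, hπ₂def, smul_smul, inv_mul_cancel₀ hε0.ne', smul_sub, map_sub]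
    rw [hid]
    rw [norm_smul ε⁻¹ (S₂.comp (ε • ((A₂₂ : X₂ →L[ℝ] X₂).comp π₂) - B₂)),
      Real.norm_eq_abs, abs_of_pos (inv_pos.mpr hε0)]
    calc ε⁻¹ * ‖S₂.comp (ε • ((A₂₂ : X₂ →L[ℝ] X₂).comp π₂) - B₂)‖
        ≤ ε⁻¹ * (‖S₂‖ * ‖ε • ((A₂₂ : X₂ →L[ℝ] X₂).comp π₂) - B₂‖) := by
          exact mul_le_mul_of_nonneg_left (ContinuousLinearMap.opNorm_comp_le _ _)
            (inv_pos.mpr hε0).le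
      _ ≤ ε⁻¹ * (N₂ * (δ₂ * ε)) := by
          refine mul_le_mul_of_nonneg_left ?_ (inv_pos.mpr hε0).le
          refine mul_le_mul_of_nonneg_left ?_ hN₂nn
          rw [norm_sub_rev]
          exact KE
      _ = k₂ := by field_simp [hk₂def]; ring
  -- the approximate inverse map
  set M : (X₁ × X₂) →L[ℝ] (X₁ × X₂) := (S₁.comp B₁).prod (ε⁻¹ • S₂.comp B₂) with hMdef
  have hb : ‖1 - M‖ ≤ q := by
    refine ContinuousLinearMap.opNorm_le_bound _ hqnn fun v => ?_
    have hv : (1 - M) v = ((π₁ - S₁.comp B₁) v, (π₂ - ε⁻¹ • S₂.comp B₂) v) := by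
      simp [hMdef, hπ₁def, hπ₂def, Prod.ext_iff]
    rw [hv, Prod.norm_def]
    refine max_le ?_ ?_
    · calc ‖(π₁ - S₁.comp B₁) v‖ ≤ ‖π₁ - S₁.comp B₁‖ * ‖v‖ := ContinuousLinearMap.le_opNorm _ v
        _ ≤ k₁ * ‖v‖ := mul_le_mul_of_nonneg_right nb₁ (norm_nonneg v)
        _ ≤ q * ‖v‖ := mul_le_mul_of_nonneg_right (le_max_left _ _) (norm_nonneg v)
    · calc ‖(π₂ - ε⁻¹ • S₂.comp B₂) v‖ ≤ ‖π₂ - ε⁻¹ • S₂.comp B₂‖ * ‖v‖ :=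
            ContinuousLinearMap.le_opNorm _ v
        _ ≤ k₂ * ‖v‖ := mul_le_mul_of_nonneg_right nb₂ (norm_nonneg v)
        _ ≤ q * ‖v‖ := mul_le_mul_of_nonneg_right (le_max_right _ _) (norm_nonneg v)
  have hlt : ‖(1 : (X₁ × X₂) →L[ℝ] (X₁ × X₂)) - M‖ < 1 := lt_of_le_of_lt hb hqlt
  set uu : ((X₁ × X₂) →L[ℝ] (X₁ × X₂))ˣ := Units.oneSub ((1 : (X₁ × X₂) →L[ℝ] (X₁ × X₂)) - M) hlt
    with huudef
  have huval : (uu : (X₁ × X₂) →L[ℝ] (X₁ × X₂)) = M := by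
    rw [huudef, Units.val_oneSub]
    exact sub_sub_cancel 1 M
  intro c
  set w : X₁ × X₂ := (S₁ c.1, ε⁻¹ • S₂ c.2) with hwdef
  set v : X₁ × X₂ := (↑uu⁻¹ : (X₁ × X₂) →L[ℝ] (X₁ × X₂)) w with hvdef
  have hMv : M v = w := by
    rw [hvdef, ← huval]
    calc (uu : (X₁ × X₂) →L[ℝ] (X₁ × X₂)) ((↑uu⁻¹ : (X₁ × X₂) →L[ℝ] (X₁ × X₂)) w)
        = ((uu : (X₁ × X₂) →L[ℝ] (X₁ × X₂)) * (↑uu⁻¹ : (X₁ × X₂) →L[ℝ] (X₁ × X₂))) w := rfl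
      _ = w := by rw [uu.mul_inv]; rfl
  have hM1 : S₁ (B₁ v) = S₁ c.1 := by
    have := congrArg Prod.fst hMv
    simpa [hMdef, hwdef] using this
  have hM2 : ε⁻¹ • S₂ (B₂ v) = ε⁻¹ • S₂ c.2 := by
    have := congrArg Prod.snd hMv
    simpa [hMdef, hwdef] using this
  refine ⟨v, ?_, ?_⟩
  · calc B₁ v = A₁₁ (S₁ (B₁ v)) := by rw [hS₁def]; exact (A₁₁.apply_symm_apply _).symm
      _ = A₁₁ (S₁ c.1) := by rw [hM1]
      _ = c.1 := by rw [hS₁def]; exact A₁₁.apply_symm_apply _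
  · have hs2 : S₂ (B₂ v) = S₂ c.2 := smul_right_injective X₂ (inv_ne_zero hε0.ne') hM2
    calc B₂ v = A₂₂ (S₂ (B₂ v)) := by rw [hS₂def]; exact (A₂₂.apply_symm_apply _).symm
      _ = A₂₂ (S₂ c.2) := by rw [hs2]
      _ = c.2 := by rw [hS₂def]; exact A₂₂.apply_symm_apply _

/-- **Transversal intersection of stable and unstable manifolds of a perturbed
hyperbolic fixed point.**  In the fixed-point setting, with `ℝ^k` identified with
`X₁ × X₂` and the distance function `y(ε,x) = π_y wᵘ(ε,u(ε,x)) - π_y wˢ(ε,s(ε,x))`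
satisfying the quantitative hypotheses (⋆), for every `ε ∈ (0,ε₀]` there is a
unique `x* ∈ B(p,R)` with `wᵘ(ε,u(ε,x*)) = wˢ(ε,s(ε,x*))`, and the tangent spaces
(graphs of `D_x fᵘ` and `D_x fˢ` at `x*`) together span `ℝ^k × ℝ^k`. -/
theorem fixed_point_stable_unstable_transversal_intersection
    {X₁ X₂ : Type*}
    [NormedAddCommGroup X₁] [NormedSpace ℝ X₁] [FiniteDimensional ℝ X₁]
    [NormedAddCommGroup X₂] [NormedSpace ℝ X₂] [FiniteDimensional ℝ X₂]
    (ε₀ R : ℝ) (hε₀ : 0 < ε₀) (hR : 0 < R)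
    (U : Set (X₁ × X₂)) (hU : IsOpen U)
    (wu ws : ℝ × (X₁ × X₂) → (X₁ × X₂) × (X₁ × X₂))
    (hwu : ContDiffOn ℝ 2 wu (Icc 0 ε₀ ×ˢ (univ : Set (X₁ × X₂))))
    (hws : ContDiffOn ℝ 2 ws (Icc 0 ε₀ ×ˢ (univ : Set (X₁ × X₂))))
    (u s : ℝ × (X₁ × X₂) → X₁ × X₂)
    (hu : ContDiffOn ℝ 2 u (Icc 0 ε₀ ×ˢ U))
    (hs : ContDiffOn ℝ 2 s (Icc 0 ε₀ ×ˢ U))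
    (hux : ∀ ε ∈ Icc (0:ℝ) ε₀, ∀ x ∈ U, (wu (ε, u (ε, x))).1 = x)
    (hsx : ∀ ε ∈ Icc (0:ℝ) ε₀, ∀ x ∈ U, (ws (ε, s (ε, x))).1 = x)
    (y : ℝ × (X₁ × X₂) → X₁ × X₂)
    (hydef : ∀ ε x, y (ε, x) = (wu (ε, u (ε, x))).2 - (ws (ε, s (ε, x))).2)
    (p : X₁ × X₂) (hpU : closedBall p R ⊆ U)
    (hy : ContDiff ℝ 2 y)
    (hyp : y (0, p) = 0)
    (hy₂ : ∀ x ∈ closedBall p R, (y (0, x)).2 = 0)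
    (A₁₁ : X₁ ≃L[ℝ] X₁) (A₂₂ : X₂ ≃L[ℝ] X₂)
    (hA₁₁ : (A₁₁ : X₁ →L[ℝ] X₁) = fderiv ℝ (fun x₁ => (y (0, (x₁, p.2))).1) p.1)
    (hA₂₂ : (A₂₂ : X₂ →L[ℝ] X₂)
      = deriv (fun ε => fderiv ℝ (fun x₂ => (y (ε, (p.1, x₂))).2) p.2) 0)
    (δ₁ δ₂ η₁ η₂ : ℝ)
    (hδ₁0 : 0 ≤ δ₁) (hδ₂0 : 0 ≤ δ₂) (hη₁0 : 0 ≤ η₁) (hη₂0 : 0 ≤ η₂)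
    (hδ₁ : ∀ ε ∈ Icc (0:ℝ) ε₀, ∀ x ∈ closedBall p R,
      ‖fderiv ℝ (fun x' => (y (ε, x')).1) x
        - (A₁₁ : X₁ →L[ℝ] X₁).comp (ContinuousLinearMap.fst ℝ X₁ X₂)‖ ≤ δ₁)
    (hδ₂ : ∀ ε ∈ Icc (0:ℝ) ε₀, ∀ x ∈ closedBall p R,
      ‖deriv (fun ε' => fderiv ℝ (fun x' => (y (ε', x')).2) x) ε
        - (A₂₂ : X₂ →L[ℝ] X₂).comp (ContinuousLinearMap.snd ℝ X₁ X₂)‖ ≤ δ₂)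
    (hη₁ : ∀ ε ∈ Icc (0:ℝ) ε₀, ‖deriv (fun ε' => (y (ε', p)).1) ε‖ ≤ η₁)
    (hη₂ : ∀ ε ∈ Icc (0:ℝ) ε₀, ‖deriv (fun ε' => (y (ε', p)).2) ε‖ ≤ η₂)
    (hm₁ : ε₀ * η₁ + δ₁ * R < ‖(A₁₁.symm : X₁ →L[ℝ] X₁)‖⁻¹ * R)
    (hm₂ : η₂ + δ₂ * R < ‖(A₂₂.symm : X₂ →L[ℝ] X₂)‖⁻¹ * R) :
    ∀ ε ∈ Ioc (0:ℝ) ε₀, ∃ xs ∈ ball p R,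
      wu (ε, u (ε, xs)) = ws (ε, s (ε, xs)) ∧
      (∀ x' ∈ ball p R, wu (ε, u (ε, x')) = ws (ε, s (ε, x')) → x' = xs) ∧
      ∀ ab : (X₁ × X₂) × (X₁ × X₂), ∃ z₁ z₂ : X₁ × X₂,
        z₁ + z₂ = ab.1 ∧
        fderiv ℝ (fun x => (wu (ε, u (ε, x))).2) xs z₁
          + fderiv ℝ (fun x => (ws (ε, s (ε, x))).2) xs z₂ = ab.2 := by
  intro ε hε
  obtain ⟨hε0, hεε₀⟩ := hε
  have hεIcc : ε ∈ Icc (0:ℝ) ε₀ := ⟨hε0.le, hεε₀⟩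
  obtain ⟨xs, hxs, hy0, huniq⟩ := zero_lemma ε₀ R hε₀ hR y p hy hyp hy₂ A₁₁ A₂₂ δ₁ δ₂ η₁ η₂
    hδ₁0 hδ₂0 hη₁0 hη₂0 hδ₁ hδ₂ hη₁ hη₂ hm₁ hm₂ ε hε0 hεε₀
  have hxsU : xs ∈ U := hpU (ball_subset_closedBall hxs)
  refine ⟨xs, hxs, ?_, ?_, ?_⟩
  · have h2' := hydef ε xs
    rw [hy0] at h2'
    have h2 : (wu (ε, u (ε, xs))).2 = (ws (ε, s (ε, xs))).2 := sub_eq_zero.mp h2'.symm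
    have h1 : (wu (ε, u (ε, xs))).1 = (ws (ε, s (ε, xs))).1 := by
      rw [hux ε hεIcc xs hxsU, hsx ε hεIcc xs hxsU]
    exact Prod.ext h1 h2
  · intro x' hx' heq
    refine huniq x' hx' ?_
    rw [hydef ε x', heq, sub_self]
  · have hu_slice : ContDiffOn ℝ 2 (fun x => u (ε, x)) U :=
      hu.comp ((contDiff_const.prodMk contDiff_id).contDiffOn) (fun x hx => ⟨hεIcc, hx⟩)
    have hs_slice : ContDiffOn ℝ 2 (fun x => s (ε, x)) U :=
      hs.comp ((contDiff_const.prodMk contDiff_id).contDiffOn) (fun x hx => ⟨hεIcc, hx⟩)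
    have hwu_slice : ContDiffOn ℝ 2 (fun x => wu (ε, u (ε, x))) U :=
      hwu.comp (contDiffOn_const.prodMk hu_slice) (fun x hx => ⟨hεIcc, mem_univ _⟩)
    have hws_slice : ContDiffOn ℝ 2 (fun x => ws (ε, s (ε, x))) U :=
      hws.comp (contDiffOn_const.prodMk hs_slice) (fun x hx => ⟨hεIcc, mem_univ _⟩)
    have hfu : DifferentiableAt ℝ (fun x => (wu (ε, u (ε, x))).2) xs :=
      (((hwu_slice.differentiableOn (by norm_num)).differentiableAt (hU.mem_nhds hxsU))).snd
    have hfs : DifferentiableAt ℝ (fun x => (ws (ε, s (ε, x))).2) xs :=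
      (((hws_slice.differentiableOn (by norm_num)).differentiableAt (hU.mem_nhds hxsU))).snd
    set Dfu := fderiv ℝ (fun x => (wu (ε, u (ε, x))).2) xs with hDfu
    set Dfs := fderiv ℝ (fun x => (ws (ε, s (ε, x))).2) xs with hDfs
    have hyeq : (fun x' => y (ε, x'))
        = fun x' => (wu (ε, u (ε, x'))).2 - (ws (ε, s (ε, x'))).2 :=
      funext fun x' => hydef ε x'
    have hyd : HasFDerivAt (fun x' => y (ε, x')) (Dfu - Dfs) xs := by
      rw [hyeq]
      exact hfu.hasFDerivAt.sub hfs.hasFDerivAt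
    have h1 : fderiv ℝ (fun x' => (y (ε, x')).1) xs
        = (ContinuousLinearMap.fst ℝ X₁ X₂).comp (Dfu - Dfs) := (hyd.fst).fderiv
    have h2 : fderiv ℝ (fun x' => (y (ε, x')).2) xs
        = (ContinuousLinearMap.snd ℝ X₁ X₂).comp (Dfu - Dfs) := (hyd.snd).fderiv
    intro ab
    obtain ⟨v, hv1, hv2⟩ := surj_lemma ε₀ R hε₀ hR y p hy hyp hy₂ A₁₁ A₂₂ δ₁ δ₂ η₁ η₂
      hδ₁0 hδ₂0 hη₁0 hη₂0 hδ₁ hδ₂ hη₁ hη₂ hm₁ hm₂ ε hε0 hεε₀ xs (ball_subset_closedBall hxs)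
      (ab.2 - Dfs ab.1)
    rw [h1] at hv1
    rw [h2] at hv2
    have hall : Dfu v - Dfs v = ab.2 - Dfs ab.1 := by
      have e1 : (Dfu v - Dfs v).1 = (ab.2 - Dfs ab.1).1 := by simpa using hv1
      have e2 : (Dfu v - Dfs v).2 = (ab.2 - Dfs ab.1).2 := by simpa using hv2
      exact Prod.ext e1 e2
    refine ⟨v, ab.1 - v, by abel, ?_⟩
    calc Dfu v + Dfs (ab.1 - v) = (Dfu v - Dfs v) + Dfs ab.1 := by rw [map_sub]; abel
      _ = (ab.2 - Dfs ab.1) + Dfs ab.1 := by rw [hall]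
      _ = ab.2 := by abel
end

section
/- Transversal intersection of center-unstable and center-stable manifolds of different dimensions: In the different-dimensions setting (with u < s), suppose that for some identification ℝ^u = X₁ × X₂ and some point p and radius R > 0 with the closed ball B̄(p,R) contained in U, the distance function y satisfies the quantitative hypotheses (⋆). Fix ε ∈ (0, ε₀]. Then there exists x* ∈ B(p,R) such that, with v* := π_v w^{cu}(ε, cu(ε, x*, z*)), the point q := w^{cu}(ε, cu(ε, x*, z*)) equals w^{cs}(ε, cs(ε, x*, v*, z*)); moreover, writing G^{cu}(x,z) := w^{cu}(ε, cu(ε,x,z)) and G^{cs}(x,v,z) := w^{cs}(ε, cs(ε,x,v,z)), the ranges of the derivatives D G^{cu}(x*, z*) : ℝ^{u+c} → ℝ^n and D G^{cs}(x*, v*, z*) : ℝ^{s+c} → ℝ^n together span ℝ^n; i.e. the two manifolds intersect transversally at q. -/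
open Metric Set

private lemma sliceDiffAt {α β : Type*} [NormedAddCommGroup α] [NormedSpace ℝ α]
    [NormedAddCommGroup β] [NormedSpace ℝ β] {f : ℝ × α → β} {ε₀ : ℝ} {S : Set α}
    (hf : ContDiffOn ℝ 2 f (Icc 0 ε₀ ×ˢ S)) (hS : IsOpen S) {ε : ℝ}
    (hε : ε ∈ Icc 0 ε₀) {a : α} (ha : a ∈ S) :
    DifferentiableAt ℝ (fun w => f (ε, w)) a := by
  have h1 : DifferentiableWithinAt ℝ f (Icc 0 ε₀ ×ˢ S) (ε, a) :=
    (hf.differentiableOn (by norm_num)) _ ⟨hε, ha⟩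
  have h2 : DifferentiableWithinAt ℝ (f ∘ (fun w => (ε, w))) S a :=
    h1.comp a ((DifferentiableAt.prodMk (differentiableAt_const ε) differentiableAt_id).differentiableWithinAt)
      (fun w hw => ⟨hε, hw⟩)
  exact h2.differentiableAt (hS.mem_nhds ha)

private lemma mvt_deriv' {Y : Type*} [NormedAddCommGroup Y] [NormedSpace ℝ Y]
    {g : ℝ → Y} {g' : ℝ → Y} {s : Set ℝ} (hs : Convex ℝ s)
    (hg : ∀ t ∈ s, HasDerivWithinAt g (g' t) s t) {φ : Y} {C : ℝ}
    (hb : ∀ t ∈ s, ‖g' t - φ‖ ≤ C) {a b : ℝ} (ha : a ∈ s) (hbs : b ∈ s) :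
    ‖g b - g a - (b - a) • φ‖ ≤ C * ‖b - a‖ := by
  have key := Convex.norm_image_sub_le_of_norm_hasFDerivWithin_le'
    (f := g) (f' := fun t => ContinuousLinearMap.smulRight (1 : ℝ →L[ℝ] ℝ) (g' t))
    (φ := ContinuousLinearMap.smulRight (1 : ℝ →L[ℝ] ℝ) φ) (C := C) (s := s)
    (fun t ht => (hg t ht).hasFDerivWithinAt) ?_ hs ha hbs
  · simpa using key
  · intro t ht
    have : ContinuousLinearMap.smulRight (1 : ℝ →L[ℝ] ℝ) (g' t)
        - ContinuousLinearMap.smulRight (1 : ℝ →L[ℝ] ℝ) φ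
        = ContinuousLinearMap.smulRight (1 : ℝ →L[ℝ] ℝ) (g' t - φ) := by
      ext; simp
    rw [this, ContinuousLinearMap.norm_smulRight_apply]
    simpa using hb t ht

set_option maxHeartbeats 1600000 in
/-- **Transversal intersection of center-unstable and center-stable manifolds of
different dimensions.**  In the different-dimensions setting (`u < s`), with `ℝ^u`
identified with `X₁ × X₂` and the distance function satisfying the quantitative
hypotheses (⋆), for fixed `ε ∈ (0,ε₀]` there is `x* ∈ B(p,R)` such that, with
`v* = π_v w^{cu}(ε,cu(ε,x*,z*))`, the point `w^{cu}(ε,cu(ε,x*,z*))` equals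
`w^{cs}(ε,cs(ε,x*,v*,z*))`, and the ranges of the derivatives of
`G^{cu}(x,z) = w^{cu}(ε,cu(ε,x,z))` and `G^{cs}(x,v,z) = w^{cs}(ε,cs(ε,x,v,z))`
at `(x*,z*)` resp. `(x*,v*,z*)` together span `ℝ^n`. -/
theorem different_dimensions_transversal_intersection
    {X₁ X₂ : Type*}
    [NormedAddCommGroup X₁] [NormedSpace ℝ X₁] [FiniteDimensional ℝ X₁]
    [NormedAddCommGroup X₂] [NormedSpace ℝ X₂] [FiniteDimensional ℝ X₂]
    (u s c : ℕ) (hu : 1 ≤ u) (hus : u < s) (ε₀ R : ℝ) (hε₀ : 0 < ε₀) (hR : 0 < R)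
    (U : Set (X₁ × X₂)) (hU : IsOpen U)
    (V : Set (Fin (s - u) → ℝ)) (hV : IsOpen V)
    (K : Set (Fin c → ℝ)) (hK : IsOpen K)
    (wcu : ℝ × ((X₁ × X₂) × (Fin c → ℝ)) →
      (X₁ × X₂) × (X₁ × X₂) × (Fin (s - u) → ℝ) × (Fin c → ℝ))
    (wcs : ℝ × ((X₁ × X₂) × (Fin (s - u) → ℝ) × (Fin c → ℝ)) →
      (X₁ × X₂) × (X₁ × X₂) × (Fin (s - u) → ℝ) × (Fin c → ℝ))
    (hwcu : ContDiffOn ℝ 2 wcu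
      (Icc 0 ε₀ ×ˢ (univ : Set ((X₁ × X₂) × (Fin c → ℝ)))))
    (hwcs : ContDiffOn ℝ 2 wcs
      (Icc 0 ε₀ ×ˢ (univ : Set ((X₁ × X₂) × (Fin (s - u) → ℝ) × (Fin c → ℝ)))))
    (cu : ℝ × (X₁ × X₂) × (Fin c → ℝ) → (X₁ × X₂) × (Fin c → ℝ))
    (cs : ℝ × (X₁ × X₂) × (Fin (s - u) → ℝ) × (Fin c → ℝ) →
      (X₁ × X₂) × (Fin (s - u) → ℝ) × (Fin c → ℝ))
    (hcu : ContDiffOn ℝ 2 cu (Icc 0 ε₀ ×ˢ U ×ˢ K))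
    (hcs : ContDiffOn ℝ 2 cs (Icc 0 ε₀ ×ˢ U ×ˢ V ×ˢ K))
    (hcux : ∀ ε ∈ Icc (0:ℝ) ε₀, ∀ x ∈ U, ∀ z ∈ K,
      ((wcu (ε, cu (ε, x, z))).1, (wcu (ε, cu (ε, x, z))).2.2.2) = (x, z))
    (hcsx : ∀ ε ∈ Icc (0:ℝ) ε₀, ∀ x ∈ U, ∀ v ∈ V, ∀ z ∈ K,
      ((wcs (ε, cs (ε, x, v, z))).1, (wcs (ε, cs (ε, x, v, z))).2.2.1,
        (wcs (ε, cs (ε, x, v, z))).2.2.2) = (x, v, z))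
    (zs : Fin c → ℝ) (hzs : zs ∈ K)
    (hvV : ∀ ε ∈ Icc (0:ℝ) ε₀, ∀ x ∈ U, (wcu (ε, cu (ε, x, zs))).2.2.1 ∈ V)
    (y : ℝ × (X₁ × X₂) → X₁ × X₂)
    (hydef : ∀ ε x, y (ε, x) = (wcu (ε, cu (ε, x, zs))).2.1
      - (wcs (ε, cs (ε, x, (wcu (ε, cu (ε, x, zs))).2.2.1, zs))).2.1)
    (p : X₁ × X₂) (hpU : closedBall p R ⊆ U)
    (hy : ContDiff ℝ 2 y)
    (hyp : y (0, p) = 0)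
    (hy₂ : ∀ x ∈ closedBall p R, (y (0, x)).2 = 0)
    (A₁₁ : X₁ ≃L[ℝ] X₁) (A₂₂ : X₂ ≃L[ℝ] X₂)
    (hA₁₁ : (A₁₁ : X₁ →L[ℝ] X₁) = fderiv ℝ (fun x₁ => (y (0, (x₁, p.2))).1) p.1)
    (hA₂₂ : (A₂₂ : X₂ →L[ℝ] X₂)
      = deriv (fun ε => fderiv ℝ (fun x₂ => (y (ε, (p.1, x₂))).2) p.2) 0)
    (δ₁ δ₂ η₁ η₂ : ℝ)
    (hδ₁0 : 0 ≤ δ₁) (hδ₂0 : 0 ≤ δ₂) (hη₁0 : 0 ≤ η₁) (hη₂0 : 0 ≤ η₂)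
    (hδ₁ : ∀ ε ∈ Icc (0:ℝ) ε₀, ∀ x ∈ closedBall p R,
      ‖fderiv ℝ (fun x' => (y (ε, x')).1) x
        - (A₁₁ : X₁ →L[ℝ] X₁).comp (ContinuousLinearMap.fst ℝ X₁ X₂)‖ ≤ δ₁)
    (hδ₂ : ∀ ε ∈ Icc (0:ℝ) ε₀, ∀ x ∈ closedBall p R,
      ‖deriv (fun ε' => fderiv ℝ (fun x' => (y (ε', x')).2) x) ε
        - (A₂₂ : X₂ →L[ℝ] X₂).comp (ContinuousLinearMap.snd ℝ X₁ X₂)‖ ≤ δ₂)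
    (hη₁ : ∀ ε ∈ Icc (0:ℝ) ε₀, ‖deriv (fun ε' => (y (ε', p)).1) ε‖ ≤ η₁)
    (hη₂ : ∀ ε ∈ Icc (0:ℝ) ε₀, ‖deriv (fun ε' => (y (ε', p)).2) ε‖ ≤ η₂)
    (hm₁ : ε₀ * η₁ + δ₁ * R < ‖(A₁₁.symm : X₁ →L[ℝ] X₁)‖⁻¹ * R)
    (hm₂ : η₂ + δ₂ * R < ‖(A₂₂.symm : X₂ →L[ℝ] X₂)‖⁻¹ * R)
    (ε : ℝ) (hε : ε ∈ Ioc 0 ε₀) :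
    ∃ xs ∈ ball p R, ∃ vs : Fin (s - u) → ℝ,
      vs = (wcu (ε, cu (ε, xs, zs))).2.2.1 ∧
      wcu (ε, cu (ε, xs, zs)) = wcs (ε, cs (ε, xs, vs, zs)) ∧
      ∀ q : (X₁ × X₂) × (X₁ × X₂) × (Fin (s - u) → ℝ) × (Fin c → ℝ),
        ∃ (acu : (X₁ × X₂) × (Fin c → ℝ))
          (acs : (X₁ × X₂) × (Fin (s - u) → ℝ) × (Fin c → ℝ)),
          fderiv ℝ (fun w : (X₁ × X₂) × (Fin c → ℝ) =>
              wcu (ε, cu (ε, w.1, w.2))) (xs, zs) acu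
          + fderiv ℝ (fun w : (X₁ × X₂) × (Fin (s - u) → ℝ) × (Fin c → ℝ) =>
              wcs (ε, cs (ε, w.1, w.2.1, w.2.2))) (xs, vs, zs) acs = q := by
  have hε0 : 0 < ε := hε.1
  have hεI : ε ∈ Icc (0:ℝ) ε₀ := ⟨hε.1.le, hε.2⟩
  have h0I : (0:ℝ) ∈ Icc (0:ℝ) ε₀ := ⟨le_rfl, hε₀.le⟩
  have hyd : Differentiable ℝ y := hy.differentiable (by norm_num)
  have hfd : ContDiff ℝ 1 (fderiv ℝ y) := hy.fderiv_right (by norm_num)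
  set J : (X₁ × X₂) →L[ℝ] ℝ × (X₁ × X₂) :=
    (0 : (X₁ × X₂) →L[ℝ] ℝ).prod (ContinuousLinearMap.id ℝ (X₁ × X₂)) with hJ
  -- slice derivatives of `y`
  have hsl : ∀ (ε' : ℝ) (x : X₁ × X₂),
      HasFDerivAt (fun x' => y (ε', x')) ((fderiv ℝ y (ε', x)).comp J) x := by
    intro ε' x
    exact (hyd (ε', x)).hasFDerivAt.comp x
      (HasFDerivAt.prodMk (hasFDerivAt_const ε' x) (hasFDerivAt_id x))
  have hsl1 : ∀ (ε' : ℝ) (x : X₁ × X₂),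
      HasFDerivAt (fun x' => (y (ε', x')).1)
        (fderiv ℝ (fun x' => (y (ε', x')).1) x) x := by
    intro ε' x
    exact ((hsl ε' x).fst).differentiableAt.hasFDerivAt
  have hsl2 : ∀ (ε' : ℝ) (x : X₁ × X₂),
      HasFDerivAt (fun x' => (y (ε', x')).2)
        (fderiv ℝ (fun x' => (y (ε', x')).2) x) x := by
    intro ε' x
    exact ((hsl ε' x).snd).differentiableAt.hasFDerivAt
  -- (E1)
  have est1 : ∀ x ∈ closedBall p R, ∀ x' ∈ closedBall p R,
      ‖(y (ε, x)).1 - (y (ε, x')).1 - A₁₁ (x.1 - x'.1)‖ ≤ δ₁ * ‖x - x'‖ := by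
    intro x hx x' hx'
    have key := Convex.norm_image_sub_le_of_norm_hasFDerivWithin_le'
      (f := fun x' => (y (ε, x')).1)
      (f' := fun z => fderiv ℝ (fun x' => (y (ε, x')).1) z)
      (φ := (A₁₁ : X₁ →L[ℝ] X₁).comp (ContinuousLinearMap.fst ℝ X₁ X₂))
      (C := δ₁) (s := closedBall p R)
      (fun z _ => (hsl1 ε z).hasFDerivWithinAt)
      (fun z hz => hδ₁ ε hεI z hz) (convex_closedBall p R) hx' hx
    simpa using key
  -- (E2)
  have D2zero : ∀ x ∈ closedBall p R, fderiv ℝ (fun x' => (y (0, x')).2) x = 0 := by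
    have hball : EqOn (fun x => fderiv ℝ (fun x' => (y (0, x')).2) x)
        (fun _ => (0 : (X₁ × X₂) →L[ℝ] X₂)) (ball p R) := by
      intro x hx
      have hev : (fun x' => (y (0, x')).2) =ᶠ[nhds x] (fun _ => (0 : X₂)) := by
        filter_upwards [isOpen_ball.mem_nhds hx] with z hz
        exact hy₂ z (ball_subset_closedBall hz)
      show fderiv ℝ (fun x' => (y (0, x')).2) x = 0
      rw [hev.fderiv_eq]
      exact fderiv_const_apply 0
    have hcont : Continuous (fun x => fderiv ℝ (fun x' => (y (0, x')).2) x) := by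
      have hfe : (fun x => fderiv ℝ (fun x' => (y (0, x')).2) x)
          = fun x => (ContinuousLinearMap.snd ℝ X₁ X₂).comp ((fderiv ℝ y (0, x)).comp J) :=
        funext fun x => ((hsl 0 x).snd).fderiv
      rw [hfe]
      exact continuous_const.clm_comp
        (((hfd.continuous).comp (continuous_const.prodMk continuous_id)).clm_comp
          continuous_const)
    have hcl := hball.closure hcont continuous_const
    intro x hx
    have hx2 : x ∈ closure (ball p R) := by
      rw [closure_ball p hR.ne']; exact hx
    exact hcl hx2
  -- (E3)
  have D2est : ∀ ε' ∈ Icc (0:ℝ) ε₀, ∀ x ∈ closedBall p R,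
      ‖fderiv ℝ (fun x' => (y (ε', x')).2) x
        - ε' • ((A₂₂ : X₂ →L[ℝ] X₂).comp (ContinuousLinearMap.snd ℝ X₁ X₂))‖
        ≤ δ₂ * ε' := by
    intro ε' hε' x hx
    have hgeq : (fun t => fderiv ℝ (fun x' => (y (t, x')).2) x)
        = fun t => (ContinuousLinearMap.snd ℝ X₁ X₂).comp ((fderiv ℝ y (t, x)).comp J) :=
      funext fun t => ((hsl t x).snd).fderiv
    have hgdiff : Differentiable ℝ (fun t => fderiv ℝ (fun x' => (y (t, x')).2) x) := by
      rw [hgeq]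
      exact (differentiable_const _).clm_comp
        (((hfd.differentiable one_ne_zero).comp
            (differentiable_id.prodMk (differentiable_const x))).clm_comp
          (differentiable_const J))
    have key := mvt_deriv' (convex_Icc (0:ℝ) ε₀)
      (g := fun t => fderiv ℝ (fun x' => (y (t, x')).2) x)
      (g' := fun t => deriv (fun t => fderiv ℝ (fun x' => (y (t, x')).2) x) t)
      (fun t _ => (hgdiff t).hasDerivAt.hasDerivWithinAt)
      (φ := (A₂₂ : X₂ →L[ℝ] X₂).comp (ContinuousLinearMap.snd ℝ X₁ X₂)) (C := δ₂)
      (fun t ht => hδ₂ t ht x hx) h0I hε'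
    replace key : ‖fderiv ℝ (fun x' => (y (ε', x')).2) x
        - fderiv ℝ (fun x' => (y ((0:ℝ), x')).2) x
        - (ε' - 0) • ((A₂₂ : X₂ →L[ℝ] X₂).comp (ContinuousLinearMap.snd ℝ X₁ X₂))‖
        ≤ δ₂ * ‖ε' - 0‖ := key
    rw [D2zero x hx] at key
    rw [sub_zero] at key
    rw [sub_zero] at key
    calc ‖fderiv ℝ (fun x' => (y (ε', x')).2) x
        - ε' • ((A₂₂ : X₂ →L[ℝ] X₂).comp (ContinuousLinearMap.snd ℝ X₁ X₂))‖
        ≤ δ₂ * ‖ε'‖ := key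
      _ = δ₂ * ε' := by rw [Real.norm_of_nonneg hε'.1]
  -- (E4)
  have est2 : ∀ x ∈ closedBall p R, ∀ x' ∈ closedBall p R,
      ‖(y (ε, x)).2 - (y (ε, x')).2 - ε • A₂₂ (x.2 - x'.2)‖ ≤ (δ₂ * ε) * ‖x - x'‖ := by
    intro x hx x' hx'
    have key := Convex.norm_image_sub_le_of_norm_hasFDerivWithin_le'
      (f := fun x' => (y (ε, x')).2)
      (f' := fun z => fderiv ℝ (fun x' => (y (ε, x')).2) z)
      (φ := ε • ((A₂₂ : X₂ →L[ℝ] X₂).comp (ContinuousLinearMap.snd ℝ X₁ X₂)))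
      (C := δ₂ * ε) (s := closedBall p R)
      (fun z _ => (hsl2 ε z).hasFDerivWithinAt)
      (fun z hz => D2est ε hεI z hz)
      (convex_closedBall p R) hx' hx
    simpa using key
  -- (E5), (E6)
  have yp1 : ‖(y (ε, p)).1‖ ≤ ε * η₁ := by
    have h1 : Differentiable ℝ (fun t : ℝ => y (t, p)) :=
      hyd.comp (differentiable_id.prodMk (differentiable_const p))
    have hdiff : Differentiable ℝ (fun t : ℝ => (y (t, p)).1) := h1.fst
    have key := Convex.norm_image_sub_le_of_norm_hasDerivWithin_le (𝕜 := ℝ)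
      (f := fun t : ℝ => (y (t, p)).1)
      (f' := fun t => deriv (fun t : ℝ => (y (t, p)).1) t)
      (s := Icc (0:ℝ) ε₀) (C := η₁)
      (fun t _ => (hdiff t).hasDerivAt.hasDerivWithinAt)
      (fun t ht => hη₁ t ht) (convex_Icc (0:ℝ) ε₀) h0I hεI
    replace key : ‖(y (ε, p)).1 - (y ((0:ℝ), p)).1‖ ≤ η₁ * ‖ε - 0‖ := key
    have h0 : (y ((0:ℝ), p)).1 = 0 := by rw [hyp]; rfl
    rw [h0, sub_zero, sub_zero, Real.norm_of_nonneg hε0.le, mul_comm] at key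
    exact key
  have yp2 : ‖(y (ε, p)).2‖ ≤ ε * η₂ := by
    have h1 : Differentiable ℝ (fun t : ℝ => y (t, p)) :=
      hyd.comp (differentiable_id.prodMk (differentiable_const p))
    have hdiff : Differentiable ℝ (fun t : ℝ => (y (t, p)).2) := h1.snd
    have key := Convex.norm_image_sub_le_of_norm_hasDerivWithin_le (𝕜 := ℝ)
      (f := fun t : ℝ => (y (t, p)).2)
      (f' := fun t => deriv (fun t : ℝ => (y (t, p)).2) t)
      (s := Icc (0:ℝ) ε₀) (C := η₂)
      (fun t _ => (hdiff t).hasDerivAt.hasDerivWithinAt)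
      (fun t ht => hη₂ t ht) (convex_Icc (0:ℝ) ε₀) h0I hεI
    replace key : ‖(y (ε, p)).2 - (y ((0:ℝ), p)).2‖ ≤ η₂ * ‖ε - 0‖ := key
    have h0 : (y ((0:ℝ), p)).2 = 0 := by rw [hyp]; rfl
    rw [h0, sub_zero, sub_zero, Real.norm_of_nonneg hε0.le, mul_comm] at key
    exact key
  -- contraction setup
  set k₁ : ℝ := ‖(A₁₁.symm : X₁ →L[ℝ] X₁)‖ * δ₁ with hk₁def
  set k₂ : ℝ := ‖(A₂₂.symm : X₂ →L[ℝ] X₂)‖ * δ₂ with hk₂def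
  have hn₁ : 0 < ‖(A₁₁.symm : X₁ →L[ℝ] X₁)‖ := by
    by_contra h
    push_neg at h
    have h0 : ‖(A₁₁.symm : X₁ →L[ℝ] X₁)‖ = 0 := le_antisymm h (norm_nonneg _)
    rw [h0, inv_zero, zero_mul] at hm₁
    nlinarith [mul_nonneg hε₀.le hη₁0, mul_nonneg hδ₁0 hR.le]
  have hn₂ : 0 < ‖(A₂₂.symm : X₂ →L[ℝ] X₂)‖ := by
    by_contra h
    push_neg at h
    have h0 : ‖(A₂₂.symm : X₂ →L[ℝ] X₂)‖ = 0 := le_antisymm h (norm_nonneg _)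
    rw [h0, inv_zero, zero_mul] at hm₂
    nlinarith [mul_nonneg hδ₂0 hR.le]
  have hk₁ : k₁ < 1 := by
    have h1 : δ₁ * R < ‖(A₁₁.symm : X₁ →L[ℝ] X₁)‖⁻¹ * R := by
      nlinarith [mul_nonneg hε₀.le hη₁0]
    have h2 : δ₁ < ‖(A₁₁.symm : X₁ →L[ℝ] X₁)‖⁻¹ := (mul_lt_mul_iff_left₀ hR).mp h1
    have h3 := (mul_lt_mul_iff_right₀ hn₁).mpr h2
    rwa [mul_inv_cancel₀ hn₁.ne'] at h3
  have hk₂ : k₂ < 1 := by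
    have h1 : δ₂ * R < ‖(A₂₂.symm : X₂ →L[ℝ] X₂)‖⁻¹ * R := by nlinarith
    have h2 : δ₂ < ‖(A₂₂.symm : X₂ →L[ℝ] X₂)‖⁻¹ := (mul_lt_mul_iff_left₀ hR).mp h1
    have h3 := (mul_lt_mul_iff_right₀ hn₂).mpr h2
    rwa [mul_inv_cancel₀ hn₂.ne'] at h3
  have hk₁0 : 0 ≤ k₁ := mul_nonneg (norm_nonneg _) hδ₁0
  have hk₂0 : 0 ≤ k₂ := mul_nonneg (norm_nonneg _) hδ₂0
  set F : (X₁ × X₂) → (X₁ × X₂) := fun x =>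
    (x.1 - (A₁₁.symm : X₁ →L[ℝ] X₁) ((y (ε, x)).1),
     x.2 - ε⁻¹ • (A₂₂.symm : X₂ →L[ℝ] X₂) ((y (ε, x)).2)) with hF
  have hF1 : ∀ x ∈ closedBall p R, ∀ x' ∈ closedBall p R,
      ‖(F x).1 - (F x').1‖ ≤ k₁ * ‖x - x'‖ := by
    intro x hx x' hx'
    have hrw : (F x).1 - (F x').1
        = -((A₁₁.symm : X₁ →L[ℝ] X₁)
            ((y (ε, x)).1 - (y (ε, x')).1 - A₁₁ (x.1 - x'.1))) := by
      simp only [hF, map_sub, ContinuousLinearEquiv.coe_coe,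
        ContinuousLinearEquiv.symm_apply_apply]
      abel
    rw [hrw, norm_neg]
    calc ‖(A₁₁.symm : X₁ →L[ℝ] X₁) ((y (ε, x)).1 - (y (ε, x')).1 - A₁₁ (x.1 - x'.1))‖
        ≤ ‖(A₁₁.symm : X₁ →L[ℝ] X₁)‖
          * ‖(y (ε, x)).1 - (y (ε, x')).1 - A₁₁ (x.1 - x'.1)‖ :=
          ContinuousLinearMap.le_opNorm _ _
      _ ≤ ‖(A₁₁.symm : X₁ →L[ℝ] X₁)‖ * (δ₁ * ‖x - x'‖) :=
          mul_le_mul_of_nonneg_left (est1 x hx x' hx') (norm_nonneg _)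
      _ = k₁ * ‖x - x'‖ := by rw [hk₁def]; ring
  have hF2 : ∀ x ∈ closedBall p R, ∀ x' ∈ closedBall p R,
      ‖(F x).2 - (F x').2‖ ≤ k₂ * ‖x - x'‖ := by
    intro x hx x' hx'
    have hrw : (F x).2 - (F x').2
        = -(ε⁻¹ • (A₂₂.symm : X₂ →L[ℝ] X₂)
            ((y (ε, x)).2 - (y (ε, x')).2 - ε • A₂₂ (x.2 - x'.2))) := by
      simp only [hF, map_sub, map_smul, smul_sub, ContinuousLinearEquiv.coe_coe,
        ContinuousLinearEquiv.symm_apply_apply, smul_smul,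
        inv_mul_cancel₀ hε0.ne', one_smul]
      abel
    rw [hrw, norm_neg, norm_smul]
    have hεn : ‖ε⁻¹‖ = ε⁻¹ := Real.norm_of_nonneg (inv_nonneg.mpr hε0.le)
    rw [hεn]
    calc ε⁻¹ * ‖(A₂₂.symm : X₂ →L[ℝ] X₂)
            ((y (ε, x)).2 - (y (ε, x')).2 - ε • A₂₂ (x.2 - x'.2))‖
        ≤ ε⁻¹ * (‖(A₂₂.symm : X₂ →L[ℝ] X₂)‖
            * ((δ₂ * ε) * ‖x - x'‖)) := by
          apply mul_le_mul_of_nonneg_left _ (inv_nonneg.mpr hε0.le)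
          exact le_trans (ContinuousLinearMap.le_opNorm _ _)
            (mul_le_mul_of_nonneg_left (est2 x hx x' hx') (norm_nonneg _))
      _ = k₂ * ‖x - x'‖ := by rw [hk₂def]; field_simp
  have hFp1 : ‖(F p).1 - p.1‖ ≤ ‖(A₁₁.symm : X₁ →L[ℝ] X₁)‖ * (ε₀ * η₁) := by
    have hrw : (F p).1 - p.1 = -((A₁₁.symm : X₁ →L[ℝ] X₁) ((y (ε, p)).1)) := by
      simp [hF]
    rw [hrw, norm_neg]
    calc ‖(A₁₁.symm : X₁ →L[ℝ] X₁) ((y (ε, p)).1)‖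
        ≤ ‖(A₁₁.symm : X₁ →L[ℝ] X₁)‖ * ‖(y (ε, p)).1‖ :=
          ContinuousLinearMap.le_opNorm _ _
      _ ≤ ‖(A₁₁.symm : X₁ →L[ℝ] X₁)‖ * (ε * η₁) :=
          mul_le_mul_of_nonneg_left yp1 (norm_nonneg _)
      _ ≤ ‖(A₁₁.symm : X₁ →L[ℝ] X₁)‖ * (ε₀ * η₁) :=
          mul_le_mul_of_nonneg_left
            (mul_le_mul_of_nonneg_right hε.2 hη₁0) (norm_nonneg _)
  have hFp2 : ‖(F p).2 - p.2‖ ≤ ‖(A₂₂.symm : X₂ →L[ℝ] X₂)‖ * η₂ := by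
    have hrw : (F p).2 - p.2 = -(ε⁻¹ • (A₂₂.symm : X₂ →L[ℝ] X₂) ((y (ε, p)).2)) := by
      simp [hF]
    rw [hrw, norm_neg, norm_smul, Real.norm_of_nonneg (inv_nonneg.mpr hε0.le)]
    calc ε⁻¹ * ‖(A₂₂.symm : X₂ →L[ℝ] X₂) ((y (ε, p)).2)‖
        ≤ ε⁻¹ * (‖(A₂₂.symm : X₂ →L[ℝ] X₂)‖ * (ε * η₂)) := by
          apply mul_le_mul_of_nonneg_left _ (inv_nonneg.mpr hε0.le)
          exact le_trans (ContinuousLinearMap.le_opNorm _ _)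
            (mul_le_mul_of_nonneg_left yp2 (norm_nonneg _))
      _ = ‖(A₂₂.symm : X₂ →L[ℝ] X₂)‖ * η₂ := by field_simp
  have hmaps : ∀ x ∈ closedBall p R, F x ∈ ball p R := by
    intro x hx
    have hxp : ‖x - p‖ ≤ R := mem_closedBall_iff_norm.mp hx
    have hpc : p ∈ closedBall p R := mem_closedBall_self hR.le
    have h1 : ‖(F x).1 - p.1‖ < R := by
      have t1 : ‖(F x).1 - p.1‖ ≤ ‖(F x).1 - (F p).1‖ + ‖(F p).1 - p.1‖ := by
        calc ‖(F x).1 - p.1‖ = ‖((F x).1 - (F p).1) + ((F p).1 - p.1)‖ := by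
              rw [sub_add_sub_cancel]
          _ ≤ _ := norm_add_le _ _
      have t2 : ‖(F x).1 - (F p).1‖ ≤ k₁ * R :=
        le_trans (hF1 x hx p hpc) (mul_le_mul_of_nonneg_left hxp hk₁0)
      have t3 : ‖(A₁₁.symm : X₁ →L[ℝ] X₁)‖ * (ε₀ * η₁ + δ₁ * R) < R := by
        have h4 := (mul_lt_mul_iff_right₀ hn₁).mpr hm₁
        rwa [← mul_assoc, mul_inv_cancel₀ hn₁.ne', one_mul] at h4
      have : k₁ * R + ‖(A₁₁.symm : X₁ →L[ℝ] X₁)‖ * (ε₀ * η₁)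
          = ‖(A₁₁.symm : X₁ →L[ℝ] X₁)‖ * (ε₀ * η₁ + δ₁ * R) := by
        rw [hk₁def]; ring
      linarith
    have h2 : ‖(F x).2 - p.2‖ < R := by
      have t1 : ‖(F x).2 - p.2‖ ≤ ‖(F x).2 - (F p).2‖ + ‖(F p).2 - p.2‖ := by
        calc ‖(F x).2 - p.2‖ = ‖((F x).2 - (F p).2) + ((F p).2 - p.2)‖ := by
              rw [sub_add_sub_cancel]
          _ ≤ _ := norm_add_le _ _
      have t2 : ‖(F x).2 - (F p).2‖ ≤ k₂ * R :=
        le_trans (hF2 x hx p hpc) (mul_le_mul_of_nonneg_left hxp hk₂0)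
      have t3 : ‖(A₂₂.symm : X₂ →L[ℝ] X₂)‖ * (η₂ + δ₂ * R) < R := by
        have h4 := (mul_lt_mul_iff_right₀ hn₂).mpr hm₂
        rwa [← mul_assoc, mul_inv_cancel₀ hn₂.ne', one_mul] at h4
      have : k₂ * R + ‖(A₂₂.symm : X₂ →L[ℝ] X₂)‖ * η₂
          = ‖(A₂₂.symm : X₂ →L[ℝ] X₂)‖ * (η₂ + δ₂ * R) := by
        rw [hk₂def]; ring
      linarith
    rw [mem_ball, dist_eq_norm, Prod.norm_def]
    exact max_lt (by simpa using h1) (by simpa using h2)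
  -- fixed point
  obtain ⟨xs, hxsB, hfix⟩ : ∃ xs ∈ ball p R, F xs = xs := by
    haveI : Nonempty (closedBall p R) := ⟨⟨p, mem_closedBall_self hR.le⟩⟩
    haveI : CompleteSpace (closedBall p R) :=
      isClosed_closedBall.completeSpace_coe
    set F' : closedBall p R → closedBall p R :=
      fun a => ⟨F a, ball_subset_closedBall (hmaps a a.2)⟩ with hF'
    have hlip : LipschitzWith ⟨max k₁ k₂, le_trans hk₁0 (le_max_left _ _)⟩ F' := by
      apply LipschitzWith.of_dist_le_mul
      intro a b
      rw [Subtype.dist_eq, dist_eq_norm, Subtype.dist_eq, dist_eq_norm]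
      show ‖F ↑a - F ↑b‖ ≤ max k₁ k₂ * ‖(a : X₁ × X₂) - ↑b‖
      rw [Prod.norm_def]
      apply max_le
      · calc ‖(F ↑a - F ↑b).1‖ = ‖(F ↑a).1 - (F ↑b).1‖ := by rw [Prod.fst_sub]
          _ ≤ k₁ * ‖(a : X₁ × X₂) - ↑b‖ := hF1 a a.2 b b.2
          _ ≤ max k₁ k₂ * ‖(a : X₁ × X₂) - ↑b‖ :=
            mul_le_mul_of_nonneg_right (le_max_left _ _) (norm_nonneg _)
      · calc ‖(F ↑a - F ↑b).2‖ = ‖(F ↑a).2 - (F ↑b).2‖ := by rw [Prod.snd_sub]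
          _ ≤ k₂ * ‖(a : X₁ × X₂) - ↑b‖ := hF2 a a.2 b b.2
          _ ≤ max k₁ k₂ * ‖(a : X₁ × X₂) - ↑b‖ :=
            mul_le_mul_of_nonneg_right (le_max_right _ _) (norm_nonneg _)
    have hcontr : ContractingWith ⟨max k₁ k₂, le_trans hk₁0 (le_max_left _ _)⟩ F' := by
      constructor
      · have hlt : ((⟨max k₁ k₂, le_trans hk₁0 (le_max_left _ _)⟩ : NNReal) : ℝ)
            < ((1 : NNReal) : ℝ) := by
          rw [NNReal.coe_one]
          exact max_lt hk₁ hk₂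
        exact NNReal.coe_lt_coe.mp hlt
      · exact hlip
    have hfx := hcontr.fixedPoint_isFixedPt
    have hval : F ↑(ContractingWith.fixedPoint F' hcontr)
        = ↑(ContractingWith.fixedPoint F' hcontr) := congrArg Subtype.val hfx
    exact ⟨_, by rw [← hval]; exact hmaps _ (ContractingWith.fixedPoint F' hcontr).2, hval⟩
  have hxscB : xs ∈ closedBall p R := ball_subset_closedBall hxsB
  have hxsU : xs ∈ U := hpU hxscB
  have hy0 : y (ε, xs) = 0 := by
    have h1 : (F xs).1 = xs.1 := congrArg Prod.fst hfix
    have h2 : (F xs).2 = xs.2 := congrArg Prod.snd hfix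
    simp only [hF] at h1 h2
    have h1' : (A₁₁.symm : X₁ →L[ℝ] X₁) ((y (ε, xs)).1) = 0 := sub_eq_self.mp h1
    have hy1 : (y (ε, xs)).1 = 0 := by simpa using congrArg A₁₁ h1'
    have h2' : ε⁻¹ • (A₂₂.symm : X₂ →L[ℝ] X₂) ((y (ε, xs)).2) = 0 := sub_eq_self.mp h2
    have hy2' : (y (ε, xs)).2 = 0 := by
      have hs : (A₂₂.symm : X₂ →L[ℝ] X₂) ((y (ε, xs)).2) = 0 := by
        rcases smul_eq_zero.mp h2' with h | h
        · exact absurd h (inv_ne_zero hε0.ne')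
        · exact h
      simpa using congrArg A₂₂ hs
    rw [Prod.ext_iff]
    exact ⟨by simpa using hy1, by simpa using hy2'⟩
  -- geometry
  set vs := (wcu (ε, cu (ε, xs, zs))).2.2.1 with hvsdef
  have hvsV : vs ∈ V := hvV ε hεI xs hxsU
  have heq : wcu (ε, cu (ε, xs, zs)) = wcs (ε, cs (ε, xs, vs, zs)) := by
    have ha := hcux ε hεI xs hxsU zs hzs
    have hb := hcsx ε hεI xs hxsU vs hvsV zs hzs
    have ha1 : (wcu (ε, cu (ε, xs, zs))).1 = xs := congrArg Prod.fst ha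
    have ha2 : (wcu (ε, cu (ε, xs, zs))).2.2.2 = zs := congrArg Prod.snd ha
    have hb1 : (wcs (ε, cs (ε, xs, vs, zs))).1 = xs := congrArg Prod.fst hb
    have hb2 : (wcs (ε, cs (ε, xs, vs, zs))).2.2.1 = vs :=
      congrArg (fun r => r.2.1) hb
    have hb3 : (wcs (ε, cs (ε, xs, vs, zs))).2.2.2 = zs :=
      congrArg (fun r => r.2.2) hb
    have hy' := hydef ε xs
    rw [hy0] at hy'
    have h21 : (wcu (ε, cu (ε, xs, zs))).2.1 = (wcs (ε, cs (ε, xs, vs, zs))).2.1 := by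
      have h := hy'.symm
      rwa [sub_eq_zero] at h
    refine Prod.ext_iff.mpr ⟨ha1.trans hb1.symm, ?_⟩
    refine Prod.ext_iff.mpr ⟨h21, ?_⟩
    refine Prod.ext_iff.mpr ⟨hb2.symm, ha2.trans hb3.symm⟩
  -- ### Transversality
  have hxzUK : (xs, zs) ∈ U ×ˢ K := Set.mk_mem_prod hxsU hzs
  have hGcuD : DifferentiableAt ℝ
      (fun w : (X₁ × X₂) × (Fin c → ℝ) => wcu (ε, cu (ε, w.1, w.2))) (xs, zs) := by
    have hcuD : DifferentiableAt ℝ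
        (fun w : (X₁ × X₂) × (Fin c → ℝ) => cu (ε, w)) (xs, zs) :=
      sliceDiffAt hcu (hU.prod hK) hεI hxzUK
    have hwD : DifferentiableAt ℝ (fun a => wcu (ε, a)) (cu (ε, (xs, zs))) :=
      sliceDiffAt hwcu isOpen_univ hεI (mem_univ _)
    exact DifferentiableAt.comp (g := fun a => wcu (ε, a)) (xs, zs) hwD hcuD
  have hGcsD : DifferentiableAt ℝ
      (fun w : (X₁ × X₂) × (Fin (s - u) → ℝ) × (Fin c → ℝ) =>
        wcs (ε, cs (ε, w.1, w.2.1, w.2.2))) (xs, vs, zs) := by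
    have hcsD : DifferentiableAt ℝ
        (fun w : (X₁ × X₂) × (Fin (s - u) → ℝ) × (Fin c → ℝ) => cs (ε, w))
        (xs, vs, zs) :=
      sliceDiffAt hcs (hU.prod (hV.prod hK)) hεI ⟨hxsU, hvsV, hzs⟩
    have hwD : DifferentiableAt ℝ (fun a => wcs (ε, a)) (cs (ε, (xs, vs, zs))) :=
      sliceDiffAt hwcs isOpen_univ hεI (mem_univ _)
    exact DifferentiableAt.comp (g := fun a => wcs (ε, a)) (xs, vs, zs) hwD hcsD
  set Lcu := fderiv ℝ (fun w : (X₁ × X₂) × (Fin c → ℝ) =>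
      wcu (ε, cu (ε, w.1, w.2))) (xs, zs) with hLcudef
  set Mcs := fderiv ℝ (fun w : (X₁ × X₂) × (Fin (s - u) → ℝ) × (Fin c → ℝ) =>
      wcs (ε, cs (ε, w.1, w.2.1, w.2.2))) (xs, vs, zs) with hMcsdef
  have hLcu : HasFDerivAt (fun w : (X₁ × X₂) × (Fin c → ℝ) =>
      wcu (ε, cu (ε, w.1, w.2))) Lcu (xs, zs) := hGcuD.hasFDerivAt
  have hMcs : HasFDerivAt (fun w : (X₁ × X₂) × (Fin (s - u) → ℝ) × (Fin c → ℝ) =>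
      wcs (ε, cs (ε, w.1, w.2.1, w.2.2))) Mcs (xs, vs, zs) := hGcsD.hasFDerivAt
  -- projection identities
  have hLid : ∀ m : (X₁ × X₂) × (Fin c → ℝ), ((Lcu m).1, (Lcu m).2.2.2) = m := by
    set π : ((X₁ × X₂) × (X₁ × X₂) × (Fin (s - u) → ℝ) × (Fin c → ℝ)) →L[ℝ]
        ((X₁ × X₂) × (Fin c → ℝ)) :=
      (ContinuousLinearMap.fst ℝ (X₁ × X₂)
          ((X₁ × X₂) × (Fin (s - u) → ℝ) × (Fin c → ℝ))).prod
        ((ContinuousLinearMap.snd ℝ (Fin (s - u) → ℝ) (Fin c → ℝ)).comp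
          ((ContinuousLinearMap.snd ℝ (X₁ × X₂) ((Fin (s - u) → ℝ) × (Fin c → ℝ))).comp
            (ContinuousLinearMap.snd ℝ (X₁ × X₂)
              ((X₁ × X₂) × (Fin (s - u) → ℝ) × (Fin c → ℝ))))) with hπ
    have h1 : HasFDerivAt (fun w : (X₁ × X₂) × (Fin c → ℝ) =>
        π (wcu (ε, cu (ε, w.1, w.2)))) (π.comp Lcu) (xs, zs) :=
      π.hasFDerivAt.comp (xs, zs) hLcu
    have h2 : HasFDerivAt (id : ((X₁ × X₂) × (Fin c → ℝ)) → _)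
        (π.comp Lcu) (xs, zs) := by
      apply h1.congr_of_eventuallyEq
      filter_upwards [(hU.prod hK).mem_nhds hxzUK] with w hw
      have h := hcux ε hεI w.1 hw.1 w.2 hw.2
      simp only [hπ, id_eq, ContinuousLinearMap.prod_apply,
        ContinuousLinearMap.coe_fst', ContinuousLinearMap.coe_comp',
        ContinuousLinearMap.coe_snd', Function.comp_apply]
      exact h.symm
    have h3 : π.comp Lcu = ContinuousLinearMap.id ℝ _ :=
      h2.unique (hasFDerivAt_id _)
    intro m
    have h4 := DFunLike.congr_fun h3 m
    simpa [hπ] using h4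
  have hMid : ∀ m : (X₁ × X₂) × (Fin (s - u) → ℝ) × (Fin c → ℝ),
      ((Mcs m).1, (Mcs m).2.2) = m := by
    set π : ((X₁ × X₂) × (X₁ × X₂) × (Fin (s - u) → ℝ) × (Fin c → ℝ)) →L[ℝ]
        ((X₁ × X₂) × (Fin (s - u) → ℝ) × (Fin c → ℝ)) :=
      (ContinuousLinearMap.fst ℝ (X₁ × X₂)
          ((X₁ × X₂) × (Fin (s - u) → ℝ) × (Fin c → ℝ))).prod
        ((ContinuousLinearMap.snd ℝ (X₁ × X₂) ((Fin (s - u) → ℝ) × (Fin c → ℝ))).comp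
          (ContinuousLinearMap.snd ℝ (X₁ × X₂)
            ((X₁ × X₂) × (Fin (s - u) → ℝ) × (Fin c → ℝ)))) with hπ
    have h1 : HasFDerivAt (fun w : (X₁ × X₂) × (Fin (s - u) → ℝ) × (Fin c → ℝ) =>
        π (wcs (ε, cs (ε, w.1, w.2.1, w.2.2)))) (π.comp Mcs) (xs, vs, zs) :=
      π.hasFDerivAt.comp (xs, vs, zs) hMcs
    have h2 : HasFDerivAt (id : ((X₁ × X₂) × (Fin (s - u) → ℝ) × (Fin c → ℝ)) → _)
        (π.comp Mcs) (xs, vs, zs) := by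
      apply h1.congr_of_eventuallyEq
      filter_upwards [(hU.prod (hV.prod hK)).mem_nhds ⟨hxsU, hvsV, hzs⟩] with w hw
      have h := hcsx ε hεI w.1 hw.1 w.2.1 hw.2.1 w.2.2 hw.2.2
      simp only [hπ, id_eq, ContinuousLinearMap.prod_apply,
        ContinuousLinearMap.coe_fst', ContinuousLinearMap.coe_comp',
        ContinuousLinearMap.coe_snd', Function.comp_apply]
      have h' : ((wcs (ε, cs (ε, w.1, w.2.1, w.2.2))).1,
          (wcs (ε, cs (ε, w.1, w.2.1, w.2.2))).2.2) = (w.1, w.2.1, w.2.2) := h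
      simpa using h'.symm
    have h3 : π.comp Mcs = ContinuousLinearMap.id ℝ _ :=
      h2.unique (hasFDerivAt_id _)
    intro m
    have h4 := DFunLike.congr_fun h3 m
    simpa [hπ] using h4
  have hLfst : ∀ m, (Lcu m).1 = m.1 := fun m => (Prod.ext_iff.mp (hLid m)).1
  have hLz : ∀ m, (Lcu m).2.2.2 = m.2 := fun m => (Prod.ext_iff.mp (hLid m)).2
  have hMfst : ∀ m, (Mcs m).1 = m.1 := fun m => (Prod.ext_iff.mp (hMid m)).1
  have hMvz : ∀ m, (Mcs m).2.2 = m.2 := fun m => (Prod.ext_iff.mp (hMid m)).2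
  have hMv : ∀ m : (X₁ × X₂) × (Fin (s - u) → ℝ) × (Fin c → ℝ),
      (Mcs m).2.2.1 = m.2.1 := fun m => congrArg Prod.fst (hMvz m)
  have hMz : ∀ m : (X₁ × X₂) × (Fin (s - u) → ℝ) × (Fin c → ℝ),
      (Mcs m).2.2.2 = m.2.2 := fun m => congrArg Prod.snd (hMvz m)
  -- chain rule for `y (ε, ·)` at `xs`
  set Py : ((X₁ × X₂) × (X₁ × X₂) × (Fin (s - u) → ℝ) × (Fin c → ℝ)) →L[ℝ] (X₁ × X₂) :=
    (ContinuousLinearMap.fst ℝ (X₁ × X₂) ((Fin (s - u) → ℝ) × (Fin c → ℝ))).comp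
      (ContinuousLinearMap.snd ℝ (X₁ × X₂)
        ((X₁ × X₂) × (Fin (s - u) → ℝ) × (Fin c → ℝ))) with hPy
  set Pv : ((X₁ × X₂) × (X₁ × X₂) × (Fin (s - u) → ℝ) × (Fin c → ℝ)) →L[ℝ]
      (Fin (s - u) → ℝ) :=
    (ContinuousLinearMap.fst ℝ (Fin (s - u) → ℝ) (Fin c → ℝ)).comp
      ((ContinuousLinearMap.snd ℝ (X₁ × X₂) ((Fin (s - u) → ℝ) × (Fin c → ℝ))).comp
        (ContinuousLinearMap.snd ℝ (X₁ × X₂)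
          ((X₁ × X₂) × (Fin (s - u) → ℝ) × (Fin c → ℝ)))) with hPv
  set ι : (X₁ × X₂) →L[ℝ] (X₁ × X₂) × (Fin c → ℝ) :=
    (ContinuousLinearMap.id ℝ (X₁ × X₂)).prod (0 : (X₁ × X₂) →L[ℝ] (Fin c → ℝ)) with hι
  have hιd : HasFDerivAt (fun x : X₁ × X₂ => (x, zs)) ι xs :=
    HasFDerivAt.prodMk (hasFDerivAt_id xs) (hasFDerivAt_const zs xs)
  have h1 : HasFDerivAt (fun x : X₁ × X₂ => wcu (ε, cu (ε, x, zs)))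
      (Lcu.comp ι) xs := HasFDerivAt.comp (g := fun w : (X₁ × X₂) × (Fin c → ℝ) => wcu (ε, cu (ε, w.1, w.2))) xs hLcu hιd
  have h1y : HasFDerivAt (fun x : X₁ × X₂ => (wcu (ε, cu (ε, x, zs))).2.1)
      (Py.comp (Lcu.comp ι)) xs := Py.hasFDerivAt.comp xs h1
  have h1v : HasFDerivAt (fun x : X₁ × X₂ => (wcu (ε, cu (ε, x, zs))).2.2.1)
      (Pv.comp (Lcu.comp ι)) xs := Pv.hasFDerivAt.comp xs h1
  set κ : (X₁ × X₂) →L[ℝ] (X₁ × X₂) × (Fin (s - u) → ℝ) × (Fin c → ℝ) :=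
    (ContinuousLinearMap.id ℝ (X₁ × X₂)).prod ((Pv.comp (Lcu.comp ι)).prod
      (0 : (X₁ × X₂) →L[ℝ] (Fin c → ℝ))) with hκ
  have hκd : HasFDerivAt
      (fun x : X₁ × X₂ => (x, ((wcu (ε, cu (ε, x, zs))).2.2.1, zs))) κ xs :=
    HasFDerivAt.prodMk (hasFDerivAt_id xs) (HasFDerivAt.prodMk h1v (hasFDerivAt_const zs xs))
  have hMcs2 : HasFDerivAt (fun w : (X₁ × X₂) × (Fin (s - u) → ℝ) × (Fin c → ℝ) =>
      wcs (ε, cs (ε, w.1, w.2.1, w.2.2))) Mcs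
      (xs, (wcu (ε, cu (ε, xs, zs))).2.2.1, zs) := by
    rw [← hvsdef]; exact hMcs
  have h2 : HasFDerivAt (fun x : X₁ × X₂ =>
      wcs (ε, cs (ε, x, (wcu (ε, cu (ε, x, zs))).2.2.1, zs))) (Mcs.comp κ) xs :=
    HasFDerivAt.comp (g := fun w : (X₁ × X₂) × (Fin (s - u) → ℝ) × (Fin c → ℝ) =>
      wcs (ε, cs (ε, w.1, w.2.1, w.2.2))) xs hMcs2 hκd
  have h2y : HasFDerivAt (fun x : X₁ × X₂ =>
      (wcs (ε, cs (ε, x, (wcu (ε, cu (ε, x, zs))).2.2.1, zs))).2.1)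
      (Py.comp (Mcs.comp κ)) xs := Py.hasFDerivAt.comp xs h2
  have hyεfd : HasFDerivAt (fun x : X₁ × X₂ => y (ε, x))
      (Py.comp (Lcu.comp ι) - Py.comp (Mcs.comp κ)) xs := by
    have hfe : (fun x : X₁ × X₂ => y (ε, x))
        = fun x : X₁ × X₂ => (wcu (ε, cu (ε, x, zs))).2.1
          - (wcs (ε, cs (ε, x, (wcu (ε, cu (ε, x, zs))).2.2.1, zs))).2.1 :=
      funext fun x => hydef ε x
    rw [hfe]
    exact h1y.sub h2y
  set C : (X₁ × X₂) →L[ℝ] (X₁ × X₂) :=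
    Py.comp (Lcu.comp ι) - Py.comp (Mcs.comp κ) with hCdef
  have hC1 : fderiv ℝ (fun x' => (y (ε, x')).1) xs
      = (ContinuousLinearMap.fst ℝ X₁ X₂).comp C := (hyεfd.fst).fderiv
  have hC2 : fderiv ℝ (fun x' => (y (ε, x')).2) xs
      = (ContinuousLinearMap.snd ℝ X₁ X₂).comp C := (hyεfd.snd).fderiv
  -- `C` is bijective
  have hCker : ∀ ξ : X₁ × X₂, C ξ = 0 → ξ = 0 := by
    intro ξ hξ
    have hb1 := hδ₁ ε hεI xs hxscB
    have hb2 := D2est ε hεI xs hxscB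
    have e1 : (fderiv ℝ (fun x' => (y (ε, x')).1) xs
        - (A₁₁ : X₁ →L[ℝ] X₁).comp (ContinuousLinearMap.fst ℝ X₁ X₂)) ξ
        = -(A₁₁ ξ.1) := by
      rw [ContinuousLinearMap.sub_apply, hC1]
      simp [hξ]
    have hball1 : ‖A₁₁ ξ.1‖ ≤ δ₁ * ‖ξ‖ := by
      calc ‖A₁₁ ξ.1‖
          = ‖(fderiv ℝ (fun x' => (y (ε, x')).1) xs
            - (A₁₁ : X₁ →L[ℝ] X₁).comp (ContinuousLinearMap.fst ℝ X₁ X₂)) ξ‖ := by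
            rw [e1, norm_neg]
        _ ≤ ‖fderiv ℝ (fun x' => (y (ε, x')).1) xs
            - (A₁₁ : X₁ →L[ℝ] X₁).comp (ContinuousLinearMap.fst ℝ X₁ X₂)‖ * ‖ξ‖ :=
            ContinuousLinearMap.le_opNorm _ _
        _ ≤ δ₁ * ‖ξ‖ := mul_le_mul_of_nonneg_right hb1 (norm_nonneg _)
    have h1 : ‖ξ.1‖ ≤ k₁ * ‖ξ‖ := by
      calc ‖ξ.1‖ = ‖(A₁₁.symm : X₁ →L[ℝ] X₁) (A₁₁ ξ.1)‖ := by simp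
        _ ≤ ‖(A₁₁.symm : X₁ →L[ℝ] X₁)‖ * ‖A₁₁ ξ.1‖ := ContinuousLinearMap.le_opNorm _ _
        _ ≤ ‖(A₁₁.symm : X₁ →L[ℝ] X₁)‖ * (δ₁ * ‖ξ‖) :=
            mul_le_mul_of_nonneg_left hball1 (norm_nonneg _)
        _ = k₁ * ‖ξ‖ := by rw [hk₁def]; ring
    have e2 : (fderiv ℝ (fun x' => (y (ε, x')).2) xs
        - ε • ((A₂₂ : X₂ →L[ℝ] X₂).comp (ContinuousLinearMap.snd ℝ X₁ X₂))) ξ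
        = -(ε • A₂₂ ξ.2) := by
      rw [ContinuousLinearMap.sub_apply, hC2]
      simp [hξ]
    have hball2 : ‖ε • A₂₂ ξ.2‖ ≤ (δ₂ * ε) * ‖ξ‖ := by
      calc ‖ε • A₂₂ ξ.2‖
          = ‖(fderiv ℝ (fun x' => (y (ε, x')).2) xs
            - ε • ((A₂₂ : X₂ →L[ℝ] X₂).comp (ContinuousLinearMap.snd ℝ X₁ X₂))) ξ‖ := by
            rw [e2, norm_neg]
        _ ≤ ‖fderiv ℝ (fun x' => (y (ε, x')).2) xs
            - ε • ((A₂₂ : X₂ →L[ℝ] X₂).comp (ContinuousLinearMap.snd ℝ X₁ X₂))‖ * ‖ξ‖ :=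
            ContinuousLinearMap.le_opNorm _ _
        _ ≤ (δ₂ * ε) * ‖ξ‖ := mul_le_mul_of_nonneg_right hb2 (norm_nonneg _)
    have hA2 : ‖A₂₂ ξ.2‖ ≤ δ₂ * ‖ξ‖ := by
      rw [norm_smul, Real.norm_of_nonneg hε0.le, mul_comm δ₂ ε, mul_assoc] at hball2
      exact le_of_mul_le_mul_left hball2 hε0
    have h2' : ‖ξ.2‖ ≤ k₂ * ‖ξ‖ := by
      calc ‖ξ.2‖ = ‖(A₂₂.symm : X₂ →L[ℝ] X₂) (A₂₂ ξ.2)‖ := by simp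
        _ ≤ ‖(A₂₂.symm : X₂ →L[ℝ] X₂)‖ * ‖A₂₂ ξ.2‖ := ContinuousLinearMap.le_opNorm _ _
        _ ≤ ‖(A₂₂.symm : X₂ →L[ℝ] X₂)‖ * (δ₂ * ‖ξ‖) :=
            mul_le_mul_of_nonneg_left hA2 (norm_nonneg _)
        _ = k₂ * ‖ξ‖ := by rw [hk₂def]; ring
    have hnorm : ‖ξ‖ ≤ max k₁ k₂ * ‖ξ‖ := by
      rw [Prod.norm_def]
      apply max_le
      · exact le_trans h1 (mul_le_mul_of_nonneg_right (le_max_left _ _) (norm_nonneg _))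
      · exact le_trans h2' (mul_le_mul_of_nonneg_right (le_max_right _ _) (norm_nonneg _))
    have hz : ‖ξ‖ = 0 := by
      by_contra h
      have hpos : 0 < ‖ξ‖ := (norm_nonneg ξ).lt_of_ne (Ne.symm h)
      have : max k₁ k₂ * ‖ξ‖ < 1 * ‖ξ‖ :=
        mul_lt_mul_of_pos_right (max_lt hk₁ hk₂) hpos
      rw [one_mul] at this
      linarith
    exact norm_eq_zero.mp hz
  have hCinj : Function.Injective C := by
    intro a b hab
    have h0 : C (a - b) = 0 := by rw [map_sub, hab, sub_self]
    exact sub_eq_zero.mp (hCker _ h0)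
  have hCsurj : Function.Surjective C :=
    (LinearMap.injective_iff_surjective
      (f := ((C : (X₁ × X₂) →L[ℝ] (X₁ × X₂)) : (X₁ × X₂) →ₗ[ℝ] (X₁ × X₂)))).mp hCinj
  -- assemble
  refine ⟨xs, hxsB, vs, rfl, heq, ?_⟩
  intro q
  obtain ⟨a, b, vv, d⟩ := q
  rw [← hLcudef, ← hMcsdef]
  obtain ⟨ξ, hξ⟩ := hCsurj (b - (Lcu (0, d)).2.1
      - (Mcs (a, vv - (Lcu (0, d)).2.2.1, 0)).2.1)
  have hCξ : (Lcu (ξ, 0)).2.1 - (Mcs (ξ, (Lcu (ξ, 0)).2.2.1, 0)).2.1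
      = b - (Lcu (0, d)).2.1 - (Mcs (a, vv - (Lcu (0, d)).2.2.1, 0)).2.1 := by
    rw [hCdef] at hξ
    simpa [hPy, hPv, hι, hκ] using hξ
  refine ⟨(ξ, d), (a - ξ, vv - (Lcu (ξ, d)).2.2.1, 0), ?_⟩
  have hsplit : Lcu (ξ, d) = Lcu (ξ, 0) + Lcu (0, d) := by
    rw [← map_add]
    congr 1
    simp
  have hMsplit : Mcs (a - ξ, vv - (Lcu (ξ, d)).2.2.1, 0)
      = Mcs (a, vv - (Lcu (0, d)).2.2.1, 0) - Mcs (ξ, (Lcu (ξ, 0)).2.2.1, 0) := by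
    rw [← map_sub]
    congr 1
    rw [hsplit]
    simp [Prod.ext_iff, Prod.fst_add, Prod.snd_add]
    abel
  have hMξ : (Mcs (ξ, (Lcu (ξ, 0)).2.2.1, 0)).2.1
      = (Lcu (ξ, 0)).2.1 - (b - (Lcu (0, d)).2.1
        - (Mcs (a, vv - (Lcu (0, d)).2.2.1, 0)).2.1) := by
    rw [← hCξ]; abel
  refine Prod.ext_iff.mpr ⟨?_, Prod.ext_iff.mpr ⟨?_, Prod.ext_iff.mpr ⟨?_, ?_⟩⟩⟩
  · -- x component
    show (Lcu (ξ, d) + Mcs (a - ξ, vv - (Lcu (ξ, d)).2.2.1, 0)).1 = a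
    rw [Prod.fst_add, hLfst, hMfst]
    show ξ + (a - ξ) = a
    abel
  · -- y component
    show (Lcu (ξ, d) + Mcs (a - ξ, vv - (Lcu (ξ, d)).2.2.1, 0)).2.1 = b
    rw [Prod.snd_add, Prod.fst_add, hMsplit, hsplit]
    simp only [Prod.snd_add, Prod.fst_add, Prod.snd_sub, Prod.fst_sub]
    rw [hMξ]
    abel
  · -- v component
    show (Lcu (ξ, d) + Mcs (a - ξ, vv - (Lcu (ξ, d)).2.2.1, 0)).2.2.1 = vv
    rw [Prod.snd_add, Prod.snd_add, Prod.fst_add, hMv]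
    show (Lcu (ξ, d)).2.2.1 + (vv - (Lcu (ξ, d)).2.2.1) = vv
    abel
  · -- z component
    show (Lcu (ξ, d) + Mcs (a - ξ, vv - (Lcu (ξ, d)).2.2.1, 0)).2.2.2 = d
    rw [Prod.snd_add, Prod.snd_add, Prod.snd_add, hLz, hMz]
    show d + (0 : Fin c → ℝ) = d
    abel
end
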